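/- arXiv:2505.22468 — 8 statements merged into one kernel-verified Lean document; each statement's English description precedes it below -/
import Mathlib

section
/- Under Assumption 1, the limit ρ = lim_{k→∞} [S^k d(·,x̄)](x̄)/k exists, is independent of the base point x̄ ∈ X, and satisfies ρ = max{λ ∈ ℝ : ∃ v ∈ Lip₁(X) with λ + v ≤ Sv}; in particular this maximum is attained. -/
/-!
Because every one-step move set `{T_{ab}(x)}` is compact, all the infima and suprema defining `S`
are finite on continuous functions, and `S` is then monotone, commutes with adding constants and
maps `Lip₁` to itself. Monotonicity and homogeneity make `s_k` subadditive, which gives `ρ` by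
Fekete's lemma, and moving the base point from `x` to `y` changes `s_k` by at most
`d(x,y) + d(y,x)`. If `λ + v ≤ S v` with `v ∈ Lip₁`, then
`kλ + v(x̄) ≤ S^k v(x̄) ≤ s_k + v(x̄)`, so `λ ≤ ρ`.

For the converse, normalise the iterates `u_k = S^k d(·, x̄)` by
`c_k = kρ + max_{m ≤ k} (s_m - mρ)`. Then `c_{k+1} - c_k ≥ ρ`, so `f_k = u_k - c_k` satisfies
`f_{k+1} + ρ ≤ S f_k`; moreover `f_k(x̄) ≤ 0`, and `f_k(x̄)` is frequently bounded below
(at the record times of `s_m - mρ` if these are unbounded). The pointwise `limsup` `v` of the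
`f_k` is then in `Lip₁`, and `ρ + v ≤ S v` because, by compactness of `ℬ` and continuity of
`b ↦ T_{ab}(x)`, the `limsup` may be moved inside `sup_b`.
-/

open Set Filter

/-- The Shapley operator of the escape rate game:
`S v (x) = inf_{a ∈ 𝒜} sup_{b ∈ ℬ} v (T_{ab}(x))`. -/
noncomputable def shapley {X : Type*} {E : Type*} (A B : Set E)
    (T : E → E → X → X) : (X → ℝ) → X → ℝ :=
  fun v x => ⨅ a : A, ⨆ b : B, v (T a b x)

open Topology

section LipOne

variable {X : Type*} {d : X → X → ℝ}

variable (d) in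
def lipOne : Set (X → ℝ) := {v | ∀ x y, v x - v y ≤ d x y}

lemma distTo_mem_lipOne (htri : ∀ x y z, d x z ≤ d x y + d y z) (x₀ : X) :
    (fun y => d y x₀) ∈ lipOne d :=
  fun x y => by linarith [htri x y x₀]

lemma lipschitzWith_one_of_mem_lipOne [PseudoMetricSpace X] (hd : ∀ x y, d x y ≤ dist x y)
    {v : X → ℝ} (hv : v ∈ lipOne d) : LipschitzWith 1 v :=
  LipschitzWith.of_le_add fun x y => by linarith [hv x y, hd x y]

lemma continuous_of_mem_lipOne [PseudoMetricSpace X] (hd : ∀ x y, d x y ≤ dist x y)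
    {v : X → ℝ} (hv : v ∈ lipOne d) : Continuous v :=
  (lipschitzWith_one_of_mem_lipOne hd hv).continuous

lemma limsup_mem_lipOne {f : ℕ → X → ℝ} (hf : ∀ k, f k ∈ lipOne d)
    (hbdd : ∀ z, IsBoundedUnder (· ≤ ·) atTop (f · z))
    (hcobdd : ∀ z, IsCoboundedUnder (· ≤ ·) atTop (f · z)) :
    (fun z => limsup (f · z) atTop) ∈ lipOne d := by
  intro x y
  rw [sub_le_iff_le_add]
  refine le_of_forall_gt_imp_ge_of_dense fun γ hγ => limsup_le_of_le (hcobdd x) ?_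
  filter_upwards [eventually_lt_of_limsup_lt
    (lt_sub_iff_add_lt'.2 hγ : limsup (f · y) atTop < γ - d x y) (hbdd y)] with k hk
  linarith [hf k x y]

end LipOne

lemma IsCompact.eventually_forall_lt {X ι : Type*} [PseudoMetricSpace X] {K : Set X}
    (hK : IsCompact K) {l : Filter ι} {f : ι → X → ℝ} (hf : ∀ i, LipschitzWith 1 (f i))
    {γ' γ : ℝ} (hγ : γ' < γ) (h : ∀ y ∈ K, ∀ᶠ i in l, f i y < γ') :
    ∀ᶠ i in l, ∀ y ∈ K, f i y < γ := by
  refine hK.induction_on (p := fun s => ∀ᶠ i in l, ∀ y ∈ s, f i y < γ) (by simp)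
    (fun s t hst ht => ht.mono fun i hi y hy => hi y (hst hy))
    (fun s t hs ht => (hs.and ht).mono fun i hi y hy => hy.elim (hi.1 y) (hi.2 y))
    fun y hy => ⟨Metric.ball y (γ - γ'),
      mem_nhdsWithin_of_mem_nhds (Metric.ball_mem_nhds y (sub_pos.2 hγ)),
      (h y hy).mono fun i hi z hz => ?_⟩
  have := (hf i).le_add_mul z y
  rw [Metric.mem_ball] at hz
  push_cast at this
  linarith

lemma exists_frequently_le_sub_partialSups {g : ℕ → ℝ} (hg : ∀ k, 0 ≤ g k) :
    ∃ σ, ∃ᶠ k in atTop, σ ≤ g k - partialSups g k := by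
  by_cases hb : BddAbove (range g)
  · obtain ⟨G, hG⟩ := hb
    refine ⟨-G, .of_forall fun k => ?_⟩
    linarith [partialSups_le g k G fun j _ => hG ⟨j, rfl⟩, hg k]
  · refine ⟨0, frequently_atTop.2 fun N => ?_⟩
    obtain ⟨_, ⟨k, rfl⟩, hk⟩ := not_bddAbove_iff.1 hb (partialSups g N)
    -- `m` is a record time: the running maximum up to `k` is attained there
    obtain ⟨m, hmk, hm⟩ := Finset.exists_mem_eq_sup' (Finset.nonempty_Iic (a := k)) g
    rw [Finset.mem_Iic] at hmk
    rw [← partialSups_apply] at hm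
    have hNm : N ≤ m := by
      by_contra! hmN
      linarith [le_partialSups_of_le g hmN.le, le_partialSups g k]
    refine ⟨m, hNm, ?_⟩
    linarith [(partialSups g).monotone hmk]

lemma Subadditive.natCast_mul_lim_le {u : ℕ → ℝ} (h : Subadditive u)
    (hbdd : BddBelow (range fun n => u n / n)) (k : ℕ) : k * h.lim ≤ u k := by
  rcases k.eq_zero_or_pos with rfl | hk
  · simpa using (by linarith [h 0 0] : 0 ≤ u 0)
  · have := h.lim_le_div hbdd hk.ne'
    rwa [le_div_iff₀ (by exact_mod_cast hk), mul_comm] at this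

lemma le_of_natCast_mul_le_of_tendsto {u : ℕ → ℝ} {l ρ : ℝ}
    (hu : Tendsto (fun k => u k / k) atTop (𝓝 ρ)) (hl : ∀ k : ℕ, k * l ≤ u k) : l ≤ ρ :=
  ge_of_tendsto hu <| eventually_atTop.2 ⟨1, fun k hk => by
    rw [le_div_iff₀ (by exact_mod_cast hk)]
    linarith [hl k]⟩

lemma Filter.Tendsto.div_natCast_of_abs_sub_le {u w : ℕ → ℝ} {C ρ : ℝ}
    (hu : Tendsto (fun k => u k / k) atTop (𝓝 ρ)) (h : ∀ k, |w k - u k| ≤ C) :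
    Tendsto (fun k => w k / k) atTop (𝓝 ρ) := by
  have hdiff : Tendsto (fun k : ℕ => (w k - u k) / k) atTop (𝓝 0) :=
    squeeze_zero_norm (fun k => by
      rw [norm_div, Real.norm_eq_abs, RCLike.norm_natCast]
      exact div_le_div_of_nonneg_right (h k) k.cast_nonneg)
      (tendsto_const_div_atTop_nhds_zero_nat C)
  simpa [← add_div] using hu.add hdiff

section ShapleyBasic

variable {X E : Type*} [TopologicalSpace X] {A B : Set E} {T : E → E → X → X}
  {v w : X → ℝ} {x : X}

lemma bddAbove_range_apply_move (hO : IsCompact (image2 (T · · x) A B)) (hv : Continuous v)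
    (a : A) : BddAbove (range fun b : B => v (T a b x)) :=
  (hO.image hv).bddAbove.mono <|
    range_subset_iff.2 fun b => mem_image_of_mem v (mem_image2_of_mem (f := (T · · x)) a.2 b.2)

lemma bddBelow_range_iSup_apply_move [Nonempty B] (hO : IsCompact (image2 (T · · x) A B))
    (hv : Continuous v) : BddBelow (range fun a : A => ⨆ b : B, v (T a b x)) := by
  obtain ⟨m, hm⟩ := (hO.image hv).bddBelow
  obtain ⟨b⟩ := ‹Nonempty B›
  refine ⟨m, forall_mem_range.2 fun a => ?_⟩
  exact (hm (mem_image_of_mem v (mem_image2_of_mem (f := (T · · x)) a.2 b.2))).trans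
    (le_ciSup (bddAbove_range_apply_move hO hv a) b)

lemma shapley_le_iSup [Nonempty B] (hO : IsCompact (image2 (T · · x) A B)) (hv : Continuous v)
    (a : A) : shapley A B T v x ≤ ⨆ b : B, v (T a b x) :=
  ciInf_le (bddBelow_range_iSup_apply_move hO hv) a

lemma shapley_mono [Nonempty B] (hO : IsCompact (image2 (T · · x) A B))
    (hv : Continuous v) (hw : Continuous w) (hvw : v ≤ w) :
    shapley A B T v x ≤ shapley A B T w x :=
  ciInf_mono (bddBelow_range_iSup_apply_move hO hv) fun a =>
    ciSup_mono (bddAbove_range_apply_move hO hw a) fun _ => hvw _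

lemma shapley_add_const [Nonempty A] [Nonempty B] (hO : IsCompact (image2 (T · · x) A B))
    (hv : Continuous v) (c : ℝ) :
    shapley A B T (fun y => v y + c) x = shapley A B T v x + c := by
  refine (iInf_congr fun a => ?_).trans
    ((OrderIso.addRight c).map_ciInf (bddBelow_range_iSup_apply_move hO hv)).symm
  exact ((OrderIso.addRight c).map_ciSup (bddAbove_range_apply_move hO hv a)).symm

end ShapleyBasic

section ShapleyLip

variable {X E : Type*} [PseudoMetricSpace X] {A B : Set E} {T : E → E → X → X}
  {d : X → X → ℝ} {v w : X → ℝ}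

lemma shapley_mem_lipOne [Nonempty A] [Nonempty B] (hd : ∀ x y, d x y ≤ dist x y)
    (hO : ∀ x, IsCompact (image2 (T · · x) A B))
    (hT : ∀ a ∈ A, ∀ b ∈ B, ∀ x y, d (T a b x) (T a b y) ≤ d x y) (hv : v ∈ lipOne d) :
    shapley A B T v ∈ lipOne d := by
  intro x y
  have hvc := continuous_of_mem_lipOne hd hv
  have hsup : ∀ a : A, (⨆ b : B, v (T a b x)) ≤ (⨆ b : B, v (T a b y)) + d x y :=
    fun a => ciSup_le fun b => by
      linarith [hv (T a b x) (T a b y), hT a a.2 b b.2 x y,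
        le_ciSup (bddAbove_range_apply_move (hO y) hvc a) b]
  rw [sub_le_iff_le_add']
  calc shapley A B T v x ≤ ⨅ a : A, ((⨆ b : B, v (T a b y)) + d x y) :=
        ciInf_mono (bddBelow_range_iSup_apply_move (hO x) hvc) hsup
    _ = shapley A B T v y + d x y :=
        ((OrderIso.addRight _).map_ciInf (bddBelow_range_iSup_apply_move (hO y) hvc)).symm

lemma shapley_iterate_mem_lipOne [Nonempty A] [Nonempty B] (hd : ∀ x y, d x y ≤ dist x y)
    (hO : ∀ x, IsCompact (image2 (T · · x) A B))
    (hT : ∀ a ∈ A, ∀ b ∈ B, ∀ x y, d (T a b x) (T a b y) ≤ d x y) (hv : v ∈ lipOne d)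
    (k : ℕ) : (shapley A B T)^[k] v ∈ lipOne d := by
  induction k with
  | zero => exact hv
  | succ k ih =>
    rw [Function.iterate_succ_apply']
    exact shapley_mem_lipOne hd hO hT ih

lemma shapley_iterate_le_add [Nonempty A] [Nonempty B] (hd : ∀ x y, d x y ≤ dist x y)
    (hO : ∀ x, IsCompact (image2 (T · · x) A B))
    (hT : ∀ a ∈ A, ∀ b ∈ B, ∀ x y, d (T a b x) (T a b y) ≤ d x y)
    (hv : v ∈ lipOne d) (hw : w ∈ lipOne d) {c : ℝ} (hvw : ∀ z, v z ≤ w z + c) (k : ℕ)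
    (x : X) : (shapley A B T)^[k] v x ≤ (shapley A B T)^[k] w x + c := by
  induction k generalizing v w with
  | zero => exact hvw x
  | succ k ih =>
    rw [Function.iterate_succ_apply, Function.iterate_succ_apply]
    refine ih (shapley_mem_lipOne hd hO hT hv) (shapley_mem_lipOne hd hO hT hw) fun z => ?_
    have hwc := continuous_of_mem_lipOne hd hw
    rw [← shapley_add_const (hO z) hwc]
    exact shapley_mono (hO z) (continuous_of_mem_lipOne hd hv) (hwc.add continuous_const) hvw

lemma exists_sub_le_shapley [Nonempty A] [Nonempty B] (hd : ∀ x y, d x y ≤ dist x y) {x : X}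
    (hO : IsCompact (image2 (T · · x) A B)) :
    ∃ R, 0 ≤ R ∧ ∀ w ∈ lipOne d, w x - R ≤ shapley A B T w x := by
  obtain ⟨R, hR⟩ := hO.isBounded.subset_closedBall x
  obtain ⟨a₀⟩ := ‹Nonempty A›
  obtain ⟨b⟩ := ‹Nonempty B›
  have hmove : ∀ a : A, ∀ b : B, dist (T a b x) x ≤ R := fun a b =>
    hR (mem_image2_of_mem (f := (T · · x)) a.2 b.2)
  refine ⟨R, dist_nonneg.trans (hmove a₀ b), fun w hw => le_ciInf fun a => ?_⟩
  refine le_trans ?_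
    (le_ciSup (bddAbove_range_apply_move hO (continuous_of_mem_lipOne hd hw) a) b)
  linarith [hw x (T a b x), hd x (T a b x), dist_comm x (T a b x), hmove a b]

variable (A B T d) in
noncomputable def escapeSeq (x₀ : X) (k : ℕ) : ℝ :=
  (shapley A B T)^[k] (fun y => d y x₀) x₀

lemma subadditive_escapeSeq [Nonempty A] [Nonempty B] (htri : ∀ x y z, d x z ≤ d x y + d y z)
    (hd : ∀ x y, d x y ≤ dist x y) (hO : ∀ x, IsCompact (image2 (T · · x) A B))
    (hT : ∀ a ∈ A, ∀ b ∈ B, ∀ x y, d (T a b x) (T a b y) ≤ d x y) (x₀ : X) :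
    Subadditive (escapeSeq A B T d x₀) := by
  intro m n
  have hu := distTo_mem_lipOne htri x₀
  have hun := shapley_iterate_mem_lipOne hd hO hT hu n
  simp only [escapeSeq]
  rw [Function.iterate_add_apply]
  exact shapley_iterate_le_add hd hO hT hun hu (fun z => by linarith [hun z x₀]) m x₀

lemma bddBelow_range_escapeSeq_div [Nonempty A] [Nonempty B]
    (htri : ∀ x y z, d x z ≤ d x y + d y z) (hd : ∀ x y, d x y ≤ dist x y)
    (hO : ∀ x, IsCompact (image2 (T · · x) A B))
    (hT : ∀ a ∈ A, ∀ b ∈ B, ∀ x y, d (T a b x) (T a b y) ≤ d x y) (x₀ : X) :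
    BddBelow (range fun n : ℕ => escapeSeq A B T d x₀ n / n) := by
  obtain ⟨R, hR0, hR⟩ := exists_sub_le_shapley hd (hO x₀)
  have hiter : ∀ k : ℕ, d x₀ x₀ - k * R ≤ escapeSeq A B T d x₀ k := by
    intro k
    induction k with
    | zero => simp [escapeSeq]
    | succ k ih =>
      have := hR _ (shapley_iterate_mem_lipOne hd hO hT (distTo_mem_lipOne htri x₀) k)
      rw [escapeSeq] at ih ⊢
      rw [Function.iterate_succ_apply']
      push_cast
      linarith
  refine ⟨-R, forall_mem_range.2 fun n => ?_⟩
  rcases n.eq_zero_or_pos with rfl | hn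
  · simpa using hR0
  · rw [le_div_iff₀ (by exact_mod_cast hn)]
    linarith [hiter n, htri x₀ x₀ x₀]

lemma escapeSeq_le_add [Nonempty A] [Nonempty B] (htri : ∀ x y z, d x z ≤ d x y + d y z)
    (hd : ∀ x y, d x y ≤ dist x y) (hO : ∀ x, IsCompact (image2 (T · · x) A B))
    (hT : ∀ a ∈ A, ∀ b ∈ B, ∀ x y, d (T a b x) (T a b y) ≤ d x y) (x y : X) (k : ℕ) :
    escapeSeq A B T d x k ≤ escapeSeq A B T d y k + (d x y + d y x) := by
  have hchange := shapley_iterate_le_add hd hO hT (distTo_mem_lipOne htri x)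
    (distTo_mem_lipOne htri y) (fun z => htri z y x) k x
  have hmove := shapley_iterate_mem_lipOne hd hO hT (distTo_mem_lipOne htri y) k x y
  rw [escapeSeq, escapeSeq]
  linarith

lemma natCast_mul_le_escapeSeq_of_add_le_shapley [Nonempty A] [Nonempty B]
    (htri : ∀ x y z, d x z ≤ d x y + d y z) (hd : ∀ x y, d x y ≤ dist x y)
    (hO : ∀ x, IsCompact (image2 (T · · x) A B))
    (hT : ∀ a ∈ A, ∀ b ∈ B, ∀ x y, d (T a b x) (T a b y) ≤ d x y) {l : ℝ}
    (hv : v ∈ lipOne d) (hl : ∀ x, l + v x ≤ shapley A B T v x) (x₀ : X) (k : ℕ) :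
    k * l ≤ escapeSeq A B T d x₀ k := by
  have hiter : ∀ (k : ℕ) x, k * l + v x ≤ (shapley A B T)^[k] v x := by
    intro k
    induction k with
    | zero => simp
    | succ k ih =>
      intro x
      have := shapley_iterate_le_add hd hO hT hv (shapley_mem_lipOne hd hO hT hv) (c := -l)
        (fun z => by linarith [hl z]) k x
      rw [Function.iterate_succ_apply]
      push_cast
      linarith [ih x]
  have := shapley_iterate_le_add hd hO hT hv (distTo_mem_lipOne htri x₀) (c := v x₀)
    (fun z => by linarith [hv z x₀]) k x₀
  rw [escapeSeq]
  linarith [hiter k x₀]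

lemma add_le_shapley_limsup [TopologicalSpace E] [Nonempty A] [Nonempty B]
    (hd : ∀ x y, d x y ≤ dist x y) (hO : ∀ x, IsCompact (image2 (T · · x) A B)) (hBc : IsCompact B)
    (hcontb : ∀ x : X, ∀ a ∈ A, ContinuousOn (fun b => T a b x) B)
    {f : ℕ → X → ℝ} (hf : ∀ k, f k ∈ lipOne d)
    (hbdd : ∀ z, IsBoundedUnder (· ≤ ·) atTop (f · z))
    (hcobdd : ∀ z, IsCoboundedUnder (· ≤ ·) atTop (f · z)) {ρ : ℝ}
    (hstep : ∀ k x, f (k + 1) x + ρ ≤ shapley A B T (f k) x) (x : X) :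
    ρ + limsup (f · x) atTop ≤ shapley A B T (fun z => limsup (f · z) atTop) x := by
  have hvc := continuous_of_mem_lipOne hd (limsup_mem_lipOne hf hbdd hcobdd)
  refine le_ciInf fun a => le_of_forall_gt_imp_ge_of_dense fun γ hγ => ?_
  obtain ⟨γ', hWγ', hγ'γ⟩ := exists_between hγ
  have hK : IsCompact ((T a · x) '' B) := hBc.image_of_continuousOn (hcontb x a a.2)
  have hmoves : ∀ᶠ k in atTop, ∀ y ∈ (T a · x) '' B, f k y < γ := by
    refine hK.eventually_forall_lt (fun k => lipschitzWith_one_of_mem_lipOne hd (hf k)) hγ'γ ?_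
    rintro _ ⟨b, hb, rfl⟩
    exact eventually_lt_of_limsup_lt
      ((le_ciSup (bddAbove_range_apply_move (hO x) hvc a) ⟨b, hb⟩).trans_lt hWγ') (hbdd _)
  have hnext : ∀ᶠ k in atTop, f (k + 1) x ≤ γ - ρ := hmoves.mono fun k hk => by
    have hS := (hstep k x).trans
      (shapley_le_iSup (hO x) (continuous_of_mem_lipOne hd (hf k)) a)
    have hsup : (⨆ b : B, f k (T a b x)) ≤ γ := ciSup_le fun b => (hk _ ⟨b, b.2, rfl⟩).le
    linarith
  have hev : ∀ᶠ k in atTop, f k x ≤ γ - ρ :=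
    tendsto_principal.1 <| (tendsto_add_atTop_iff_nat (f := (f · x)) 1).1 <|
      (tendsto_principal (s := Iic (γ - ρ))).2 hnext
  linarith [limsup_le_of_le (hcobdd x) hev]

lemma exists_mem_lipOne_add_le_shapley_of_frequently [TopologicalSpace E] [Nonempty A]
    [Nonempty B] (hd : ∀ x y, d x y ≤ dist x y) (hO : ∀ x, IsCompact (image2 (T · · x) A B))
    (hBc : IsCompact B) (hcontb : ∀ x : X, ∀ a ∈ A, ContinuousOn (fun b => T a b x) B)
    {f : ℕ → X → ℝ} (hf : ∀ k, f k ∈ lipOne d) {x₀ : X} {C σ ρ : ℝ} (hC : ∀ k, f k x₀ ≤ C)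
    (hσ : ∃ᶠ k in atTop, σ ≤ f k x₀)
    (hstep : ∀ k x, f (k + 1) x + ρ ≤ shapley A B T (f k) x) :
    ∃ v ∈ lipOne d, ∀ x, ρ + v x ≤ shapley A B T v x := by
  have hbdd : ∀ z, IsBoundedUnder (· ≤ ·) atTop (f · z) := fun z =>
    isBoundedUnder_of ⟨C + d z x₀, fun k => by linarith [hf k z x₀, hC k]⟩
  have hcobdd : ∀ z, IsCoboundedUnder (· ≤ ·) atTop (f · z) := fun z =>
    IsCoboundedUnder.of_frequently_ge (a := σ - d x₀ z)
      (hσ.mono fun k hk => by linarith [hf k x₀ z])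
  exact ⟨_, limsup_mem_lipOne hf hbdd hcobdd,
    add_le_shapley_limsup hd hO hBc hcontb hf hbdd hcobdd hstep⟩

lemma exists_mem_lipOne_add_le_shapley [TopologicalSpace E] [Nonempty A] [Nonempty B]
    (htri : ∀ x y z, d x z ≤ d x y + d y z) (hd : ∀ x y, d x y ≤ dist x y)
    (hO : ∀ x, IsCompact (image2 (T · · x) A B))
    (hT : ∀ a ∈ A, ∀ b ∈ B, ∀ x y, d (T a b x) (T a b y) ≤ d x y)
    (hBc : IsCompact B) (hcontb : ∀ x : X, ∀ a ∈ A, ContinuousOn (fun b => T a b x) B)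
    (x₀ : X) {ρ : ℝ} (hρ : ∀ k : ℕ, k * ρ ≤ escapeSeq A B T d x₀ k) :
    ∃ v ∈ lipOne d, ∀ x, ρ + v x ≤ shapley A B T v x := by
  set u := fun k => (shapley A B T)^[k] (fun y => d y x₀)
  set g := fun k : ℕ => escapeSeq A B T d x₀ k - k * ρ
  set c := fun k : ℕ => k * ρ + partialSups g k
  have hu : ∀ k, u k ∈ lipOne d :=
    shapley_iterate_mem_lipOne hd hO hT (distTo_mem_lipOne htri x₀)
  have hux₀ : ∀ k, u k x₀ - c k = g k - partialSups g k := fun k => by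
    simp only [u, g, c, escapeSeq]
    ring
  obtain ⟨σ, hσ⟩ := exists_frequently_le_sub_partialSups (g := g) fun k => sub_nonneg.2 (hρ k)
  refine exists_mem_lipOne_add_le_shapley_of_frequently hd hO hBc hcontb
    (f := fun k z => u k z - c k) (fun k x y => by linarith [hu k x y]) (C := 0) (σ := σ)
    (fun k => by linarith [hux₀ k, le_partialSups g k])
    (hσ.mono fun k hk => by linarith [hux₀ k]) fun k x => ?_
  have hSf : shapley A B T (fun z => u k z - c k) x = u (k + 1) x - c k := by
    simp only [sub_eq_add_neg]
    rw [shapley_add_const (hO x) (continuous_of_mem_lipOne hd (hu k))]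
    simp only [u, Function.iterate_succ_apply']
  have hc : ρ ≤ c (k + 1) - c k := by
    simp only [c]
    push_cast
    linarith [(partialSups g).monotone k.le_succ]
  linarith

end ShapleyLip

theorem stmt_3_general {X : Type*} [MetricSpace X] [Nonempty X] {E : Type*} [MetricSpace E]
    (d : X → X → ℝ)
    (htri : ∀ x y z, d x z ≤ d x y + d y z)
    (hcompat : ∀ x y, dist x y = max (d x y) (d y x))
    (A B : Set E) (hAne : A.Nonempty)
    (hBc : IsCompact B) (hBne : B.Nonempty)
    (T : E → E → X → X)
    (hTnexp : ∀ a ∈ A, ∀ b ∈ B, ∀ x y, d (T a b x) (T a b y) ≤ d x y)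
    (hcontb : ∀ x : X, ∀ a ∈ A, ContinuousOn (fun b => T a b x) B)
    (hcomp : ∀ K : Set X, IsCompact K →
      IsCompact {z | ∃ a ∈ A, ∃ b ∈ B, ∃ x ∈ K, z = T a b x}) :
    ∃ ρ : ℝ,
      (∀ xb : X, Tendsto
        (fun k : ℕ => (shapley A B T)^[k] (fun y => d y xb) xb / (k : ℝ))
        atTop (nhds ρ)) ∧
      IsGreatest {l : ℝ | ∃ v : X → ℝ, (∀ x y, v x - v y ≤ d x y) ∧
        ∀ x, l + v x ≤ shapley A B T v x} ρ := by
  have := hAne.to_subtype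
  have := hBne.to_subtype
  have hd : ∀ x y, d x y ≤ dist x y := fun x y => (hcompat x y).symm ▸ le_max_left _ _
  have hO : ∀ x, IsCompact (image2 (T · · x) A B) := fun x => by
    convert hcomp {x} isCompact_singleton using 1
    ext z
    simp [eq_comm]
  obtain ⟨x₀⟩ := ‹Nonempty X›
  have hsub := subadditive_escapeSeq htri hd hO hTnexp x₀
  have hbdd := bddBelow_range_escapeSeq_div htri hd hO hTnexp x₀
  have hlim : ∀ x, Tendsto (fun k : ℕ => escapeSeq A B T d x k / k) atTop (𝓝 hsub.lim) :=
    fun x => (hsub.tendsto_lim hbdd).div_natCast_of_abs_sub_le (C := d x x₀ + d x₀ x)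
      fun k => abs_sub_le_iff.2 ⟨by linarith [escapeSeq_le_add htri hd hO hTnexp x x₀ k],
        by linarith [escapeSeq_le_add htri hd hO hTnexp x₀ x k]⟩
  refine ⟨hsub.lim, hlim, ?_, fun l ⟨v, hv, hl⟩ => ?_⟩
  · exact exists_mem_lipOne_add_le_shapley htri hd hO hTnexp hBc hcontb x₀
      (hsub.natCast_mul_lim_le hbdd)
  · exact le_of_natCast_mul_le_of_tendsto (hlim x₀)
      (natCast_mul_le_escapeSeq_of_add_le_shapley htri hd hO hTnexp hv hl x₀)

/-- under Assumption 1, the escape rate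
`ρ = lim_k [S^k d(·,x̄)](x̄)/k` exists, is independent of the base point, and is the
greatest `λ` for which there exists `v ∈ Lip₁(X)` with `λ + v ≤ S v`.
The hemi-metric space `(X, d)` is encoded by a metric space `X` whose distance is
the symmetrization of the hemi-metric `d`. -/
theorem stmt_3 {X : Type*} [MetricSpace X] [Nonempty X] {E : Type*} [MetricSpace E]
    (d : X → X → ℝ)
    (htri : ∀ x y z, d x z ≤ d x y + d y z)
    (hcompat : ∀ x y, dist x y = max (d x y) (d y x))
    (A B : Set E) (hAc : IsCompact A) (hAne : A.Nonempty)
    (hBc : IsCompact B) (hBne : B.Nonempty)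
    (T : E → E → X → X)
    (hTnexp : ∀ a ∈ A, ∀ b ∈ B, ∀ x y, d (T a b x) (T a b y) ≤ d x y)
    (hconta : ∀ x : X, ∀ b ∈ B, ContinuousOn (fun a => T a b x) A)
    (hcontb : ∀ x : X, ∀ a ∈ A, ContinuousOn (fun b => T a b x) B)
    (hcomp : ∀ K : Set X, IsCompact K →
      IsCompact {z | ∃ a ∈ A, ∃ b ∈ B, ∃ x ∈ K, z = T a b x}) :
    ∃ ρ : ℝ,
      (∀ xb : X, Tendsto
        (fun k : ℕ => (shapley A B T)^[k] (fun y => d y xb) xb / (k : ℝ))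
        atTop (nhds ρ)) ∧
      IsGreatest {l : ℝ | ∃ v : X → ℝ, (∀ x y, v x - v y ≤ d x y) ∧
        ∀ x, l + v x ≤ shapley A B T v x} ρ :=
  stmt_3_general d htri hcompat A B hAne hBc hBne T hTnexp hcontb hcomp
end

section
/- Under Assumption 1, the competitive spectral radius satisfies ρ = max_{v ∈ Lip₁(X)} inf_{x ∈ X} (Sv(x) − v(x)), and the maximum over v is attained. -/
/-!
If `S v ≥ v + r` then `Sᵏ v ≥ v + k r`, while monotonicity and additive homogeneity of `S` give
`Sᵏ v ≤ Sᵏ d(·, x̄) + v x̄`; evaluating at `x̄` and letting `k → ∞` yields `r ≤ ρ`.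

Conversely, `uₖ = Sᵏ d(·, x̄)` is subadditive at `x̄`, so `uₖ x̄ ≥ k ρ` by Fekete's lemma.
Subtracting from `uₖ` both `k ρ` and the running maximum of `uⱼ x̄ - j ρ` gives `1`-Lipschitz
functions `gₖ ≤ d(·, x̄)` with `gₖ₊₁ + ρ ≤ S gₖ`, and `v = limsup gₖ` satisfies `S v ≥ v + ρ`:
the supremum over `b` commutes with the `limsup` because each orbit `{T a b x}` is totally
bounded and the `gₖ` are equi-Lipschitz.
-/

open Set Filter

section Generic

variable {X : Type*}

def LipOne (d : X → X → ℝ) (v : X → ℝ) : Prop := ∀ x y, v x - v y ≤ d x y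

lemma lipOne_dist_right {d : X → X → ℝ} (htri : ∀ x y z, d x z ≤ d x y + d y z) (z : X) :
    LipOne d (fun y => d y z) :=
  fun x y => by linarith [htri x y z]

lemma LipOne.add_const {d : X → X → ℝ} {v : X → ℝ} (hv : LipOne d v) (c : ℝ) :
    LipOne d (fun y => v y + c) :=
  fun x y => by linarith [hv x y]

lemma LipOne.lipschitzWith [PseudoMetricSpace X] {d : X → X → ℝ}
    (hd : ∀ x y, d x y ≤ dist x y) {v : X → ℝ} (hv : LipOne d v) : LipschitzWith 1 v :=
  LipschitzWith.of_le_add fun x y => by linarith [hv x y, hd x y]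

lemma LipOne.limsup {d : X → X → ℝ} {g : ℕ → X → ℝ} (hg : ∀ k, LipOne d (g k))
    (hbdd : ∀ y, IsBoundedUnder (· ≤ ·) atTop (g · y))
    (hcobdd : ∀ y, IsCoboundedUnder (· ≤ ·) atTop (g · y)) :
    LipOne d (fun y => limsup (g · y) atTop) := by
  intro x y
  rw [sub_le_iff_le_add]
  refine le_of_forall_lt_imp_le_of_dense fun t ht => ?_
  have hfreq : ∃ᶠ k in atTop, t - d x y ≤ g k y :=
    (frequently_lt_of_lt_limsup (hcobdd x) ht).mono fun k hk => by linarith [hg k x y]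
  linarith [le_limsup_of_frequently_le hfreq (hbdd y)]

/-- Finitely many `ε`-balls cover `S`, so one of their centres carries infinitely many
near-maxima of the equi-Lipschitz family. -/
lemma TotallyBounded.exists_frequently_lt [PseudoMetricSpace X] {ι : Type*} {l : Filter ι}
    {S : Set X} (hS : TotallyBounded S) {g : ι → X → ℝ} (hg : ∀ i, LipschitzWith 1 (g i))
    {t ε : ℝ} (hε : 0 < ε) (h : ∃ᶠ i in l, ∃ z ∈ S, t < g i z) :
    ∃ y ∈ S, ∃ᶠ i in l, t - ε < g i y := by
  obtain ⟨F, hFS, hF, hSF⟩ := Metric.finite_approx_of_totallyBounded hS ε hε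
  have hnet : ∃ᶠ i in l, ∃ y ∈ F, t - ε < g i y := h.mono fun i ⟨z, hz, hlt⟩ => by
    obtain ⟨y, hy, hzy⟩ := mem_iUnion₂.1 (hSF hz)
    have := (hg i).le_add_mul z y
    rw [Metric.mem_ball] at hzy
    exact ⟨y, hy, by push_cast at this; linarith⟩
  obtain ⟨y, hy, hfreq⟩ := hF.frequently_exists.1 hnet
  exact ⟨y, hFS hy, hfreq⟩

lemma Subadditive.mul_le_of_tendsto {u : ℕ → ℝ} (hu : Subadditive u) {ρ : ℝ}
    (hρ : Tendsto (fun n => u n / n) atTop (nhds ρ)) (n : ℕ) : n * ρ ≤ u n := by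
  rcases eq_or_ne n 0 with rfl | hn
  · simpa using hu 0 0
  · have hbdd := hρ.bddBelow_range
    have hlim : hu.lim = ρ := tendsto_nhds_unique (hu.tendsto_lim hbdd) hρ
    have := hu.lim_le_div hbdd hn
    rwa [hlim, le_div_iff₀ (by positivity), mul_comm] at this

/-- If `a` is unbounded above, the record times where `a k = partialSups a k` are unbounded. -/
lemma exists_frequently_le_sub_partialSups_s4 {a : ℕ → ℝ} (ha : BddBelow (range a)) :
    ∃ c, ∃ᶠ k in atTop, c ≤ a k - partialSups a k := by
  obtain ⟨m, hm⟩ := ha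
  by_cases hbdd : BddAbove (range a)
  · obtain ⟨C, hC⟩ := hbdd
    refine ⟨m - C, Frequently.of_forall fun k => ?_⟩
    have := partialSups_le a k C fun j _ => hC (mem_range_self j)
    linarith [hm (mem_range_self k)]
  · refine ⟨0, frequently_atTop.2 fun K => ?_⟩
    obtain ⟨_, ⟨k, rfl⟩, hk⟩ := not_bddAbove_iff.1 hbdd (partialSups a K)
    obtain ⟨j, hjk, hj⟩ := exists_partialSups_eq a k
    have hkj : a k ≤ a j := hj ▸ le_partialSups a k
    have hKj : K ≤ j := by
      by_contra! hjK
      linarith [le_partialSups_of_le a hjK.le]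
    have := (partialSups a).monotone hjk
    exact ⟨j, hKj, by linarith⟩

end Generic

section Game

variable {X E : Type*} [PseudoMetricSpace X]

structure IsEscapeRateGame (d : X → X → ℝ) (A B : Set E) (T : E → E → X → X) : Prop where
  le_dist : ∀ x y, d x y ≤ dist x y
  nonexpansive : ∀ a ∈ A, ∀ b ∈ B, ∀ x y, d (T a b x) (T a b y) ≤ d x y
  totallyBounded : ∀ x, TotallyBounded (image2 (fun a b => T a b x) A B)
  nonempty_left : A.Nonempty
  nonempty_right : B.Nonempty

namespace IsEscapeRateGame

variable {d : X → X → ℝ} {A B : Set E} {T : E → E → X → X} {v w : X → ℝ}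

lemma isBounded_image (hG : IsEscapeRateGame d A B T) (hv : LipOne d v) (x : X) :
    Bornology.IsBounded (v '' image2 (fun a b => T a b x) A B) :=
  (hv.lipschitzWith hG.le_dist).isBounded_image (hG.totallyBounded x).isBounded

lemma bddAbove_range_apply (hG : IsEscapeRateGame d A B T) (hv : LipOne d v) (x : X) {a : E}
    (ha : a ∈ A) : BddAbove (range fun b : B => v (T a b x)) :=
  (hG.isBounded_image hv x).bddAbove.mono <| by
    rintro _ ⟨b, rfl⟩
    exact mem_image_of_mem v (mem_image2_of_mem ha b.2)

lemma bddBelow_range_iSup (hG : IsEscapeRateGame d A B T) (hv : LipOne d v) (x : X) :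
    BddBelow (range fun a : A => ⨆ b : B, v (T a b x)) := by
  obtain ⟨m, hm⟩ := (hG.isBounded_image hv x).bddBelow
  obtain ⟨b₀, hb₀⟩ := hG.nonempty_right
  refine ⟨m, ?_⟩
  rintro _ ⟨a, rfl⟩
  exact (hm (mem_image_of_mem v (mem_image2_of_mem a.2 hb₀))).trans
    (le_ciSup (hG.bddAbove_range_apply hv x a.2) ⟨b₀, hb₀⟩)

lemma shapley_le_iSup (hG : IsEscapeRateGame d A B T) (hv : LipOne d v) (x : X) {a : E}
    (ha : a ∈ A) : shapley A B T v x ≤ ⨆ b : B, v (T a b x) :=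
  ciInf_le (hG.bddBelow_range_iSup hv x) ⟨a, ha⟩

lemma shapley_add_const (hG : IsEscapeRateGame d A B T) (hv : LipOne d v) (c : ℝ) (x : X) :
    shapley A B T (fun y => v y + c) x = shapley A B T v x + c := by
  have := hG.nonempty_left.to_subtype
  have := hG.nonempty_right.to_subtype
  rw [shapley, shapley, ciInf_add (hG.bddBelow_range_iSup hv x)]
  exact iInf_congr fun a => (ciSup_add (hG.bddAbove_range_apply hv x a.2) c).symm

lemma shapley_mono (hG : IsEscapeRateGame d A B T) (hv : LipOne d v) (hw : LipOne d w)
    (hvw : ∀ y, v y ≤ w y) (x : X) : shapley A B T v x ≤ shapley A B T w x :=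
  ciInf_mono (hG.bddBelow_range_iSup hv x) fun a =>
    ciSup_mono (hG.bddAbove_range_apply hw x a.2) fun _ => hvw _

lemma lipOne_shapley (hG : IsEscapeRateGame d A B T) (hv : LipOne d v) :
    LipOne d (shapley A B T v) := by
  intro x y
  have := hG.nonempty_left.to_subtype
  have := hG.nonempty_right.to_subtype
  have hstep : ∀ a : A, ⨆ b : B, v (T a b x) ≤ (⨆ b : B, v (T a b y)) + d x y :=
    fun a => ciSup_le fun b => by
      linarith [hv (T a b x) (T a b y), hG.nonexpansive a a.2 b b.2 x y,
        le_ciSup (hG.bddAbove_range_apply hv y a.2) b]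
  have := (ciInf_mono (hG.bddBelow_range_iSup hv x) hstep).trans_eq
    (ciInf_add (hG.bddBelow_range_iSup hv y) (d x y)).symm
  rw [shapley, shapley]
  linarith

lemma lipOne_iterate_shapley (hG : IsEscapeRateGame d A B T) (hv : LipOne d v) (k : ℕ) :
    LipOne d ((shapley A B T)^[k] v) := by
  induction k with
  | zero => exact hv
  | succ k ih =>
    rw [Function.iterate_succ']
    exact hG.lipOne_shapley ih

lemma iterate_shapley_add_const (hG : IsEscapeRateGame d A B T) (hv : LipOne d v) (c : ℝ)
    (k : ℕ) (x : X) :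
    (shapley A B T)^[k] (fun y => v y + c) x = (shapley A B T)^[k] v x + c := by
  induction k generalizing x with
  | zero => rfl
  | succ k ih =>
    rw [Function.iterate_succ_apply', Function.iterate_succ_apply', funext ih,
      hG.shapley_add_const (hG.lipOne_iterate_shapley hv k)]

lemma iterate_shapley_mono (hG : IsEscapeRateGame d A B T) (hv : LipOne d v) (hw : LipOne d w)
    (hvw : ∀ y, v y ≤ w y) (k : ℕ) (x : X) :
    (shapley A B T)^[k] v x ≤ (shapley A B T)^[k] w x := by
  induction k generalizing x with
  | zero => exact hvw x
  | succ k ih =>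
    rw [Function.iterate_succ_apply', Function.iterate_succ_apply']
    exact hG.shapley_mono (hG.lipOne_iterate_shapley hv k) (hG.lipOne_iterate_shapley hw k) ih x

lemma iterate_shapley_le_add (hG : IsEscapeRateGame d A B T)
    (htri : ∀ x y z, d x z ≤ d x y + d y z) (hv : LipOne d v) (z : X) (k : ℕ) (x : X) :
    (shapley A B T)^[k] v x ≤ (shapley A B T)^[k] (fun y => d y z) x + v z := by
  rw [← hG.iterate_shapley_add_const (lipOne_dist_right htri z)]
  exact hG.iterate_shapley_mono hv ((lipOne_dist_right htri z).add_const _)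
    (fun y => by linarith [hv y z]) k x

lemma subadditive_iterate_shapley (hG : IsEscapeRateGame d A B T)
    (htri : ∀ x y z, d x z ≤ d x y + d y z) (z : X) :
    Subadditive fun k => (shapley A B T)^[k] (fun y => d y z) z := fun m n => by
  dsimp only
  rw [Function.iterate_add_apply]
  exact hG.iterate_shapley_le_add htri
    (hG.lipOne_iterate_shapley (lipOne_dist_right htri z) n) z m z

lemma add_mul_le_iterate_shapley (hG : IsEscapeRateGame d A B T) (hv : LipOne d v) {r : ℝ}
    (hr : ∀ x, v x + r ≤ shapley A B T v x) (k : ℕ) (x : X) :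
    v x + k * r ≤ (shapley A B T)^[k] v x := by
  induction k generalizing x with
  | zero => simp
  | succ k ih =>
    have hmono := hG.iterate_shapley_mono (hv.add_const r) (hG.lipOne_shapley hv) hr k x
    rw [hG.iterate_shapley_add_const hv] at hmono
    rw [Function.iterate_succ_apply]
    push_cast
    linarith [ih x]

lemma le_of_add_le_shapley (hG : IsEscapeRateGame d A B T)
    (htri : ∀ x y z, d x z ≤ d x y + d y z) {xb : X} {ρ : ℝ}
    (hρ : Tendsto (fun k : ℕ => (shapley A B T)^[k] (fun y => d y xb) xb / k) atTop (nhds ρ))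
    (hv : LipOne d v) {r : ℝ} (hr : ∀ x, v x + r ≤ shapley A B T v x) : r ≤ ρ := by
  refine ge_of_tendsto hρ (eventually_atTop.2 ⟨1, fun k hk => ?_⟩)
  rw [le_div_iff₀ (by exact_mod_cast hk)]
  linarith [hG.add_mul_le_iterate_shapley hv hr k xb, hG.iterate_shapley_le_add htri hv xb k xb]

lemma limsup_add_le_shapley (hG : IsEscapeRateGame d A B T) {g : ℕ → X → ℝ}
    (hg : ∀ k, LipOne d (g k)) (hbdd : ∀ y, IsBoundedUnder (· ≤ ·) atTop (g · y))
    (hcobdd : ∀ y, IsCoboundedUnder (· ≤ ·) atTop (g · y)) {ρ : ℝ}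
    (hrec : ∀ k x, g (k + 1) x + ρ ≤ shapley A B T (g k) x) (x : X) :
    limsup (g · x) atTop + ρ ≤ shapley A B T (fun y => limsup (g · y) atTop) x := by
  have hv := LipOne.limsup hg hbdd hcobdd
  have := hG.nonempty_left.to_subtype
  have := hG.nonempty_right.to_subtype
  refine le_ciInf fun a => le_of_forall_lt_imp_le_of_dense fun t ht => ?_
  have hfreq : ∃ᶠ k in atTop, t - ρ < g (k + 1) x := by
    have h := frequently_lt_of_lt_limsup (hcobdd x)
      (show t - ρ < limsup (g · x) atTop by linarith)
    rw [← map_add_atTop_eq_nat 1] at h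
    exact frequently_map.1 h
  have hnear : ∃ᶠ k in atTop, ∃ z ∈ (fun b => T a b x) '' B, t < g k z :=
    hfreq.mono fun k hk => by
      obtain ⟨b, hb⟩ := exists_lt_of_lt_ciSup <|
        (show t < shapley A B T (g k) x by linarith [hrec k x]).trans_le
          (hG.shapley_le_iSup (hg k) x a.2)
      exact ⟨_, mem_image_of_mem _ b.2, hb⟩
  have hS : TotallyBounded ((fun b => T a b x) '' B) :=
    (hG.totallyBounded x).subset <| by
      rintro _ ⟨b, hb, rfl⟩
      exact mem_image2_of_mem a.2 hb
  refine le_of_forall_pos_le_add fun ε hε => ?_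
  obtain ⟨_, ⟨b, hb, rfl⟩, hfreq⟩ :=
    hS.exists_frequently_lt (fun k => (hg k).lipschitzWith hG.le_dist) hε hnear
  have := le_limsup_of_frequently_le (hfreq.mono fun _ h => h.le) (hbdd _)
  linarith [le_ciSup (hG.bddAbove_range_apply hv x a.2) ⟨b, hb⟩]

/-- The normalisation `g k = u k - k ρ - max_{j ≤ k} (u j x̄ - j ρ)` keeps `g k ≤ d(·, x̄)`
while `g k x̄` returns to a bounded window infinitely often. -/
lemma exists_lipOne_add_le_shapley (hG : IsEscapeRateGame d A B T) {u : ℕ → X → ℝ}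
    (hu : ∀ k, LipOne d (u k)) (hsucc : ∀ k, u (k + 1) = shapley A B T (u k)) {xb : X}
    {ρ : ℝ} (hρ : ∀ k : ℕ, k * ρ ≤ u k xb) :
    ∃ v, LipOne d v ∧ ∀ x, v x + ρ ≤ shapley A B T v x := by
  obtain ⟨c, hc⟩ := exists_frequently_le_sub_partialSups_s4 (a := fun k : ℕ => u k xb - k * ρ)
    ⟨0, by rintro _ ⟨k, rfl⟩; linarith [hρ k]⟩
  set M := partialSups fun k : ℕ => u k xb - k * ρ
  set g : ℕ → X → ℝ := fun k y => u k y + -(k * ρ + M k)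
  have hg : ∀ k, LipOne d (g k) := fun k => (hu k).add_const _
  have hbdd : ∀ y, IsBoundedUnder (· ≤ ·) atTop (g · y) := fun y =>
    isBoundedUnder_of ⟨d y xb, fun k => by
      linarith [hu k y xb, le_partialSups (fun k : ℕ => u k xb - k * ρ) k]⟩
  have hcobdd : ∀ y, IsCoboundedUnder (· ≤ ·) atTop (g · y) := fun y =>
    IsCoboundedUnder.of_frequently_ge (a := c - d xb y) <| hc.mono fun k hk => by
      linarith [hu k xb y]
  have hrec : ∀ k x, g (k + 1) x + ρ ≤ shapley A B T (g k) x := fun k x => by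
    simp only [g]
    rw [hG.shapley_add_const (hu k), ← hsucc]
    push_cast
    linarith [M.monotone k.le_succ]
  exact ⟨_, LipOne.limsup hg hbdd hcobdd, hG.limsup_add_le_shapley hg hbdd hcobdd hrec⟩

end IsEscapeRateGame

end Game

theorem stmt_4_general {X : Type*} [MetricSpace X] {E : Type*} [MetricSpace E]
    (d : X → X → ℝ)
    (htri : ∀ x y z, d x z ≤ d x y + d y z)
    (hcompat : ∀ x y, dist x y = max (d x y) (d y x))
    (A B : Set E) (hAne : A.Nonempty)
    (hBne : B.Nonempty)
    (T : E → E → X → X)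
    (hTnexp : ∀ a ∈ A, ∀ b ∈ B, ∀ x y, d (T a b x) (T a b y) ≤ d x y)
    (hcomp : ∀ K : Set X, IsCompact K →
      IsCompact {z | ∃ a ∈ A, ∃ b ∈ B, ∃ x ∈ K, z = T a b x})
    (xb : X) (ρ : ℝ)
    (hρ : Tendsto (fun k : ℕ => (shapley A B T)^[k] (fun y => d y xb) xb / (k : ℝ))
      atTop (nhds ρ)) :
    IsGreatest {r : ℝ | ∃ v : X → ℝ, (∀ x y, v x - v y ≤ d x y) ∧
      IsGLB {s : ℝ | ∃ x : X, s = shapley A B T v x - v x} r} ρ := by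
  have hG : IsEscapeRateGame d A B T :=
    { le_dist := fun x y => (le_max_left _ _).trans (hcompat x y).ge
      nonexpansive := hTnexp
      totallyBounded := fun x => (hcomp {x} isCompact_singleton).totallyBounded.subset <| by
        rintro _ ⟨a, ha, b, hb, rfl⟩
        exact ⟨a, ha, b, hb, x, rfl, rfl⟩
      nonempty_left := hAne
      nonempty_right := hBne }
  have hu := hG.lipOne_iterate_shapley (lipOne_dist_right htri xb)
  obtain ⟨v, hv, hvS⟩ := hG.exists_lipOne_add_le_shapley hu
    (fun k => Function.iterate_succ_apply' _ k _)
    ((hG.subadditive_iterate_shapley htri xb).mul_le_of_tendsto hρ)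
  have hle : ∀ w, LipOne d w → ∀ r ∈ lowerBounds {s | ∃ x, s = shapley A B T w x - w x},
      r ≤ ρ := fun w hw r hr =>
    hG.le_of_add_le_shapley htri hρ hw fun x => by linarith [hr ⟨x, rfl⟩]
  refine ⟨⟨v, hv, ?_, hle v hv⟩, fun r ⟨w, hw, hglb⟩ => hle w hw r hglb.1⟩
  rintro _ ⟨x, rfl⟩
  linarith [hvS x]

/-- under Assumption 1, the competitive spectral radius satisfies
`ρ = max_{v ∈ Lip₁(X)} inf_{x ∈ X} (S v (x) - v (x))`, the maximum being attained.
(The inner infimum is encoded via `IsGLB`, so that only functions `v` for which the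
infimum is finite contribute.) -/
theorem stmt_4 {X : Type*} [MetricSpace X] [Nonempty X] {E : Type*} [MetricSpace E]
    (d : X → X → ℝ)
    (htri : ∀ x y z, d x z ≤ d x y + d y z)
    (hcompat : ∀ x y, dist x y = max (d x y) (d y x))
    (A B : Set E) (hAc : IsCompact A) (hAne : A.Nonempty)
    (hBc : IsCompact B) (hBne : B.Nonempty)
    (T : E → E → X → X)
    (hTnexp : ∀ a ∈ A, ∀ b ∈ B, ∀ x y, d (T a b x) (T a b y) ≤ d x y)
    (hconta : ∀ x : X, ∀ b ∈ B, ContinuousOn (fun a => T a b x) A)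
    (hcontb : ∀ x : X, ∀ a ∈ A, ContinuousOn (fun b => T a b x) B)
    (hcomp : ∀ K : Set X, IsCompact K →
      IsCompact {z | ∃ a ∈ A, ∃ b ∈ B, ∃ x ∈ K, z = T a b x})
    (xb : X) (ρ : ℝ)
    (hρ : Tendsto (fun k : ℕ => (shapley A B T)^[k] (fun y => d y xb) xb / (k : ℝ))
      atTop (nhds ρ)) :
    IsGreatest {r : ℝ | ∃ v : X → ℝ, (∀ x y, v x - v y ≤ d x y) ∧
      IsGLB {s : ℝ | ∃ x : X, s = shapley A B T v x - v x} r} ρ :=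
  stmt_4_general d htri hcompat A B hAne hBne T hTnexp hcomp xb ρ hρ
end

section
/- Under Assumption 1, suppose there exist λ ∈ ℝ and a distance-like function v ∈ Lip₁(X) such that Sv ≤ λ + v pointwise on X. Then the competitive spectral radius satisfies ρ ≤ λ. -/
open Set Filter

/-- under Assumption 1, if there is a distance-like function
`v ∈ Lip₁(X)` with `S v ≤ λ + v`, then the competitive spectral radius satisfies
`ρ ≤ λ`. -/
theorem stmt_5 {X : Type*} [MetricSpace X] [Nonempty X] {E : Type*} [MetricSpace E]
    (d : X → X → ℝ)
    (htri : ∀ x y z, d x z ≤ d x y + d y z)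
    (hcompat : ∀ x y, dist x y = max (d x y) (d y x))
    (A B : Set E) (hAc : IsCompact A) (hAne : A.Nonempty)
    (hBc : IsCompact B) (hBne : B.Nonempty)
    (T : E → E → X → X)
    (hTnexp : ∀ a ∈ A, ∀ b ∈ B, ∀ x y, d (T a b x) (T a b y) ≤ d x y)
    (hconta : ∀ x : X, ∀ b ∈ B, ContinuousOn (fun a => T a b x) A)
    (hcontb : ∀ x : X, ∀ a ∈ A, ContinuousOn (fun b => T a b x) B)
    (hcomp : ∀ K : Set X, IsCompact K →
      IsCompact {z | ∃ a ∈ A, ∃ b ∈ B, ∃ x ∈ K, z = T a b x})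
    (xb : X) (ρ : ℝ)
    (hρ : Tendsto (fun k : ℕ => (shapley A B T)^[k] (fun y => d y xb) xb / (k : ℝ))
      atTop (nhds ρ))
    (l : ℝ) (v : X → ℝ)
    (hvLip : ∀ x y, v x - v y ≤ d x y)
    (hvdl : ∃ x₀ : X, ∃ α : ℝ, ∀ x, α + d x x₀ ≤ v x)
    (hsub : ∀ x, shapley A B T v x ≤ l + v x) :
    ρ ≤ l := by
  haveI : Nonempty A := hAne.to_subtype
  haveI : Nonempty B := hBne.to_subtype
  -- d x x = 0
  have hdxx : ∀ x : X, d x x = 0 := by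
    intro x
    have h := hcompat x x
    simp [dist_self, max_self] at h
    exact h.symm
  have hd_le_dist : ∀ x y : X, d x y ≤ dist x y := by
    intro x y
    rw [hcompat x y]
    exact le_max_left _ _
  -- d-Lipschitz functions are continuous
  have hcont : ∀ u : X → ℝ, (∀ x y, u x - u y ≤ d x y) → Continuous u := by
    intro u hu
    have : LipschitzWith 1 u := by
      apply LipschitzWith.of_dist_le_mul
      intro x y
      rw [Real.dist_eq, abs_sub_le_iff]
      constructor
      · exact le_trans (hu x y) (by simpa using hd_le_dist x y)
      · exact le_trans (hu y x) (by rw [dist_comm]; simpa using hd_le_dist y x)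
    exact this.continuous
  -- boundedness of d-Lipschitz functions on the orbit sets
  have hbdd : ∀ u : X → ℝ, (∀ x y, u x - u y ≤ d x y) → ∀ x : X,
      ∃ m M : ℝ, ∀ a ∈ A, ∀ b ∈ B, m ≤ u (T a b x) ∧ u (T a b x) ≤ M := by
    intro u hu x
    have hK := hcomp ({x} : Set X) isCompact_singleton
    have him : IsCompact (u '' {z | ∃ a ∈ A, ∃ b ∈ B, ∃ y ∈ ({x} : Set X), z = T a b y}) :=
      hK.image (hcont u hu)
    obtain ⟨M, hM⟩ := him.bddAbove
    obtain ⟨m, hm⟩ := him.bddBelow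
    refine ⟨m, M, fun a ha b hb => ?_⟩
    have hmem : u (T a b x) ∈
        u '' {z | ∃ a ∈ A, ∃ b ∈ B, ∃ y ∈ ({x} : Set X), z = T a b y} :=
      ⟨T a b x, ⟨a, ha, b, hb, x, rfl, rfl⟩, rfl⟩
    exact ⟨hm hmem, hM hmem⟩
  -- the key comparison lemma
  have hkey : ∀ (u w : X → ℝ) (c : ℝ) (x y : X),
      (∀ x y, u x - u y ≤ d x y) → (∀ x y, w x - w y ≤ d x y) →
      (∀ a ∈ A, ∀ b ∈ B, u (T a b x) ≤ w (T a b y) + c) →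
      shapley A B T u x ≤ shapley A B T w y + c := by
    intro u w c x y hu hw h
    obtain ⟨mu, Mu, hmu⟩ := hbdd u hu x
    obtain ⟨mw, Mw, hmw⟩ := hbdd w hw y
    have hBu : ∀ a : A, BddAbove (Set.range fun b : B => u (T a b x)) :=
      fun a => ⟨Mu, by rintro z ⟨b, rfl⟩; exact (hmu a a.2 b b.2).2⟩
    have hBw : ∀ a : A, BddAbove (Set.range fun b : B => w (T a b y)) :=
      fun a => ⟨Mw, by rintro z ⟨b, rfl⟩; exact (hmw a a.2 b b.2).2⟩
    have hsup : ∀ a : A, (⨆ b : B, u (T a b x)) ≤ (⨆ b : B, w (T a b y)) + c := by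
      intro a
      refine ciSup_le fun b => ?_
      have h2 := le_ciSup (hBw a) b
      have h3 := h a a.2 b b.2
      linarith
    have hBBu : BddBelow (Set.range fun a : A => ⨆ b : B, u (T a b x)) := by
      refine ⟨mu, ?_⟩
      rintro z ⟨a, rfl⟩
      obtain ⟨b0, hb0⟩ := hBne
      exact le_trans (hmu a a.2 b0 hb0).1 (le_ciSup (hBu a) ⟨b0, hb0⟩)
    have h1 : ∀ a : A, (⨅ a : A, ⨆ b : B, u (T a b x)) - c ≤ ⨆ b : B, w (T a b y) := by
      intro a
      have h2 := ciInf_le hBBu a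
      have h3 := hsup a
      linarith
    have h3 := le_ciInf h1
    simp only [shapley]
    linarith
  -- the Shapley operator preserves d-Lipschitz functions
  have hSlip : ∀ u : X → ℝ, (∀ x y, u x - u y ≤ d x y) →
      ∀ x y, shapley A B T u x - shapley A B T u y ≤ d x y := by
    intro u hu x y
    have := hkey u u (d x y) x y hu hu (fun a ha b hb => by
      have h1 := hu (T a b x) (T a b y)
      have h2 := hTnexp a ha b hb x y
      linarith)
    linarith
  -- the base function
  obtain ⟨x₀, α, hvd⟩ := hvdl
  set C : ℝ := d x₀ xb - α with hC
  have hu0 : ∀ x y : X, d x xb - d y xb ≤ d x y := by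
    intro x y
    have := htri x y xb
    linarith
  have hCbound : ∀ x : X, d x xb ≤ v x + C := by
    intro x
    have h1 := htri x x₀ xb
    have h2 := hvd x
    simp only [hC]
    linarith
  -- main induction
  have main : ∀ k : ℕ,
      (∀ x y, (shapley A B T)^[k] (fun y => d y xb) x -
        (shapley A B T)^[k] (fun y => d y xb) y ≤ d x y) ∧
      (∀ x, (shapley A B T)^[k] (fun y => d y xb) x ≤ v x + (C + k * l)) := by
    intro k
    induction k with
    | zero =>
      refine ⟨hu0, fun x => ?_⟩
      simp only [Function.iterate_zero, id_eq, Nat.cast_zero]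
      have := hCbound x
      linarith
    | succ k ih =>
      constructor
      · intro x y
        rw [Function.iterate_succ_apply']
        exact hSlip _ ih.1 x y
      · intro x
        rw [Function.iterate_succ_apply']
        have h1 : shapley A B T ((shapley A B T)^[k] (fun y => d y xb)) x ≤
            shapley A B T v x + (C + k * l) := by
          apply hkey _ _ _ x x ih.1 hvLip
          intro a ha b hb
          exact ih.2 (T a b x)
        have h2 := hsub x
        push_cast
        linarith
  -- pass to the limit
  have hg : Tendsto (fun k : ℕ => (v xb + C) / (k : ℝ) + l) atTop (nhds l) := by
    have h0 : Tendsto (fun k : ℕ => (v xb + C) / (k : ℝ)) atTop (nhds 0) :=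
      tendsto_const_div_atTop_nhds_zero_nat _
    simpa using h0.add tendsto_const_nhds
  apply le_of_tendsto_of_tendsto hρ hg
  filter_upwards [eventually_ge_atTop 1] with k hk
  have hkpos : (0 : ℝ) < (k : ℝ) := by exact_mod_cast Nat.lt_of_lt_of_le Nat.zero_lt_one hk
  have hb := (main k).2 xb
  have heq : (v xb + (C + k * l)) / (k : ℝ) = (v xb + C) / (k : ℝ) + l := by
    field_simp
    ring
  calc (shapley A B T)^[k] (fun y => d y xb) xb / (k : ℝ)
      ≤ (v xb + (C + k * l)) / (k : ℝ) := by
        exact (div_le_div_iff_of_pos_right hkpos).mpr hb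
    _ = (v xb + C) / (k : ℝ) + l := heq
end

section
/- Let (T_{ab})_{(a,b)∈E×E} and (T'_{ab})_{(a,b)∈E×E} be two families of self-maps of X, each nonexpansive for the hemi-metric d and satisfying Assumption 1, and suppose there exist ε ≥ 0 and L > 0 such that for all (a,b), (a',b') ∈ E×E and all x ∈ X, d°(T_{ab}(x), T'_{a'b'}(x)) ≤ L(δ(a,a') + δ(b,b')) + ε, where d° is the symmetrized metric of d. Then for all nonempty compact subsets 𝒜, 𝒜', ℬ, ℬ' ⊆ E, |ρ(T,𝒜,ℬ) − ρ(T',𝒜',ℬ')| ≤ L(δ_H(𝒜,𝒜') + δ_H(ℬ,ℬ')) + ε, where δ_H denotes the Hausdorff distance induced by δ. -/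
open Set Filter

section aux0
variable {X : Type*} [MetricSpace X] {E : Type*} [MetricSpace E]

private lemma lip_continuous {v : X → ℝ} (hv : ∀ x y, |v x - v y| ≤ dist x y) :
    Continuous v :=
  (LipschitzWith.of_dist_le_mul fun x y => by
    rw [Real.dist_eq, NNReal.coe_one, one_mul]; exact hv x y).continuous

private lemma lip1_to_dist {d : X → X → ℝ}
    (hcompat : ∀ x y, dist x y = max (d x y) (d y x))
    {v : X → ℝ} (hv : ∀ x y, v x - v y ≤ d x y) :
    ∀ p q, |v p - v q| ≤ dist p q := by
  intro p q
  rw [hcompat, abs_le]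
  constructor
  · have h1 := hv q p
    have h2 := le_max_right (d p q) (d q p)
    linarith
  · exact (hv p q).trans (le_max_left _ _)

private lemma bddAbove_shap {B : Set E} (hBc : IsCompact B) (T : E → E → X → X)
    (hcontb : ∀ x : X, ∀ a : E, Continuous fun b => T a b x)
    {v : X → ℝ} (hv : Continuous v) (a : E) (x : X) :
    BddAbove (Set.range fun b : B => v (T a b x)) := by
  have h1 : IsCompact ((fun b => v (T a b x)) '' B) :=
    hBc.image (hv.comp (hcontb x a))
  refine h1.bddAbove.mono ?_
  rintro _ ⟨b, rfl⟩
  exact ⟨b, b.2, rfl⟩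

private lemma bddBelow_shap {A B : Set E} (hBc : IsCompact B)
    (hBne : B.Nonempty) (T : E → E → X → X)
    (hcontb : ∀ x : X, ∀ a : E, Continuous fun b => T a b x)
    {v : X → ℝ} (hv : Continuous v) (x : X)
    (hK : IsCompact {z | ∃ a ∈ A, ∃ b ∈ B, ∃ x' ∈ ({x} : Set X), z = T a b x'}) :
    BddBelow (Set.range fun a : A => ⨆ b : B, v (T a b x)) := by
  obtain ⟨b0, hb0⟩ := hBne
  haveI : Nonempty B := ⟨⟨b0, hb0⟩⟩
  have h1 : IsCompact (v '' {z | ∃ a ∈ A, ∃ b ∈ B, ∃ x' ∈ ({x} : Set X), z = T a b x'}) :=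
    hK.image hv
  obtain ⟨m, hm⟩ := h1.bddBelow
  refine ⟨m, ?_⟩
  rintro _ ⟨a, rfl⟩
  have hmem : T (a : E) b0 x ∈ {z | ∃ a ∈ A, ∃ b ∈ B, ∃ x' ∈ ({x} : Set X), z = T a b x'} :=
    ⟨a, a.2, b0, hb0, x, rfl, rfl⟩
  have h2 : m ≤ v (T (a : E) b0 x) := hm ⟨_, hmem, rfl⟩
  exact h2.trans (le_ciSup (bddAbove_shap hBc T hcontb hv a x) ⟨b0, hb0⟩)

private lemma hausdorff_half (s t : Set E) (hs : IsCompact s) (hsne : s.Nonempty)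
    (ht : IsCompact t) (htne : t.Nonempty) :
    ∀ x ∈ s, ∃ y ∈ t, dist y x ≤ Metric.hausdorffDist s t := by
  intro x hx
  obtain ⟨y, hy, hdy⟩ := ht.exists_infDist_eq_dist htne x
  have hne : EMetric.hausdorffEdist s t ≠ ⊤ :=
    Metric.hausdorffEdist_ne_top_of_nonempty_of_bounded hsne htne hs.isBounded ht.isBounded
  have h1 := Metric.infDist_le_hausdorffDist_of_mem hx hne
  refine ⟨y, hy, ?_⟩
  rw [dist_comm, ← hdy]
  exact h1
end aux0

section aux
variable {X : Type*} [MetricSpace X] {E : Type*} [MetricSpace E]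

private lemma shapley_le {A A2 B B2 : Set E}
    (hAne : A.Nonempty) (hA2ne : A2.Nonempty) (hBne : B.Nonempty) (hB2ne : B2.Nonempty)
    (hB2c : IsCompact B2)
    (T T2 : E → E → X → X)
    (hcontb2 : ∀ x : X, ∀ a : E, Continuous fun b => T2 a b x)
    {v v2 : X → ℝ} (hvd : ∀ x y, |v x - v y| ≤ dist x y) (hv2 : Continuous v2)
    {c hA hB ε L : ℝ}
    (hvv2 : ∀ z, v z - v2 z ≤ c)
    (hA2A : ∀ a' ∈ A2, ∃ a ∈ A, dist a a' ≤ hA)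
    (hBB2 : ∀ b ∈ B, ∃ b' ∈ B2, dist b b' ≤ hB)
    (hL : 0 ≤ L)
    (hclose : ∀ a b a' b' : E, ∀ x : X,
      dist (T a b x) (T2 a' b' x) ≤ L * (dist a a' + dist b b') + ε)
    (x : X)
    (hbb : BddBelow (Set.range fun a : A => ⨆ b : B, v (T a b x))) :
    shapley A B T v x ≤ shapley A2 B2 T2 v2 x + (c + L * (hA + hB) + ε) := by
  haveI : Nonempty A := hAne.to_subtype
  haveI : Nonempty A2 := hA2ne.to_subtype
  haveI : Nonempty B := hBne.to_subtype
  haveI : Nonempty B2 := hB2ne.to_subtype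
  have key : ∀ a' : A2, shapley A B T v x - (c + L * (hA + hB) + ε)
      ≤ ⨆ b' : B2, v2 (T2 a' b' x) := by
    intro a'
    obtain ⟨a, ha, haa'⟩ := hA2A a' a'.2
    have h1 : shapley A B T v x ≤ ⨆ b : B, v (T a b x) := by
      simp only [shapley]
      exact ciInf_le hbb ⟨a, ha⟩
    have h2 : (⨆ b : B, v (T a b x)) ≤ (⨆ b' : B2, v2 (T2 a' b' x)) + (c + L * (hA + hB) + ε) := by
      refine ciSup_le fun b => ?_
      obtain ⟨b', hb', hbb'⟩ := hBB2 b b.2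
      have h4 : v (T a b x) - v (T2 a' b' x) ≤ dist (T a b x) (T2 a' b' x) :=
        le_of_abs_le (hvd _ _)
      have h5 := hclose a b a' b' x
      have h6 : L * (dist a (a' : E) + dist (b : E) b') ≤ L * (hA + hB) :=
        mul_le_mul_of_nonneg_left (add_le_add haa' hbb') hL
      have h7 := hvv2 (T2 a' b' x)
      have h8 : v2 (T2 (a' : E) b' x) ≤ ⨆ b' : B2, v2 (T2 a' b' x) :=
        le_ciSup (bddAbove_shap hB2c T2 hcontb2 hv2 a' x) ⟨b', hb'⟩
      linarith
    linarith
  have h9 : shapley A B T v x - (c + L * (hA + hB) + ε) ≤ shapley A2 B2 T2 v2 x := by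
    simp only [shapley]
    exact le_ciInf key
  linarith

private lemma shapley_lip {A B : Set E}
    (hAne : A.Nonempty) (hBne : B.Nonempty) (hBc : IsCompact B)
    (T : E → E → X → X)
    (hcontb : ∀ x : X, ∀ a : E, Continuous fun b => T a b x)
    (d : X → X → ℝ)
    (hTnexp : ∀ a b : E, ∀ x y, d (T a b x) (T a b y) ≤ d x y)
    {v : X → ℝ} (hv : ∀ x y, v x - v y ≤ d x y) (hvc : Continuous v)
    (hbb : ∀ x : X, BddBelow (Set.range fun a : A => ⨆ b : B, v (T a b x)))
    (x y : X) :
    shapley A B T v x - shapley A B T v y ≤ d x y := by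
  haveI : Nonempty A := hAne.to_subtype
  haveI : Nonempty B := hBne.to_subtype
  have key : ∀ a : A, shapley A B T v x - d x y ≤ ⨆ b : B, v (T a b y) := by
    intro a
    have h1 : shapley A B T v x ≤ ⨆ b : B, v (T a b x) := by
      simp only [shapley]
      exact ciInf_le (hbb x) a
    have h2 : (⨆ b : B, v (T a b x)) ≤ (⨆ b : B, v (T a b y)) + d x y := by
      refine ciSup_le fun b => ?_
      have h3 : v (T a b x) - v (T a b y) ≤ d x y := (hv _ _).trans (hTnexp a b x y)
      have h4 : v (T a b y) ≤ ⨆ b : B, v (T a b y) :=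
        le_ciSup (bddAbove_shap hBc T hcontb hvc a y) b
      linarith
    linarith
  have h5 : shapley A B T v x - d x y ≤ shapley A B T v y := by
    simp only [shapley]
    exact le_ciInf key
  linarith
end aux

/-- Lipschitz continuity of the competitive spectral radius with respect
to the families of operators and to the action spaces (Hausdorff distance).
The hemi-metric space `(X, d)` is encoded by a metric space `X` whose distance is the
symmetrization `d°` of the hemi-metric `d`. -/
theorem stmt_7 {X : Type*} [MetricSpace X] [Nonempty X] {E : Type*} [MetricSpace E]
    (d : X → X → ℝ)
    (htri : ∀ x y z, d x z ≤ d x y + d y z)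
    (hcompat : ∀ x y, dist x y = max (d x y) (d y x))
    (T T' : E → E → X → X)
    (hTnexp : ∀ a b : E, ∀ x y, d (T a b x) (T a b y) ≤ d x y)
    (hT'nexp : ∀ a b : E, ∀ x y, d (T' a b x) (T' a b y) ≤ d x y)
    (hconta : ∀ x : X, ∀ b : E, Continuous (fun a => T a b x))
    (hcontb : ∀ x : X, ∀ a : E, Continuous (fun b => T a b x))
    (hcont'a : ∀ x : X, ∀ b : E, Continuous (fun a => T' a b x))
    (hcont'b : ∀ x : X, ∀ a : E, Continuous (fun b => T' a b x))
    (hcomp : ∀ A B : Set E, IsCompact A → IsCompact B → ∀ K : Set X, IsCompact K →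
      IsCompact {z | ∃ a ∈ A, ∃ b ∈ B, ∃ x ∈ K, z = T a b x})
    (hcomp' : ∀ A B : Set E, IsCompact A → IsCompact B → ∀ K : Set X, IsCompact K →
      IsCompact {z | ∃ a ∈ A, ∃ b ∈ B, ∃ x ∈ K, z = T' a b x})
    (ε L : ℝ) (hε : 0 ≤ ε) (hL : 0 < L)
    (hclose : ∀ a b a' b' : E, ∀ x : X,
      dist (T a b x) (T' a' b' x) ≤ L * (dist a a' + dist b b') + ε)
    (A A' B B' : Set E)
    (hAc : IsCompact A) (hAne : A.Nonempty) (hA'c : IsCompact A') (hA'ne : A'.Nonempty)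
    (hBc : IsCompact B) (hBne : B.Nonempty) (hB'c : IsCompact B') (hB'ne : B'.Nonempty)
    (xb : X) (ρ ρ' : ℝ)
    (hρ : Tendsto (fun k : ℕ => (shapley A B T)^[k] (fun y => d y xb) xb / (k : ℝ))
      atTop (nhds ρ))
    (hρ' : Tendsto (fun k : ℕ => (shapley A' B' T')^[k] (fun y => d y xb) xb / (k : ℝ))
      atTop (nhds ρ')) :
    |ρ - ρ'| ≤ L * (Metric.hausdorffDist A A' + Metric.hausdorffDist B B') + ε := by
  set hdA := Metric.hausdorffDist A A' with hdAdef
  set hdB := Metric.hausdorffDist B B' with hdBdef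
  set C := L * (hdA + hdB) + ε with hCdef
  set v0 : X → ℝ := fun y => d y xb with hv0def
  have hv0 : ∀ x y, v0 x - v0 y ≤ d x y := fun x y => by
    have := htri x y xb
    simp only [hv0def]
    linarith
  -- Hausdorff-distance halves
  have hA'A : ∀ a' ∈ A', ∃ a ∈ A, dist a a' ≤ hdA := by
    intro a' ha'
    obtain ⟨a, ha, h⟩ := hausdorff_half A' A hA'c hA'ne hAc hAne a' ha'
    exact ⟨a, ha, by rwa [hdAdef, Metric.hausdorffDist_comm] ⟩
  have hAA' : ∀ a ∈ A, ∃ a' ∈ A', dist a' a ≤ hdA :=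
    hausdorff_half A A' hAc hAne hA'c hA'ne
  have hB'B : ∀ b' ∈ B', ∃ b ∈ B, dist b' b ≤ hdB := by
    intro b' hb'
    obtain ⟨b, hb, h⟩ := hausdorff_half B' B hB'c hB'ne hBc hBne b' hb'
    exact ⟨b, hb, by rw [dist_comm]; rwa [hdBdef, Metric.hausdorffDist_comm]⟩
  have hBB' : ∀ b ∈ B, ∃ b' ∈ B', dist b b' ≤ hdB := by
    intro b hb
    obtain ⟨b', hb', h⟩ := hausdorff_half B B' hBc hBne hB'c hB'ne b hb
    exact ⟨b', hb', by rwa [dist_comm]⟩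
  have hclose' : ∀ a' b' a b : E, ∀ x : X,
      dist (T' a' b' x) (T a b x) ≤ L * (dist a' a + dist b' b) + ε := by
    intro a' b' a b x
    rw [dist_comm, dist_comm a' a, dist_comm b' b]
    exact hclose a b a' b' x
  -- BddBelow providers
  have hbbT : ∀ (v : X → ℝ), Continuous v → ∀ x : X,
      BddBelow (Set.range fun a : A => ⨆ b : B, v (T a b x)) := fun v hv x =>
    bddBelow_shap hBc hBne T hcontb hv x (hcomp A B hAc hBc {x} isCompact_singleton)
  have hbbT' : ∀ (v : X → ℝ), Continuous v → ∀ x : X,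
      BddBelow (Set.range fun a : A' => ⨆ b : B', v (T' a b x)) := fun v hv x =>
    bddBelow_shap hB'c hB'ne T' hcont'b hv x (hcomp' A' B' hA'c hB'c {x} isCompact_singleton)
  -- the key induction
  have main : ∀ k : ℕ,
      (∀ x y, (shapley A B T)^[k] v0 x - (shapley A B T)^[k] v0 y ≤ d x y) ∧
      (∀ x y, (shapley A' B' T')^[k] v0 x - (shapley A' B' T')^[k] v0 y ≤ d x y) ∧
      (∀ x, |(shapley A B T)^[k] v0 x - (shapley A' B' T')^[k] v0 x| ≤ (k : ℝ) * C) := by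
    intro k
    induction k with
    | zero =>
      refine ⟨by simpa using hv0, by simpa using hv0, fun x => by simp⟩
    | succ k ih =>
      obtain ⟨ih1, ih2, ih3⟩ := ih
      have hvd1 := lip1_to_dist hcompat ih1
      have hvd2 := lip1_to_dist hcompat ih2
      have hc1 := lip_continuous hvd1
      have hc2 := lip_continuous hvd2
      refine ⟨?_, ?_, ?_⟩
      · intro x y
        rw [Function.iterate_succ_apply']
        exact shapley_lip hAne hBne hBc T hcontb d hTnexp ih1 hc1 (hbbT _ hc1) x y
      · intro x y
        rw [Function.iterate_succ_apply']
        exact shapley_lip hA'ne hB'ne hB'c T' hcont'b d hT'nexp ih2 hc2 (hbbT' _ hc2) x y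
      · intro x
        rw [Function.iterate_succ_apply', Function.iterate_succ_apply']
        have d1 : shapley A B T ((shapley A B T)^[k] v0) x
            ≤ shapley A' B' T' ((shapley A' B' T')^[k] v0) x + ((k : ℝ) * C + L * (hdA + hdB) + ε) :=
          shapley_le hAne hA'ne hBne hB'ne hB'c T T' hcont'b hvd1 hc2
            (fun z => (abs_le.1 (ih3 z)).2) hA'A hBB' hL.le hclose x (hbbT _ hc1 x)
        have d2 : shapley A' B' T' ((shapley A' B' T')^[k] v0) x
            ≤ shapley A B T ((shapley A B T)^[k] v0) x + ((k : ℝ) * C + L * (hdA + hdB) + ε) :=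
          shapley_le hA'ne hAne hB'ne hBne hBc T' T hcontb hvd2 hc1
            (fun z => by have := (abs_le.1 (ih3 z)).1; linarith)
            (fun a ha => hAA' a ha) (fun b' hb' => hB'B b' hb') hL.le hclose' x (hbbT' _ hc2 x)
        rw [abs_le]
        push_cast
        constructor <;> [skip; skip] <;> simp only [hCdef] at * <;> nlinarith [d1, d2]
  -- pass to the limit
  have hdiff : Tendsto (fun k : ℕ =>
      ((shapley A B T)^[k] v0 xb - (shapley A' B' T')^[k] v0 xb) / (k : ℝ))
      atTop (nhds (ρ - ρ')) := by
    have h := hρ.sub hρ'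
    simpa [sub_div] using h
  have habs := hdiff.abs
  refine le_of_tendsto habs ?_
  filter_upwards [Filter.eventually_gt_atTop 0] with k hk
  have hk' : (0 : ℝ) < (k : ℝ) := by exact_mod_cast hk
  have h1 := (main k).2.2 xb
  rw [abs_div, abs_of_pos hk']
  calc |(shapley A B T)^[k] v0 xb - (shapley A' B' T')^[k] v0 xb| / (k : ℝ)
      ≤ ((k : ℝ) * C) / (k : ℝ) := by
        exact div_le_div_of_nonneg_right h1 hk'.le
    _ = C := mul_div_cancel_left₀ C (ne_of_gt hk')
end

section
/- Let C ⊆ ℝⁿ be a closed, convex, pointed cone with nonempty interior and let 𝒫 be a part of End(int C). Then the map sending a pair (𝒜,ℬ) of nonempty compact subsets of 𝒫, equipped with the Hausdorff distance induced by the Thompson metric on 𝒫, to the competitive spectral radius ρ(𝒜,ℬ) of the matrix multiplication game with operators T_{AB}(x) = xAB, is 1-Lipschitz: |ρ(𝒜,ℬ) − ρ(𝒜',ℬ')| ≤ δ_H(𝒜,𝒜') + δ_H(ℬ,ℬ'). -/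
open Set Filter

/-- The Funk hemi-metric on a cone `C`. -/
noncomputable def funk {n : ℕ} (C : Set (Fin n → ℝ)) (x y : Fin n → ℝ) : ℝ :=
  Real.log (sInf {l : ℝ | 0 < l ∧ l • y - x ∈ C})

/-- `End(int C)`: matrices whose right action on row vectors preserves the interior
of the cone `C`. -/
def EndInt {n : ℕ} (C : Set (Fin n → ℝ)) : Set (Matrix (Fin n) (Fin n) ℝ) :=
  {A | ∀ x ∈ interior C, Matrix.vecMul x A ∈ interior C}

/-- The order on operators: `A ≤ A'` iff `x A ≤_C x A'` for all `x ∈ int C`. -/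
def opLE {n : ℕ} (C : Set (Fin n → ℝ)) (A A' : Matrix (Fin n) (Fin n) ℝ) : Prop :=
  ∀ x ∈ interior C, Matrix.vecMul x A' - Matrix.vecMul x A ∈ C

/-- Comparability of operators: `μ A ≤ A' ≤ λ A` for some `μ, λ > 0`. -/
def opComparable {n : ℕ} (C : Set (Fin n → ℝ)) (A A' : Matrix (Fin n) (Fin n) ℝ) : Prop :=
  ∃ μ : ℝ, 0 < μ ∧ ∃ l : ℝ, 0 < l ∧ opLE C (μ • A) A' ∧ opLE C A' (l • A)

/-- A part of `End(int C)`: a comparability class. -/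
def IsOpPart {n : ℕ} (C : Set (Fin n → ℝ)) (P : Set (Matrix (Fin n) (Fin n) ℝ)) : Prop :=
  ∃ A₀ ∈ EndInt C, P = {A ∈ EndInt C | opComparable C A₀ A}

/-- The Funk metric on operators. -/
noncomputable def opFunk {n : ℕ} (C : Set (Fin n → ℝ))
    (A A' : Matrix (Fin n) (Fin n) ℝ) : ℝ :=
  Real.log (sInf {l : ℝ | 0 < l ∧
    ∀ x ∈ interior C, l • Matrix.vecMul x A' - Matrix.vecMul x A ∈ C})

/-- The Thompson metric on operators. -/
noncomputable def opThompson {n : ℕ} (C : Set (Fin n → ℝ))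
    (A A' : Matrix (Fin n) (Fin n) ℝ) : ℝ :=
  max (opFunk C A A') (opFunk C A' A)

/-- The Hausdorff distance induced by the Thompson metric on sets of operators. -/
noncomputable def hausT {n : ℕ} (C : Set (Fin n → ℝ))
    (A A' : Set (Matrix (Fin n) (Fin n) ℝ)) : ℝ :=
  max (⨆ M : A, ⨅ M' : A', opThompson C M M') (⨆ M' : A', ⨅ M : A, opThompson C M M')

/-- The Shapley operator of the matrix multiplication game with `T_{AB}(x) = x A B`. -/
noncomputable def mshapley {n : ℕ} (A B : Set (Matrix (Fin n) (Fin n) ℝ)) :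
    ((Fin n → ℝ) → ℝ) → (Fin n → ℝ) → ℝ :=
  fun v x => ⨅ M : A, ⨆ N : B,
    v (Matrix.vecMul (Matrix.vecMul x (M : Matrix (Fin n) (Fin n) ℝ)) (N : Matrix (Fin n) (Fin n) ℝ))


/-!
The actions in a compact subset of a part of `End(int C)` are uniformly comparable: inside the
finite-dimensional span of the face of the operator cone through the part, the base point `A₀`
is an interior point, and compactness turns the local bounds `μ A₀ ≤ M ≤ λ A₀` into global
ones. Hence the Thompson metric is bounded on the action sets and a Funk-nonexpansive `v` is
bounded on `{x A B}`, so the infima and suprema defining `δ_H` and the Shapley operators are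
taken over bounded families.

Each `T_{AB}` is Funk-nonexpansive and `Funk(x A B, x A' B') ≤ d_T(A, A') + d_T(B, B')`. So the
Shapley operators preserve Funk-nonexpansiveness, and answering an action of one game by an action
of the other game within Hausdorff distance `+ ε` shows that `S` and `S'` map two functions at sup
distance `c` to functions at sup distance at most `c + δ_H(𝒜, 𝒜') + δ_H(ℬ, ℬ')`. Iterating from
`Funk(·, x̄)` gives `|S^k v (x̄) - S'^k v (x̄)| ≤ k (δ_H(𝒜, 𝒜') + δ_H(ℬ, ℬ'))`; divide by `k`.
-/

open Topology Matrix

section InfSup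

variable {α β α' β' : Type*}

lemma exists_lt_ciSup_ciInf_add [Nonempty β] {f : α → β → ℝ} {m B : ℝ}
    (hm : ∀ a b, m ≤ f a b) (hB : ∀ a b, f a b ≤ B) (a : α) {ε : ℝ} (hε : 0 < ε) :
    ∃ b, f a b < (⨆ a, ⨅ b, f a b) + ε := by
  have hbdd : BddAbove (range fun a => ⨅ b, f a b) := ⟨B, by
    rintro _ ⟨a, rfl⟩
    exact (ciInf_le ⟨m, by rintro _ ⟨b, rfl⟩; exact hm a b⟩ (Classical.arbitrary β)).trans
      (hB _ _)⟩
  exact exists_lt_of_ciInf_lt ((le_ciSup hbdd a).trans_lt (lt_add_of_pos_right _ hε))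

lemma ciInf_ciSup_le_ciInf_ciSup_add [Nonempty α] [Nonempty β] [Nonempty α'] [Nonempty β']
    {f : α → β → ℝ} {f' : α' → β' → ℝ} {B B' c : ℝ} (hf : ∀ a b, |f a b| ≤ B)
    (hf' : ∀ a' b', f' a' b' ≤ B')
    (h : ∀ a', ∀ ε > 0, ∃ a, ∀ b, ∃ b', f a b ≤ f' a' b' + c + ε) :
    ⨅ a, ⨆ b, f a b ≤ (⨅ a', ⨆ b', f' a' b') + c := by
  refine le_of_forall_pos_lt_add fun ε hε => ?_
  obtain ⟨a', ha'⟩ := exists_lt_of_ciInf_lt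
    (lt_add_of_pos_right (⨅ a', ⨆ b', f' a' b') (half_pos hε))
  obtain ⟨a, ha⟩ := h a' (ε / 2) (half_pos hε)
  have hsup : ⨆ b, f a b ≤ (⨆ b', f' a' b') + c + ε / 2 := ciSup_le fun b => by
    obtain ⟨b', hb'⟩ := ha b
    have : f' a' b' ≤ ⨆ b', f' a' b' :=
      le_ciSup ⟨B', by rintro _ ⟨b', rfl⟩; exact hf' a' b'⟩ b'
    linarith
  have hinf : ⨅ a, ⨆ b, f a b ≤ ⨆ b, f a b := by
    refine ciInf_le ⟨-B, ?_⟩ a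
    rintro _ ⟨a, rfl⟩
    exact (neg_le_of_abs_le (hf a (Classical.arbitrary β))).trans
      (le_ciSup ⟨B, by rintro _ ⟨b, rfl⟩; exact (le_abs_self _).trans (hf a b)⟩ _)
  linarith

lemma abs_sub_le_of_tendsto_div {a b : ℕ → ℝ} {ρ ρ' δ : ℝ}
    (ha : Tendsto (fun k : ℕ => a k / k) atTop (𝓝 ρ))
    (hb : Tendsto (fun k : ℕ => b k / k) atTop (𝓝 ρ')) (hab : ∀ k, |a k - b k| ≤ k * δ) :
    |ρ - ρ'| ≤ δ := by
  refine le_of_tendsto (ha.sub hb).abs (eventually_atTop.2 ⟨1, fun k hk => ?_⟩)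
  have hk : (0 : ℝ) < k := by exact_mod_cast hk
  rw [← sub_div, abs_div, abs_of_pos hk, div_le_iff₀ hk, mul_comm]
  exact hab k

end InfSup

namespace PointedCone

variable {E : Type*} [AddCommGroup E] [Module ℝ E]

def ofConvex {C : Set E} (hconv : Convex ℝ C) (hcone : ∀ x ∈ C, ∀ r : ℝ, 0 ≤ r → r • x ∈ C)
    (hne : C.Nonempty) : PointedCone ℝ E where
  carrier := C
  zero_mem' := by
    obtain ⟨x, hx⟩ := hne
    simpa using hcone x hx 0 le_rfl
  add_mem' {x y} hx hy := by
    convert hcone _ (hconv hx hy (by norm_num : (0 : ℝ) ≤ 1 / 2) (by norm_num : (0 : ℝ) ≤ 1 / 2)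
      (by norm_num)) 2 (by norm_num) using 1
    module
  smul_mem' c x hx := hcone x hx c c.2

variable {J : PointedCone ℝ E} {u : E}

lemma abs_mul_smul_add_smul_mem {c : ℝ} {Δ : E} (h₁ : c • u - Δ ∈ J) (h₂ : c • u + Δ ∈ J)
    (a : ℝ) : (|a| * c) • u + a • Δ ∈ J := by
  rcases le_or_gt 0 a with ha | ha
  · rw [abs_of_nonneg ha]
    convert J.smul_mem ha h₂ using 1
    module
  · rw [abs_of_neg ha]
    convert J.smul_mem (neg_nonneg.2 ha.le) h₁ using 1
    module

variable (J u) in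
def orderBounded : Submodule ℝ E where
  carrier := {Δ | ∃ c : ℝ, c • u - Δ ∈ J ∧ c • u + Δ ∈ J}
  zero_mem' := ⟨0, by simp⟩
  add_mem' := by
    rintro Δ Δ' ⟨c, h₁, h₂⟩ ⟨c', h₁', h₂'⟩
    refine ⟨c + c', ?_, ?_⟩
    · convert J.add_mem h₁ h₁' using 1; module
    · convert J.add_mem h₂ h₂' using 1; module
  smul_mem' := by
    rintro r Δ ⟨c, h₁, h₂⟩
    refine ⟨|r| * c, ?_, abs_mul_smul_add_smul_mem h₁ h₂ r⟩
    simpa [sub_eq_add_neg] using abs_mul_smul_add_smul_mem h₁ h₂ (-r)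

variable (J) in
/-- So that `funk C x y = Real.log (sInf (C.funkSet x y))`. -/
def funkSet (x y : E) : Set ℝ := {l | 0 < l ∧ l • y - x ∈ J}

variable {x y z : E} {l l' : ℝ}

lemma funkSet_bddBelow : BddBelow (J.funkSet x y) := ⟨0, fun _ hl => hl.1.le⟩

lemma mul_mem_funkSet (hl : l ∈ J.funkSet x y) (hl' : l' ∈ J.funkSet y z) :
    l * l' ∈ J.funkSet x z := by
  refine ⟨mul_pos hl.1 hl'.1, ?_⟩
  convert J.add_mem (J.smul_mem hl.1.le hl'.2) hl.2 using 1
  module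

lemma one_le_mul_of_mem_funkSet (hx : -x ∉ J) (hl : l ∈ J.funkSet x y)
    (hl' : l' ∈ J.funkSet y x) : 1 ≤ l * l' := by
  by_contra! h
  apply hx
  convert J.smul_mem (inv_nonneg.2 (sub_pos.2 h).le) (mul_mem_funkSet hl hl').2 using 1
  have : 1 - l * l' ≠ 0 := (sub_pos.2 h).ne'
  match_scalars
  field_simp
  ring

lemma funkSet_subset_funkSet_map (f : E →ₗ[ℝ] E) (hf : ∀ z ∈ J, f z ∈ J) :
    J.funkSet x y ⊆ J.funkSet (f x) (f y) :=
  fun _ hl => ⟨hl.1, by simpa using hf _ hl.2⟩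

variable [TopologicalSpace E]

variable (J) in
structure IsProper : Prop where
  isClosed : IsClosed (J : Set E)
  salient : ∀ x ∈ J, -x ∈ J → x = 0
  interior_nonempty : (interior (J : Set E)).Nonempty

lemma IsProper.neg_notMem [ContinuousSMul ℝ E] [Nontrivial E] (hJ : J.IsProper)
    (hx : x ∈ interior (J : Set E)) : -x ∉ J := by
  intro hnx
  obtain rfl := hJ.salient x (interior_subset hx) hnx
  obtain ⟨z, hz⟩ := exists_ne (0 : E)
  have hev : ∀ᶠ t in 𝓝 (0 : ℝ), t • z ∈ J :=
    ((by fun_prop : Continuous fun t : ℝ => t • z).tendsto' 0 0 (by simp)).eventually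
      (mem_interior_iff_mem_nhds.1 hx)
  have hev' : ∀ᶠ t in 𝓝 (0 : ℝ), (-t) • z ∈ J :=
    (continuous_neg.tendsto' (0 : ℝ) 0 neg_zero).eventually hev
  obtain ⟨t, ⟨ht, hnt⟩, htpos⟩ := ((hev.and hev').and_frequently (frequently_gt_nhds 0)).exists
  have := hJ.salient _ ht (by rwa [← neg_smul])
  exact hz ((smul_eq_zero.1 this).resolve_left htpos.ne')

variable [IsTopologicalAddGroup E] [ContinuousSMul ℝ E]

lemma funkSet_nonempty (hy : y ∈ interior (J : Set E)) (x : E) : (J.funkSet x y).Nonempty := by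
  have hev : ∀ᶠ t in 𝓝 (0 : ℝ), y - t • x ∈ J :=
    ((by fun_prop : Continuous fun t : ℝ => y - t • x).tendsto' 0 y (by simp)).eventually
      (mem_interior_iff_mem_nhds.1 hy)
  obtain ⟨t, ht, htpos⟩ := (hev.and_frequently (frequently_gt_nhds (0 : ℝ))).exists
  refine ⟨t⁻¹, inv_pos.2 htpos, ?_⟩
  convert J.smul_mem (inv_nonneg.2 htpos.le) ht using 1
  match_scalars <;> field_simp

variable [T2Space E] [FiniteDimensional ℝ E]

theorem eventually_smul_add_mem (hu : u ∈ J) {ε : ℝ} (hε : 0 < ε) :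
    ∀ᶠ Δ in 𝓝 (0 : E), Δ ∈ J.orderBounded u → ε • u + Δ ∈ J := by
  -- Coordinates in a basis of `J.orderBounded u`, extended to `E`, are continuous, and each
  -- basis vector lies between `-c u` and `c u`.
  let b := Module.finBasis ℝ (J.orderBounded u)
  choose c hc using fun i => (b i).2
  obtain ⟨g, hg⟩ := LinearMap.exists_extend b.equivFun.toLinearMap
  have hgc : Continuous g := g.continuous_of_finiteDimensional
  let Φ : E → ℝ := fun Δ => ∑ i, |g Δ i| * c i
  have hΦ : ∀ᶠ Δ in 𝓝 (0 : E), Φ Δ < ε :=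
    (by fun_prop : Continuous Φ).continuousAt.eventually_lt continuousAt_const (by simpa [Φ])
  filter_upwards [hΦ] with Δ hΦΔ hΔ
  have hcoord : g Δ = b.equivFun ⟨Δ, hΔ⟩ := LinearMap.congr_fun hg ⟨Δ, hΔ⟩
  have hrepr : Δ = ∑ i, g Δ i • (b i : E) := by
    have h := congrArg Subtype.val (b.sum_equivFun ⟨Δ, hΔ⟩)
    rw [Submodule.coe_sum] at h
    rw [hcoord]
    exact h.symm
  have hsplit : ε • u + Δ = ∑ i, ((|g Δ i| * c i) • u + g Δ i • (b i : E)) + (ε - Φ Δ) • u := by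
    rw [Finset.sum_add_distrib, ← Finset.sum_smul, ← hrepr]
    module
  rw [hsplit]
  exact J.add_mem (J.sum_mem fun i _ => abs_mul_smul_add_smul_mem (hc i).1 (hc i).2 _)
    (J.smul_mem (by linarith) hu)

theorem exists_smul_sub_mem_of_isCompact {K : Set E} (hK : IsCompact K) (hu : u ∈ J)
    (hcomp : ∀ M ∈ K, ∃ μ : ℝ, 0 < μ ∧ ∃ l : ℝ, 0 < l ∧ M - μ • u ∈ J ∧ l • u - M ∈ J) :
    ∃ L : ℝ, 0 < L ∧ ∀ M ∈ K, ∀ M' ∈ K, L • M' - M ∈ J := by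
  have hKV : ∀ M ∈ K, M ∈ J.orderBounded u := by
    intro M hM
    obtain ⟨μ, hμ, l, hl, hlow, hup⟩ := hcomp M hM
    have hMJ : M ∈ J := by simpa using J.add_mem hlow (J.smul_mem hμ.le hu)
    exact ⟨l, hup, J.add_mem (J.smul_mem hl.le hu) hMJ⟩
  -- One small `x > 0` with `x u ≤ M ≤ x⁻¹ u` for all `M ∈ K`, by compactness in `(x, M)`.
  have hloc : ∀ M₀ ∈ K, ∀ᶠ z : ℝ × E in 𝓝 (0, M₀),
      z.2 ∈ K → z.2 - z.1 • u ∈ J ∧ u - z.1 • z.2 ∈ J := by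
    intro M₀ hM₀
    obtain ⟨μ, hμ, -, -, hlow, -⟩ := hcomp M₀ hM₀
    have hdiff : Tendsto (fun z : ℝ × E => z.2 - M₀) (𝓝 (0, M₀)) (𝓝 0) :=
      (by fun_prop : Continuous fun z : ℝ × E => z.2 - M₀).tendsto' _ _ (by simp)
    have hsmul : Tendsto (fun z : ℝ × E => -(z.1 • z.2)) (𝓝 (0, M₀)) (𝓝 0) :=
      (by fun_prop : Continuous fun z : ℝ × E => -(z.1 • z.2)).tendsto' _ _ (by simp)
    have hsmall : ∀ᶠ z : ℝ × E in 𝓝 (0, M₀), z.1 < μ / 2 :=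
      continuous_fst.continuousAt.eventually_lt continuousAt_const (by simpa using hμ)
    filter_upwards [hdiff.eventually (eventually_smul_add_mem hu (half_pos hμ)),
      hsmul.eventually (eventually_smul_add_mem hu one_pos), hsmall] with ⟨x, M⟩ h₁ h₂ hx hM
    constructor
    · have := J.add_mem (J.add_mem hlow (h₁ (Submodule.sub_mem _ (hKV M hM) (hKV M₀ hM₀))))
        (J.smul_mem (by linarith : 0 ≤ μ / 2 - x) hu)
      convert this using 1
      module
    · convert h₂ (Submodule.neg_mem _ (Submodule.smul_mem _ x (hKV M hM))) using 1
      module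
  obtain ⟨x, hxK, hx⟩ := ((hK.eventually_forall_of_forall_eventually
    (P := fun x M => M ∈ K → M - x • u ∈ J ∧ u - x • M ∈ J) hloc).and_frequently
    (frequently_gt_nhds (0 : ℝ))).exists
  refine ⟨x⁻¹ * x⁻¹, by positivity, fun M hM M' hM' => ?_⟩
  have := J.add_mem (J.smul_mem (by positivity : 0 ≤ x⁻¹ * x⁻¹) (hxK M' hM' hM').1)
    (J.smul_mem (by positivity : 0 ≤ x⁻¹) (hxK M hM hM).2)
  convert this using 1
  match_scalars <;> field_simp
  ring

end PointedCone

section Funk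

variable {n : ℕ} {C : PointedCone ℝ (Fin n → ℝ)} {x y z : Fin n → ℝ}
  {M : Matrix (Fin n) (Fin n) ℝ}

lemma vecMul_mem_of_mem_endInt (hC : C.IsProper) (hM : M ∈ EndInt C) (hx : x ∈ C) :
    x ᵥ* M ∈ C := by
  have hx' : x ∈ closure (interior (C : Set (Fin n → ℝ))) := by
    rwa [C.convex.closure_interior_eq_closure_of_nonempty_interior hC.interior_nonempty,
      hC.isClosed.closure_eq]
  have := map_mem_closure (by fun_prop : Continuous fun y : Fin n → ℝ => y ᵥ* M) hx'
    fun y hy => interior_subset (hM y hy)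
  rwa [hC.isClosed.closure_eq] at this

variable [NeZero n]

lemma sInf_funkSet_pos (hC : C.IsProper) (hx : x ∈ interior (C : Set (Fin n → ℝ)))
    (hy : y ∈ interior (C : Set (Fin n → ℝ))) : 0 < sInf (C.funkSet x y) := by
  obtain ⟨l', hl'⟩ := C.funkSet_nonempty hx y
  calc 0 < 1 / l' := one_div_pos.2 hl'.1
    _ ≤ sInf (C.funkSet x y) := le_csInf (C.funkSet_nonempty hy x) fun l hl => by
      rw [div_le_iff₀ hl'.1]
      exact PointedCone.one_le_mul_of_mem_funkSet (hC.neg_notMem hx) hl hl'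

lemma funk_le_log_sInf (hC : C.IsProper) (hx : x ∈ interior (C : Set (Fin n → ℝ)))
    (hy : y ∈ interior (C : Set (Fin n → ℝ))) {T : Set ℝ} (hT : T.Nonempty)
    (hTC : T ⊆ C.funkSet x y) : funk C x y ≤ Real.log (sInf T) :=
  Real.log_le_log (sInf_funkSet_pos hC hx hy)
    (csInf_le_csInf PointedCone.funkSet_bddBelow hT hTC)

lemma funk_self (hC : C.IsProper) (hx : x ∈ interior (C : Set (Fin n → ℝ))) :
    funk C x x = 0 := by
  have h1 : (1 : ℝ) ∈ C.funkSet x x := ⟨one_pos, by simp⟩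
  have hleast : IsLeast (C.funkSet x x) 1 := ⟨h1, fun l hl => by
    simpa using PointedCone.one_le_mul_of_mem_funkSet (hC.neg_notMem hx) hl h1⟩
  show Real.log (sInf (C.funkSet x x)) = 0
  rw [hleast.csInf_eq, Real.log_one]

lemma funk_triangle (hC : C.IsProper) (hx : x ∈ interior (C : Set (Fin n → ℝ)))
    (hy : y ∈ interior (C : Set (Fin n → ℝ))) (hz : z ∈ interior (C : Set (Fin n → ℝ))) :
    funk C x z ≤ funk C x y + funk C y z := by
  have hxy := sInf_funkSet_pos hC hx hy
  have hyz := sInf_funkSet_pos hC hy hz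
  have hmul : ∀ l ∈ C.funkSet x y, ∀ l' ∈ C.funkSet y z, sInf (C.funkSet x z) ≤ l * l' :=
    fun l hl l' hl' => csInf_le PointedCone.funkSet_bddBelow (PointedCone.mul_mem_funkSet hl hl')
  have hmul' : ∀ l' ∈ C.funkSet y z, sInf (C.funkSet x z) ≤ sInf (C.funkSet x y) * l' :=
    fun l' hl' => by
      rw [← div_le_iff₀ hl'.1]
      exact le_csInf (C.funkSet_nonempty hy x) fun l hl => (div_le_iff₀ hl'.1).2 (hmul l hl l' hl')
  have : sInf (C.funkSet x z) ≤ sInf (C.funkSet x y) * sInf (C.funkSet y z) := by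
    rw [← div_le_iff₀' hxy]
    exact le_csInf (C.funkSet_nonempty hz y) fun l' hl' => (div_le_iff₀' hxy).2 (hmul' l' hl')
  calc funk C x z ≤ Real.log (sInf (C.funkSet x y) * sInf (C.funkSet y z)) :=
        Real.log_le_log (sInf_funkSet_pos hC hx hz) this
    _ = funk C x y + funk C y z := Real.log_mul hxy.ne' hyz.ne'

lemma funk_vecMul_le (hC : C.IsProper) (hx : x ∈ interior (C : Set (Fin n → ℝ)))
    (hy : y ∈ interior (C : Set (Fin n → ℝ))) (hM : M ∈ EndInt C) :
    funk C (x ᵥ* M) (y ᵥ* M) ≤ funk C x y :=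
  funk_le_log_sInf hC (hM x hx) (hM y hy) (C.funkSet_nonempty hy x)
    (C.funkSet_subset_funkSet_map M.vecMulLinear fun _ => vecMul_mem_of_mem_endInt hC hM)

end Funk

section Operators

variable {n : ℕ}

/-- So that `opFunk C M M' = Real.log (sInf (opFunkSet C M M'))`. -/
def opFunkSet (C : Set (Fin n → ℝ)) (M M' : Matrix (Fin n) (Fin n) ℝ) : Set ℝ :=
  {l | 0 < l ∧ ∀ x ∈ interior C, l • x ᵥ* M' - x ᵥ* M ∈ C}

def opCone (C : PointedCone ℝ (Fin n → ℝ)) : PointedCone ℝ (Matrix (Fin n) (Fin n) ℝ) where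
  carrier := {M | ∀ x ∈ interior (C : Set (Fin n → ℝ)), x ᵥ* M ∈ C}
  add_mem' hM hN x hx := by
    rw [vecMul_add]
    exact C.add_mem (hM x hx) (hN x hx)
  zero_mem' x _ := by
    rw [vecMul_zero]
    exact C.zero_mem
  smul_mem' c M hM x hx := by
    rw [vecMul_smul]
    exact Submodule.smul_mem C c (hM x hx)

lemma opThompson_comm (C : Set (Fin n → ℝ)) (M M' : Matrix (Fin n) (Fin n) ℝ) :
    opThompson C M M' = opThompson C M' M :=
  max_comm _ _

lemma hausT_comm (C : Set (Fin n → ℝ)) (X Y : Set (Matrix (Fin n) (Fin n) ℝ)) :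
    hausT C X Y = hausT C Y X := by
  rw [hausT, hausT, max_comm]
  simp only [opThompson_comm C]

/-- Real `⨆`/`⨅` of unbounded families are junk values; this hypothesis supplies the bounds. -/
structure UniformlyComparable (C : Set (Fin n → ℝ)) (K : Set (Matrix (Fin n) (Fin n) ℝ))
    (L : ℝ) : Prop where
  subset_endInt : K ⊆ EndInt C
  mem_opFunkSet : ∀ M ∈ K, ∀ M' ∈ K, L ∈ opFunkSet C M M'

theorem IsOpPart.exists_uniformlyComparable {C : PointedCone ℝ (Fin n → ℝ)}
    {P K : Set (Matrix (Fin n) (Fin n) ℝ)} (hP : IsOpPart C P) (hKP : K ⊆ P) (hK : IsCompact K) :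
    ∃ L, UniformlyComparable C K L := by
  obtain ⟨A₀, hA₀, rfl⟩ := hP
  obtain ⟨L, hL, hKL⟩ := (opCone C).exists_smul_sub_mem_of_isCompact hK
    (fun x hx => interior_subset (hA₀ x hx)) fun M hM => by
      obtain ⟨μ, hμ, l, hl, hlow, hup⟩ := (hKP hM).2
      exact ⟨μ, hμ, l, hl, fun x hx => by simpa [vecMul_sub] using hlow x hx,
        fun x hx => by simpa [vecMul_sub] using hup x hx⟩
  refine ⟨L, fun M hM => (hKP hM).1, fun M hM M' hM' => ⟨hL, fun x hx => ?_⟩⟩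
  simpa [vecMul_sub, vecMul_smul] using hKL M hM M' hM' x hx

lemma UniformlyComparable.vecMul_vecMul_mem_interior {C : Set (Fin n → ℝ)}
    {K : Set (Matrix (Fin n) (Fin n) ℝ)} {L : ℝ} (hK : UniformlyComparable C K L)
    {x : Fin n → ℝ} {M N : Matrix (Fin n) (Fin n) ℝ} (hx : x ∈ interior C) (hM : M ∈ K)
    (hN : N ∈ K) : x ᵥ* M ᵥ* N ∈ interior C :=
  hK.subset_endInt hN _ (hK.subset_endInt hM x hx)

variable {C : PointedCone ℝ (Fin n → ℝ)} {x : Fin n → ℝ} {M M' N N' : Matrix (Fin n) (Fin n) ℝ}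

lemma opFunkSet_subset_funkSet (hx : x ∈ interior (C : Set (Fin n → ℝ))) :
    opFunkSet C M M' ⊆ C.funkSet (x ᵥ* M) (x ᵥ* M') :=
  fun _ hl => ⟨hl.1, hl.2 x hx⟩

variable [NeZero n]

lemma funk_vecMul_le_opFunk (hC : C.IsProper) (hx : x ∈ interior (C : Set (Fin n → ℝ)))
    (hM : M ∈ EndInt C) (hM' : M' ∈ EndInt C) (hne : (opFunkSet C M M').Nonempty) :
    funk C (x ᵥ* M) (x ᵥ* M') ≤ opFunk C M M' :=
  funk_le_log_sInf hC (hM x hx) (hM' x hx) hne (opFunkSet_subset_funkSet hx)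

lemma opFunk_le_log (hC : C.IsProper) (hM : M ∈ EndInt C) (hM' : M' ∈ EndInt C) {l : ℝ}
    (hl : l ∈ opFunkSet C M M') : opFunk C M M' ≤ Real.log l := by
  obtain ⟨x, hx⟩ := hC.interior_nonempty
  have hpos : 0 < sInf (opFunkSet C M M') :=
    (sInf_funkSet_pos hC (hM x hx) (hM' x hx)).trans_le
      (csInf_le_csInf PointedCone.funkSet_bddBelow ⟨l, hl⟩ (opFunkSet_subset_funkSet hx))
  exact Real.log_le_log hpos (csInf_le ⟨0, fun _ h => h.1.le⟩ hl)

namespace UniformlyComparable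

variable {K X Y : Set (Matrix (Fin n) (Fin n) ℝ)} {L : ℝ} (hC : C.IsProper)
  (hK : UniformlyComparable C K L)

include hC hK

lemma opThompson_le (hM : M ∈ K) (hM' : M' ∈ K) : opThompson C M M' ≤ Real.log L :=
  max_le
    (opFunk_le_log hC (hK.subset_endInt hM) (hK.subset_endInt hM') (hK.mem_opFunkSet M hM M' hM'))
    (opFunk_le_log hC (hK.subset_endInt hM') (hK.subset_endInt hM) (hK.mem_opFunkSet M' hM' M hM))

lemma funk_vecMul_le_opThompson (hx : x ∈ interior (C : Set (Fin n → ℝ))) (hM : M ∈ K)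
    (hM' : M' ∈ K) : funk C (x ᵥ* M) (x ᵥ* M') ≤ opThompson C M M' :=
  (funk_vecMul_le_opFunk hC hx (hK.subset_endInt hM) (hK.subset_endInt hM')
    ⟨L, hK.mem_opFunkSet M hM M' hM'⟩).trans (le_max_left _ _)

lemma opThompson_nonneg (hM : M ∈ K) (hM' : M' ∈ K) : 0 ≤ opThompson C M M' := by
  obtain ⟨x, hx⟩ := hC.interior_nonempty
  have hxM := hK.subset_endInt hM x hx
  have h₁ := hK.funk_vecMul_le_opThompson hC hx hM hM'
  have h₂ := hK.funk_vecMul_le_opThompson hC hx hM' hM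
  have h₃ := funk_triangle hC hxM (hK.subset_endInt hM' x hx) hxM
  rw [funk_self hC hxM] at h₃
  rw [opThompson_comm] at h₂
  linarith

lemma funk_vecMul_vecMul_le (hx : x ∈ interior (C : Set (Fin n → ℝ))) (hM : M ∈ K)
    (hM' : M' ∈ K) (hN : N ∈ K) (hN' : N' ∈ K) :
    funk C (x ᵥ* M ᵥ* N) (x ᵥ* M' ᵥ* N') ≤ opThompson C M M' + opThompson C N N' := by
  have hxM := hK.subset_endInt hM x hx
  have hxM' := hK.subset_endInt hM' x hx
  calc funk C (x ᵥ* M ᵥ* N) (x ᵥ* M' ᵥ* N')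
      ≤ funk C (x ᵥ* M ᵥ* N) (x ᵥ* M' ᵥ* N) + funk C (x ᵥ* M' ᵥ* N) (x ᵥ* M' ᵥ* N') :=
        funk_triangle hC (hK.vecMul_vecMul_mem_interior hx hM hN)
          (hK.vecMul_vecMul_mem_interior hx hM' hN) (hK.vecMul_vecMul_mem_interior hx hM' hN')
    _ ≤ funk C (x ᵥ* M) (x ᵥ* M') + opThompson C N N' :=
        add_le_add (funk_vecMul_le hC hxM hxM' (hK.subset_endInt hN))
          (hK.funk_vecMul_le_opThompson hC hxM' hN hN')
    _ ≤ opThompson C M M' + opThompson C N N' :=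
        add_le_add_left (hK.funk_vecMul_le_opThompson hC hx hM hM') _

lemma exists_opThompson_lt_hausT_left (hX : X ⊆ K) (hY : Y ⊆ K) (hYne : Y.Nonempty)
    (hM : M ∈ X) {ε : ℝ} (hε : 0 < ε) : ∃ M' ∈ Y, opThompson C M M' < hausT C X Y + ε := by
  have := hYne.to_subtype
  obtain ⟨M', hM'⟩ := exists_lt_ciSup_ciInf_add
    (fun (a : X) (b : Y) => hK.opThompson_nonneg hC (hX a.2) (hY b.2))
    (fun (a : X) (b : Y) => hK.opThompson_le hC (hX a.2) (hY b.2)) ⟨M, hM⟩ hε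
  exact ⟨M', M'.2, hM'.trans_le (by gcongr; exact le_max_left _ _)⟩

lemma exists_opThompson_lt_hausT_right (hX : X ⊆ K) (hY : Y ⊆ K) (hXne : X.Nonempty)
    (hM' : M' ∈ Y) {ε : ℝ} (hε : 0 < ε) : ∃ M ∈ X, opThompson C M M' < hausT C X Y + ε := by
  obtain ⟨M, hM, h⟩ := hK.exists_opThompson_lt_hausT_left hC hY hX hXne hM' hε
  exact ⟨M, hM, by rwa [opThompson_comm, hausT_comm]⟩

end UniformlyComparable

end Operators

section Shapley

variable {n : ℕ}

def FunkNonexpansive (C : Set (Fin n → ℝ)) (w : (Fin n → ℝ) → ℝ) : Prop :=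
  ∀ y ∈ interior C, ∀ z ∈ interior C, w y - w z ≤ funk C y z

variable [NeZero n] {C : PointedCone ℝ (Fin n → ℝ)} {K X Y X' Y' : Set (Matrix (Fin n) (Fin n) ℝ)}
  {L : ℝ} {w w' : (Fin n → ℝ) → ℝ} {x : Fin n → ℝ}

lemma funkNonexpansive_funk (hC : C.IsProper) {xb : Fin n → ℝ}
    (hxb : xb ∈ interior (C : Set (Fin n → ℝ))) : FunkNonexpansive C fun y => funk C y xb :=
  fun y hy z hz => by linarith [funk_triangle hC hy hz hxb]

lemma FunkNonexpansive.exists_abs_le (hw : FunkNonexpansive C w) (hC : C.IsProper)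
    (hK : UniformlyComparable C K L) (hx : x ∈ interior (C : Set (Fin n → ℝ))) :
    ∃ B, ∀ M ∈ K, ∀ N ∈ K, |w (x ᵥ* M ᵥ* N)| ≤ B := by
  rcases K.eq_empty_or_nonempty with rfl | ⟨M₀, hM₀⟩
  · exact ⟨0, by simp⟩
  have hfunk : ∀ {M M' N N'}, M ∈ K → M' ∈ K → N ∈ K → N' ∈ K →
      funk C (x ᵥ* M ᵥ* N) (x ᵥ* M' ᵥ* N') ≤ 2 * Real.log L := fun hM hM' hN hN' =>
    (hK.funk_vecMul_vecMul_le hC hx hM hM' hN hN').trans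
      (by linarith [hK.opThompson_le hC hM hM', hK.opThompson_le hC hN hN'])
  refine ⟨|w (x ᵥ* M₀ ᵥ* M₀)| + 2 * Real.log L, fun M hM N hN => ?_⟩
  have hMN := hK.vecMul_vecMul_mem_interior hx hM hN
  have h₀ := hK.vecMul_vecMul_mem_interior hx hM₀ hM₀
  have hdiff : |w (x ᵥ* M ᵥ* N) - w (x ᵥ* M₀ ᵥ* M₀)| ≤ 2 * Real.log L :=
    abs_sub_le_iff.2 ⟨(hw _ hMN _ h₀).trans (hfunk hM hM₀ hN hM₀),
      (hw _ h₀ _ hMN).trans (hfunk hM₀ hM hM₀ hN)⟩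
  linarith [abs_sub_abs_le_abs_sub (w (x ᵥ* M ᵥ* N)) (w (x ᵥ* M₀ ᵥ* M₀))]

lemma FunkNonexpansive.mshapley (hw : FunkNonexpansive C w) (hC : C.IsProper)
    (hK : UniformlyComparable C K L) (hX : X ⊆ K) (hY : Y ⊆ K) (hXne : X.Nonempty)
    (hYne : Y.Nonempty) : FunkNonexpansive C (mshapley X Y w) := by
  intro y hy z hz
  have := hXne.to_subtype
  have := hYne.to_subtype
  obtain ⟨B, hB⟩ := hw.exists_abs_le hC hK hy
  obtain ⟨B', hB'⟩ := hw.exists_abs_le hC hK hz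
  have := ciInf_ciSup_le_ciInf_ciSup_add (c := funk C y z)
    (fun (a : X) (b : Y) => hB a.1 (hX a.2) b.1 (hY b.2))
    (fun (a : X) (b : Y) => (le_abs_self _).trans (hB' a.1 (hX a.2) b.1 (hY b.2)))
    fun a ε hε => ⟨a, fun b => ⟨b, by
      have hya := hK.subset_endInt (hX a.2) y hy
      have hza := hK.subset_endInt (hX a.2) z hz
      have h₁ := hw _ (hK.subset_endInt (hY b.2) _ hya) _ (hK.subset_endInt (hY b.2) _ hza)
      have h₂ := funk_vecMul_le hC hya hza (hK.subset_endInt (hY b.2))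
      have h₃ := funk_vecMul_le hC hy hz (hK.subset_endInt (hX a.2))
      linarith⟩⟩
  simp only [_root_.mshapley]
  linarith

lemma mshapley_le_mshapley_add (hC : C.IsProper) (hK : UniformlyComparable C K L)
    (hX : X ⊆ K) (hY : Y ⊆ K) (hX' : X' ⊆ K) (hY' : Y' ⊆ K) (hXne : X.Nonempty)
    (hYne : Y.Nonempty) (hX'ne : X'.Nonempty) (hY'ne : Y'.Nonempty)
    (hw : FunkNonexpansive C w) (hw' : FunkNonexpansive C w') {c : ℝ}
    (hc : ∀ y ∈ interior (C : Set (Fin n → ℝ)), w y ≤ w' y + c)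
    (hx : x ∈ interior (C : Set (Fin n → ℝ))) :
    mshapley X Y w x ≤ mshapley X' Y' w' x + (c + hausT C X X' + hausT C Y Y') := by
  have := hXne.to_subtype
  have := hYne.to_subtype
  have := hX'ne.to_subtype
  have := hY'ne.to_subtype
  obtain ⟨B, hB⟩ := hw.exists_abs_le hC hK hx
  obtain ⟨B', hB'⟩ := hw'.exists_abs_le hC hK hx
  refine ciInf_ciSup_le_ciInf_ciSup_add
    (fun (a : X) (b : Y) => hB a.1 (hX a.2) b.1 (hY b.2))
    (fun (a : X') (b : Y') => (le_abs_self _).trans (hB' a.1 (hX' a.2) b.1 (hY' b.2)))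
    fun a' ε hε => ?_
  obtain ⟨a, ha, haa'⟩ := hK.exists_opThompson_lt_hausT_right hC hX hX' hXne a'.2 (half_pos hε)
  refine ⟨⟨a, ha⟩, fun b => ?_⟩
  obtain ⟨b', hb', hbb'⟩ := hK.exists_opThompson_lt_hausT_left hC hY hY' hY'ne b.2 (half_pos hε)
  refine ⟨⟨b', hb'⟩, ?_⟩
  have h₁ := hw _ (hK.vecMul_vecMul_mem_interior hx (hX ha) (hY b.2)) _
    (hK.vecMul_vecMul_mem_interior hx (hX' a'.2) (hY' hb'))
  have h₂ := hc _ (hK.vecMul_vecMul_mem_interior hx (hX' a'.2) (hY' hb'))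
  have h₃ := hK.funk_vecMul_vecMul_le hC hx (hX ha) (hX' a'.2) (hY b.2) (hY' hb')
  dsimp only
  linarith

lemma funkNonexpansive_iterate_mshapley (hC : C.IsProper) (hK : UniformlyComparable C K L)
    (hX : X ⊆ K) (hY : Y ⊆ K) (hXne : X.Nonempty) (hYne : Y.Nonempty)
    (hw : FunkNonexpansive C w) (k : ℕ) : FunkNonexpansive C ((mshapley X Y)^[k] w) := by
  induction k with
  | zero => exact hw
  | succ k ih =>
    rw [Function.iterate_succ']
    exact ih.mshapley hC hK hX hY hXne hYne

lemma abs_iterate_mshapley_sub_le (hC : C.IsProper) (hK : UniformlyComparable C K L)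
    (hX : X ⊆ K) (hY : Y ⊆ K) (hX' : X' ⊆ K) (hY' : Y' ⊆ K) (hXne : X.Nonempty)
    (hYne : Y.Nonempty) (hX'ne : X'.Nonempty) (hY'ne : Y'.Nonempty)
    (hw : FunkNonexpansive C w) (k : ℕ) {y : Fin n → ℝ}
    (hy : y ∈ interior (C : Set (Fin n → ℝ))) :
    |(mshapley X Y)^[k] w y - (mshapley X' Y')^[k] w y| ≤ k * (hausT C X X' + hausT C Y Y') := by
  induction k generalizing y with
  | zero => simp
  | succ k ih =>
    have hS := funkNonexpansive_iterate_mshapley hC hK hX hY hXne hYne hw k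
    have hS' := funkNonexpansive_iterate_mshapley hC hK hX' hY' hX'ne hY'ne hw k
    set δ := hausT C X X' + hausT C Y Y'
    have h₁ := mshapley_le_mshapley_add (c := k * δ) hC hK hX hY hX' hY' hXne hYne hX'ne hY'ne
      hS hS' (fun z hz => by linarith [(abs_le.1 (ih hz)).2]) hy
    have h₂ := mshapley_le_mshapley_add (c := k * δ) hC hK hX' hY' hX hY hX'ne hY'ne hXne hYne
      hS' hS (fun z hz => by linarith [(abs_le.1 (ih hz)).1]) hy
    rw [hausT_comm C X', hausT_comm C Y'] at h₂
    rw [Function.iterate_succ_apply', Function.iterate_succ_apply', abs_sub_le_iff]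
    push_cast
    constructor <;> linarith

theorem abs_sub_le_hausT_add_hausT (hC : C.IsProper) (hK : UniformlyComparable C K L)
    (hX : X ⊆ K) (hY : Y ⊆ K) (hX' : X' ⊆ K) (hY' : Y' ⊆ K) (hXne : X.Nonempty)
    (hYne : Y.Nonempty) (hX'ne : X'.Nonempty) (hY'ne : Y'.Nonempty) {xb : Fin n → ℝ}
    (hxb : xb ∈ interior (C : Set (Fin n → ℝ))) {ρ ρ' : ℝ}
    (hρ : Tendsto (fun k : ℕ => (mshapley X Y)^[k] (fun y => funk C y xb) xb / k) atTop (𝓝 ρ))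
    (hρ' : Tendsto (fun k : ℕ => (mshapley X' Y')^[k] (fun y => funk C y xb) xb / k) atTop
      (𝓝 ρ')) :
    |ρ - ρ'| ≤ hausT C X X' + hausT C Y Y' :=
  abs_sub_le_of_tendsto_div hρ hρ' fun k => abs_iterate_mshapley_sub_le hC hK hX hY hX' hY' hXne
    hYne hX'ne hY'ne (funkNonexpansive_funk hC hxb) k hxb

end Shapley

/-- In dimension zero every Funk and Thompson distance is the junk value `Real.log 0 = 0`. -/
theorem abs_sub_le_hausT_add_hausT_of_subsingleton {n : ℕ} [Subsingleton (Fin n → ℝ)]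
    {C : Set (Fin n → ℝ)} (hC : C.Nonempty) {A A' B B' : Set (Matrix (Fin n) (Fin n) ℝ)}
    (hAne : A.Nonempty) (hA'ne : A'.Nonempty) (hBne : B.Nonempty) (hB'ne : B'.Nonempty)
    {xb : Fin n → ℝ} {ρ ρ' : ℝ}
    (hρ : Tendsto (fun k : ℕ => (mshapley A B)^[k] (fun y => funk C y xb) xb / k) atTop (𝓝 ρ))
    (hρ' : Tendsto (fun k : ℕ => (mshapley A' B')^[k] (fun y => funk C y xb) xb / k) atTop
      (𝓝 ρ')) :
    |ρ - ρ'| ≤ hausT C A A' + hausT C B B' := by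
  have hS : ∀ {X Y : Set (Matrix (Fin n) (Fin n) ℝ)}, X.Nonempty → Y.Nonempty →
      ∀ v, mshapley X Y v = v := fun hX hY v => by
    have := hX.to_subtype
    have := hY.to_subtype
    funext x
    simp only [mshapley, Subsingleton.elim _ x, ciSup_const, ciInf_const]
  have hlim : ∀ {X Y : Set (Matrix (Fin n) (Fin n) ℝ)}, X.Nonempty → Y.Nonempty →
      Tendsto (fun k : ℕ => (mshapley X Y)^[k] (fun y => funk C y xb) xb / k) atTop (𝓝 0) :=
    fun hX hY => by
      simpa only [Function.iterate_fixed (hS hX hY _)] using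
        tendsto_const_div_atTop_nhds_zero_nat _
  have hT : ∀ M M', opThompson C M M' = 0 := fun M M' => by
    simp [opThompson, opFunk, Subsingleton.eq_univ_of_nonempty hC, Set.Ioi_def]
  rw [tendsto_nhds_unique hρ (hlim hAne hBne), tendsto_nhds_unique hρ' (hlim hA'ne hB'ne)]
  simp [hausT, hT]

/-- the competitive spectral radius of a matrix multiplication game,
as a function of the pair of compact action sets included in a part of `End(int C)`,
is `1`-Lipschitz for the Hausdorff distance induced by the Thompson metric. -/
theorem stmt_8 {n : ℕ} (C : Set (Fin n → ℝ))
    (hCclosed : IsClosed C) (hCconv : Convex ℝ C)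
    (hCcone : ∀ x ∈ C, ∀ r : ℝ, 0 ≤ r → r • x ∈ C)
    (hCpointed : ∀ x ∈ C, -x ∈ C → x = 0)
    (hCint : (interior C).Nonempty)
    (P : Set (Matrix (Fin n) (Fin n) ℝ)) (hP : IsOpPart C P)
    (A A' B B' : Set (Matrix (Fin n) (Fin n) ℝ))
    (hAP : A ⊆ P) (hA'P : A' ⊆ P) (hBP : B ⊆ P) (hB'P : B' ⊆ P)
    (hAc : IsCompact A) (hAne : A.Nonempty) (hA'c : IsCompact A') (hA'ne : A'.Nonempty)
    (hBc : IsCompact B) (hBne : B.Nonempty) (hB'c : IsCompact B') (hB'ne : B'.Nonempty)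
    (xb : Fin n → ℝ) (hxb : xb ∈ interior C) (ρ ρ' : ℝ)
    (hρ : Tendsto (fun k : ℕ => (mshapley A B)^[k] (fun y => funk C y xb) xb / (k : ℝ))
      atTop (nhds ρ))
    (hρ' : Tendsto (fun k : ℕ => (mshapley A' B')^[k] (fun y => funk C y xb) xb / (k : ℝ))
      atTop (nhds ρ')) :
    |ρ - ρ'| ≤ hausT C A A' + hausT C B B' := by
  rcases Nat.eq_zero_or_pos n with rfl | hn
  · exact abs_sub_le_hausT_add_hausT_of_subsingleton (hCint.mono interior_subset) hAne hA'ne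
      hBne hB'ne hρ hρ'
  have : NeZero n := ⟨hn.ne'⟩
  obtain ⟨C, rfl⟩ : ∃ C' : PointedCone ℝ (Fin n → ℝ), (C' : Set (Fin n → ℝ)) = C :=
    ⟨.ofConvex hCconv hCcone (hCint.mono interior_subset), rfl⟩
  have hC : C.IsProper := ⟨hCclosed, hCpointed, hCint⟩
  obtain ⟨L, hL⟩ := hP.exists_uniformlyComparable
    (union_subset (union_subset (union_subset hAP hA'P) hBP) hB'P)
    (((hAc.union hA'c).union hBc).union hB'c)
  exact abs_sub_le_hausT_add_hausT hC hL (fun M h => by simp [h]) (fun M h => by simp [h])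
    (fun M h => by simp [h]) (fun M h => by simp [h]) hAne hBne hA'ne hB'ne hxb hρ hρ'
end

section
/- Let C = ℝ^n_{≥0} be the nonnegative orthant and let A, A' be nonnegative n×n matrices whose associated right-multiplication maps x ↦ xA and x ↦ xA' preserve int C. Then A and A' belong to the same part of End(int C) if and only if they have the same support, i.e., A_{ij} > 0 ⟺ A'_{ij} > 0 for all i,j. Consequently, the parts of End(int ℝ^n_{≥0}) are exactly the nonempty sets 𝒫_U = {A ∈ ℝ^{n×n}_{≥0} : A_{ij} > 0 ⟺ (i,j) ∈ U} for subsets U ⊆ [n]×[n] such that the maps x ↦ xA, A ∈ 𝒫_U, preserve the interior of the orthant. -/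
open Set

/-- The set `𝒫_U` of nonnegative matrices with support `U`. -/
def suppClass {n : ℕ} (U : Set (Fin n × Fin n)) : Set (Matrix (Fin n) (Fin n) ℝ) :=
  {A | (∀ i j, 0 ≤ A i j) ∧ ∀ i j, (0 < A i j ↔ (i, j) ∈ U)}

section Aux

variable {n : ℕ}

lemma interior_orthant :
    interior {x : Fin n → ℝ | ∀ i, 0 ≤ x i} = {x | ∀ i, 0 < x i} := by
  have h : {x : Fin n → ℝ | ∀ i, 0 ≤ x i} = Set.pi Set.univ (fun _ => Ici (0 : ℝ)) := by
    ext x; simp [Set.mem_pi, Pi.le_def]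
  rw [h, interior_pi_set Set.finite_univ]
  ext x; simp [Set.mem_pi, Pi.le_def]

lemma vecMul_apply (x : Fin n → ℝ) (B : Matrix (Fin n) (Fin n) ℝ) (j : Fin n) :
    Matrix.vecMul x B j = ∑ k, x k * B k j := by
  simp [Matrix.vecMul, dotProduct]

lemma entry_nonneg (B : Matrix (Fin n) (Fin n) ℝ)
    (h : ∀ x : Fin n → ℝ, (∀ i, 0 < x i) → ∀ j, 0 ≤ Matrix.vecMul x B j) :
    ∀ i j, 0 ≤ B i j := by
  intro i j
  set f : ℝ → ℝ := fun ε => ∑ k, (if k = i then 1 else ε) * B k j with hf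
  have hcont : Continuous f := by
    apply continuous_finset_sum
    intro k _
    by_cases hk : k = i <;> simp [hk] <;> fun_prop
  have hf0 : f 0 = B i j := by
    simp [hf, ite_mul]
  have htend : Filter.Tendsto f (nhdsWithin 0 (Ioi 0)) (nhds (B i j)) := by
    rw [← hf0]
    exact (hcont.tendsto 0).mono_left nhdsWithin_le_nhds
  refine ge_of_tendsto htend ?_
  filter_upwards [self_mem_nhdsWithin] with ε hε
  have hε' : (0 : ℝ) < ε := hε
  have hx : ∀ k, (0 : ℝ) < (if k = i then 1 else ε) := by
    intro k; by_cases hk : k = i <;> simp [hk, hε']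
  have := h (fun k => if k = i then 1 else ε) hx j
  rw [vecMul_apply] at this
  exact this

lemma opLE_iff (A A' : Matrix (Fin n) (Fin n) ℝ) :
    opLE {x : Fin n → ℝ | ∀ i, 0 ≤ x i} A A' ↔ ∀ i j, A i j ≤ A' i j := by
  unfold opLE
  rw [interior_orthant]
  constructor
  · intro h i j
    have h2 : ∀ x : Fin n → ℝ, (∀ i, 0 < x i) → ∀ j, 0 ≤ Matrix.vecMul x (A' - A) j := by
      intro x hx j
      rw [Matrix.vecMul_sub]
      exact h x hx j
    have := entry_nonneg (A' - A) h2 i j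
    simpa [Matrix.sub_apply, sub_nonneg] using this
  · intro h x hx j
    show (0 : ℝ) ≤ (Matrix.vecMul x A' - Matrix.vecMul x A) j
    have key : (Matrix.vecMul x A' - Matrix.vecMul x A) j
        = ∑ k, x k * (A' k j - A k j) := by
      simp [vecMul_apply, mul_sub, Finset.sum_sub_distrib]
    rw [key]
    exact Finset.sum_nonneg fun k _ =>
      mul_nonneg (hx k).le (sub_nonneg.mpr (h k j))

lemma endInt_iff (A : Matrix (Fin n) (Fin n) ℝ) :
    A ∈ EndInt {x : Fin n → ℝ | ∀ i, 0 ≤ x i} ↔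
      (∀ i j, 0 ≤ A i j) ∧ ∀ j, ∃ i, 0 < A i j := by
  unfold EndInt
  simp only [mem_setOf_eq, interior_orthant]
  constructor
  · intro h
    constructor
    · exact entry_nonneg A fun x hx j => (h x hx j).le
    · intro j
      have hnn := entry_nonneg A fun x hx j => (h x hx j).le
      have h1 := h (fun _ => 1) (fun _ => one_pos) j
      rw [vecMul_apply] at h1
      by_contra hc
      push_neg at hc
      have : (∑ k, (1 : ℝ) * A k j) ≤ 0 :=
        Finset.sum_nonpos fun k _ => by simpa using hc k
      linarith
  · rintro ⟨hnn, hcol⟩ x hx j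
    obtain ⟨i, hi⟩ := hcol j
    rw [vecMul_apply]
    exact Finset.sum_pos' (fun k _ => mul_nonneg (hx k).le (hnn k j))
      ⟨i, Finset.mem_univ i, mul_pos (hx i) hi⟩

lemma exists_pos_lb {α : Type*} (s : Finset α) (f : α → ℝ) :
    (∀ a ∈ s, 0 < f a) → ∃ μ : ℝ, 0 < μ ∧ ∀ a ∈ s, μ ≤ f a := by
  classical
  induction s using Finset.induction_on with
  | empty => exact fun _ => ⟨1, one_pos, by simp⟩
  | @insert a s ha ih =>
    intro h
    obtain ⟨μ, hμ, hle⟩ := ih fun b hb => h b (Finset.mem_insert_of_mem hb)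
    refine ⟨min μ (f a), lt_min hμ (h a (Finset.mem_insert_self a s)), ?_⟩
    intro b hb
    rcases Finset.mem_insert.mp hb with rfl | hb
    · exact min_le_right _ _
    · exact le_trans (min_le_left _ _) (hle b hb)

lemma exists_pos_ub {α : Type*} (s : Finset α) (f : α → ℝ) :
    ∃ l : ℝ, 0 < l ∧ ∀ a ∈ s, f a ≤ l := by
  classical
  induction s using Finset.induction_on with
  | empty => exact ⟨1, one_pos, by simp⟩
  | @insert a s ha ih =>
    obtain ⟨l, hl, hle⟩ := ih
    refine ⟨max l (max (f a) 1), lt_of_lt_of_le hl (le_max_left _ _), ?_⟩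
    intro b hb
    rcases Finset.mem_insert.mp hb with rfl | hb
    · exact le_trans (le_max_left _ _) (le_max_right _ _)
    · exact le_trans (hle b hb) (le_max_left _ _)

lemma comparable_iff_support (A A' : Matrix (Fin n) (Fin n) ℝ)
    (hA : ∀ i j, 0 ≤ A i j) (hA' : ∀ i j, 0 ≤ A' i j) :
    opComparable {x : Fin n → ℝ | ∀ i, 0 ≤ x i} A A' ↔
      ∀ i j, (0 < A i j ↔ 0 < A' i j) := by
  constructor
  · rintro ⟨μ, hμ, l, hl, h1, h2⟩
    have e1 := (opLE_iff _ _).mp h1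
    have e2 := (opLE_iff _ _).mp h2
    intro i j
    have e1' : μ * A i j ≤ A' i j := by
      simpa [Matrix.smul_apply, smul_eq_mul] using e1 i j
    have e2' : A' i j ≤ l * A i j := by
      simpa [Matrix.smul_apply, smul_eq_mul] using e2 i j
    constructor
    · intro h; exact lt_of_lt_of_le (by positivity) e1'
    · intro h; nlinarith [hA i j]
  · intro hsupp
    have hpos : ∀ p ∈ (Finset.univ : Finset (Fin n × Fin n)),
        0 < (if 0 < A p.1 p.2 then A' p.1 p.2 / A p.1 p.2 else 1) := by
      intro p _
      by_cases h : 0 < A p.1 p.2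
      · rw [if_pos h]; exact div_pos ((hsupp p.1 p.2).mp h) h
      · rw [if_neg h]; exact one_pos
    obtain ⟨μ, hμ0, hμ⟩ := exists_pos_lb _ _ hpos
    obtain ⟨l, hl0, hl⟩ := exists_pos_ub (Finset.univ : Finset (Fin n × Fin n))
      (fun p => if 0 < A' p.1 p.2 then A' p.1 p.2 / A p.1 p.2 else 1)
    have hμA : ∀ i j, μ * A i j ≤ A' i j := by
      intro i j
      have hm := hμ (i, j) (Finset.mem_univ _)
      by_cases h : 0 < A i j
      · rw [if_pos h] at hm
        exact (le_div_iff₀ h).mp hm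
      · have hz : A i j = 0 := le_antisymm (not_lt.mp h) (hA i j)
        rw [hz, mul_zero]; exact hA' i j
    have hlA : ∀ i j, A' i j ≤ l * A i j := by
      intro i j
      have hm := hl (i, j) (Finset.mem_univ _)
      by_cases h : 0 < A' i j
      · rw [if_pos h] at hm
        have hAij : 0 < A i j := (hsupp i j).mpr h
        calc A' i j = (A' i j / A i j) * A i j := by field_simp
          _ ≤ l * A i j := mul_le_mul_of_nonneg_right hm hAij.le
      · have hz : A' i j = 0 := le_antisymm (not_lt.mp h) (hA' i j)
        rw [hz]; exact mul_nonneg hl0.le (hA i j)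
    refine ⟨μ, hμ0, l, hl0, ?_, ?_⟩
    · exact (opLE_iff _ _).mpr fun i j => by
        simpa [Matrix.smul_apply, smul_eq_mul] using hμA i j
    · exact (opLE_iff _ _).mpr fun i j => by
        simpa [Matrix.smul_apply, smul_eq_mul] using hlA i j

end Aux

/-- over the nonnegative orthant, two nonnegative matrices whose right
action preserves the open orthant lie in the same part of `End(int C)` iff they have
the same support; consequently, the parts of `End(int C)` are exactly the nonempty
sets `𝒫_U` all of whose elements preserve the open orthant. -/
theorem stmt_10 {n : ℕ} (C : Set (Fin n → ℝ)) (hC : C = {x | ∀ i, 0 ≤ x i}) :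
    (∀ A A' : Matrix (Fin n) (Fin n) ℝ,
      (∀ i j, 0 ≤ A i j) → (∀ i j, 0 ≤ A' i j) →
      A ∈ EndInt C → A' ∈ EndInt C →
      (opComparable C A A' ↔ ∀ i j, (0 < A i j ↔ 0 < A' i j))) ∧
    (∀ P : Set (Matrix (Fin n) (Fin n) ℝ),
      IsOpPart C P ↔
        ∃ U : Set (Fin n × Fin n),
          P = suppClass U ∧ P.Nonempty ∧ ∀ A ∈ suppClass U, A ∈ EndInt C) := by
  subst hC
  constructor
  · intro A A' hA hA' _ _
    exact comparable_iff_support A A' hA hA'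
  · intro P
    constructor
    · rintro ⟨A₀, hA₀, rfl⟩
      obtain ⟨h0nn, h0col⟩ := (endInt_iff A₀).mp hA₀
      refine ⟨{p | 0 < A₀ p.1 p.2}, ?_, ?_, ?_⟩
      · ext A
        simp only [mem_setOf_eq, suppClass, Set.mem_sep_iff]
        constructor
        · rintro ⟨hAEnd, hcomp⟩
          obtain ⟨hnn, _⟩ := (endInt_iff A).mp hAEnd
          have hs := (comparable_iff_support A₀ A h0nn hnn).mp hcomp
          exact ⟨hnn, fun i j => (hs i j).symm⟩
        · rintro ⟨hnn, hsupp⟩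
          have hAEnd : A ∈ EndInt {x : Fin n → ℝ | ∀ i, 0 ≤ x i} := by
            refine (endInt_iff A).mpr ⟨hnn, fun j => ?_⟩
            obtain ⟨i, hi⟩ := h0col j
            exact ⟨i, (hsupp i j).mpr hi⟩
          exact ⟨hAEnd,
            (comparable_iff_support A₀ A h0nn hnn).mpr fun i j => (hsupp i j).symm⟩
      · exact ⟨A₀, hA₀,
          (comparable_iff_support A₀ A₀ h0nn h0nn).mpr fun i j => Iff.rfl⟩
      · rintro A ⟨hnn, hsupp⟩
        refine (endInt_iff A).mpr ⟨hnn, fun j => ?_⟩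
        obtain ⟨i, hi⟩ := h0col j
        exact ⟨i, (hsupp i j).mpr hi⟩
    · rintro ⟨U, rfl, ⟨A₀, hA₀P⟩, hall⟩
      have hA₀E := hall A₀ hA₀P
      obtain ⟨h0nn, h0supp⟩ := hA₀P
      refine ⟨A₀, hA₀E, ?_⟩
      ext A
      simp only [suppClass, mem_setOf_eq, Set.mem_sep_iff]
      constructor
      · rintro ⟨hnn, hsupp⟩
        exact ⟨hall A ⟨hnn, hsupp⟩,
          (comparable_iff_support A₀ A h0nn hnn).mpr
            fun i j => (h0supp i j).trans (hsupp i j).symm⟩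
      · rintro ⟨hAE, hcomp⟩
        obtain ⟨hnn, _⟩ := (endInt_iff A).mp hAE
        have hs := (comparable_iff_support A₀ A h0nn hnn).mp hcomp
        exact ⟨hnn, fun i j => (hs i j).symm.trans (h0supp i j)⟩
end

section
/- Let (E,d) be a hemi-metric space and let G : ℝ^E → ℝ^E be a Shapley operator (monotone and additively homogeneous) sending Lip₁(E) to itself. Suppose Gv = λ + v for some λ ∈ ℝ and some distance-like v ∈ Lip₁(E), with v(x) ≥ α + d(x,x₀) for all x. Then λ = lim_{k→∞} [G^k d(·,x₀)](x₀)/k. In particular, any two additive eigenvalues of G admitting distance-like eigenvectors (with any base points) coincide. -/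
open Set Filter

private lemma iter_sandwich {E : Type*} (G : (E → ℝ) → E → ℝ)
    (hmono : ∀ u w : E → ℝ, (∀ x, u x ≤ w x) → ∀ x, G u x ≤ G w x)
    (hhom : ∀ (c : ℝ) (u : E → ℝ) (x : E), G (fun y => c + u y) x = c + G u x)
    (μ : ℝ) (w : E → ℝ) (hw : ∀ x, G w x = μ + w x)
    (u : E → ℝ) (a b : ℝ)
    (h1 : ∀ x, a + w x ≤ u x) (h2 : ∀ x, u x ≤ b + w x) :
    ∀ k : ℕ, ∀ x, (k : ℝ) * μ + a + w x ≤ G^[k] u x ∧ G^[k] u x ≤ (k : ℝ) * μ + b + w x := by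
  intro k
  induction k with
  | zero => intro x; simpa using ⟨h1 x, h2 x⟩
  | succ k ih =>
    intro x
    rw [Function.iterate_succ_apply']
    constructor
    · have := hmono (fun y => ((k : ℝ) * μ + a) + w y) (G^[k] u)
        (fun y => (ih y).1) x
      have h2' : G (fun y => ((k : ℝ) * μ + a) + w y) x = ((k : ℝ) * μ + a) + G w x :=
        hhom _ _ _
      rw [h2', hw] at this
      push_cast
      linarith
    · have := hmono (G^[k] u) (fun y => ((k : ℝ) * μ + b) + w y)
        (fun y => (ih y).2) x
      have h2' : G (fun y => ((k : ℝ) * μ + b) + w y) x = ((k : ℝ) * μ + b) + G w x :=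
        hhom _ _ _
      rw [h2', hw] at this
      push_cast
      linarith

private lemma tendsto_lin_div (μ c : ℝ) :
    Tendsto (fun k : ℕ => ((k : ℝ) * μ + c) / k) atTop (nhds μ) := by
  have h : Tendsto (fun k : ℕ => μ + c / k) atTop (nhds (μ + 0)) :=
    tendsto_const_nhds.add (tendsto_const_div_atTop_nhds_zero_nat c)
  rw [add_zero] at h
  refine h.congr' ?_
  filter_upwards [eventually_ge_atTop 1] with k hk
  have hk' : (k : ℝ) ≠ 0 := by positivity
  field_simp

private lemma squeeze_div (μ c₁ c₂ : ℝ) (f : ℕ → ℝ)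
    (h1 : ∀ k : ℕ, (k : ℝ) * μ + c₁ ≤ f k) (h2 : ∀ k : ℕ, f k ≤ (k : ℝ) * μ + c₂) :
    Tendsto (fun k : ℕ => f k / k) atTop (nhds μ) := by
  refine tendsto_of_tendsto_of_tendsto_of_le_of_le' (tendsto_lin_div μ c₁)
    (tendsto_lin_div μ c₂) ?_ ?_
  · filter_upwards [eventually_ge_atTop 1] with k hk
    have : (0:ℝ) < k := by exact_mod_cast hk
    exact div_le_div_of_nonneg_right (h1 k) this.le
  · filter_upwards [eventually_ge_atTop 1] with k hk
    have : (0:ℝ) < k := by exact_mod_cast hk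
    exact div_le_div_of_nonneg_right (h2 k) this.le

/-- if a Shapley operator `G` (monotone, additively homogeneous,
preserving `Lip₁(E)`) has an additive eigenvector `v` which is distance-like,
then the corresponding eigenvalue equals `lim_k [G^k d(·,x₀)](x₀)/k`; in particular
all such eigenvalues coincide. -/
theorem stmt_12 {E : Type*}
    (d : E → E → ℝ)
    (htri : ∀ x y z, d x z ≤ d x y + d y z)
    (hsep : ∀ x y, (d x y = 0 ∧ d y x = 0) ↔ x = y)
    (G : (E → ℝ) → E → ℝ)
    (hmono : ∀ u w : E → ℝ, (∀ x, u x ≤ w x) → ∀ x, G u x ≤ G w x)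
    (hhom : ∀ (c : ℝ) (u : E → ℝ) (x : E), G (fun y => c + u y) x = c + G u x)
    (hlip : ∀ u : E → ℝ, (∀ x y, u x - u y ≤ d x y) → ∀ x y, G u x - G u y ≤ d x y)
    (l : ℝ) (v : E → ℝ) (x₀ : E) (α : ℝ)
    (hvLip : ∀ x y, v x - v y ≤ d x y)
    (heig : ∀ x, G v x = l + v x)
    (hdl : ∀ x, α + d x x₀ ≤ v x) :
    Tendsto (fun k : ℕ => G^[k] (fun x => d x x₀) x₀ / (k : ℝ)) atTop (nhds l) ∧
    (∀ (l' : ℝ) (v' : E → ℝ) (x₀' : E) (α' : ℝ),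
      (∀ x y, v' x - v' y ≤ d x y) → (∀ x, G v' x = l' + v' x) →
      (∀ x, α' + d x x₀' ≤ v' x) → l' = l) := by
  set u : E → ℝ := fun x => d x x₀ with hu
  have key : ∀ (μ : ℝ) (w : E → ℝ) (y₀ : E) (β : ℝ),
      (∀ x y, w x - w y ≤ d x y) → (∀ x, G w x = μ + w x) →
      (∀ x, β + d x y₀ ≤ w x) →
      Tendsto (fun k : ℕ => G^[k] u x₀ / (k : ℝ)) atTop (nhds μ) := by
    intro μ w y₀ β hwLip hweig hwdl
    have h1 : ∀ x, (-(w x₀)) + w x ≤ u x := fun x => by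
      have := hwLip x x₀
      simp only [hu]; linarith
    have h2 : ∀ x, (d y₀ x₀ - β) + w x ≤ u x → True := fun _ _ => trivial
    have h2' : ∀ x, u x ≤ (d y₀ x₀ - β) + w x := fun x => by
      have ht := htri x y₀ x₀
      have hd := hwdl x
      simp only [hu]; linarith
    have hs := iter_sandwich G hmono hhom μ w hweig u (-(w x₀)) (d y₀ x₀ - β) h1 h2'
    refine squeeze_div μ (-(w x₀) + w x₀) (d y₀ x₀ - β + w x₀)
      (fun k => G^[k] u x₀) (fun k => ?_) (fun k => ?_)
    · have := (hs k x₀).1; linarith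
    · have := (hs k x₀).2; linarith
  have hmain := key l v x₀ α hvLip heig hdl
  refine ⟨hmain, fun l' v' x₀' α' hL hE hD => ?_⟩
  exact tendsto_nhds_unique (key l' v' x₀' α' hL hE hD) hmain
end

section
/- Under Assumption 1 and the small cone assumption, each of the operators F, F_h^+ = F I_h^+ R_h, and F̂_h^+ = R_h F I_h^+ admits a distance-like additive eigenvector: there exist v ∈ Lip₁(X) (respectively Lip₁(X), Lip₁(X_h)) and λ ∈ ℝ such that the operator applied to v equals λ + v, and v is distance-like (automatic since X is compact). -/
open Set Filter

/-- The dual cone of `C`. -/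
def dualCone {n : ℕ} (C : Set (Fin n → ℝ)) : Set (Fin n → ℝ) :=
  {y | ∀ x ∈ C, 0 ≤ dotProduct x y}

/-- The cross-section `X = K ∩ Δ` of the small cone `K`,
where `Δ = {x | ⟨x, e*⟩ = 1}`. -/
def crossSec {n : ℕ} (K : Set (Fin n → ℝ)) (estar : Fin n → ℝ) : Set (Fin n → ℝ) :=
  {x ∈ K | dotProduct x estar = 1}

/-- The operator
`F v (x) = inf_a sup_b [log⟨T_{ab}(x), e*⟩ + v (T_{ab}(x)/⟨T_{ab}(x), e*⟩)]`. -/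
noncomputable def Fop {n : ℕ} {E : Type*} (A B : Set E)
    (T : E → E → (Fin n → ℝ) → (Fin n → ℝ)) (estar : Fin n → ℝ)
    (v : (Fin n → ℝ) → ℝ) (x : Fin n → ℝ) : ℝ :=
  ⨅ a : A, ⨆ b : B, (Real.log (dotProduct (T a b x) estar) +
    v ((dotProduct (T a b x) estar)⁻¹ • T a b x))

/-- The interpolation operator `I_h^+ v (x) = min_{y ∈ X_h} [v(y) + Funk(x,y)]`. -/
noncomputable def Ih {n : ℕ} (C : Set (Fin n → ℝ)) (Xh : Finset (Fin n → ℝ))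
    (hne : Xh.Nonempty) (v : (Fin n → ℝ) → ℝ) (x : Fin n → ℝ) : ℝ :=
  Xh.inf' hne (fun y => v y + funk C x y)

/-!
On the cross-section `X` the Funk hemi-metric is nonnegative, satisfies the triangle inequality
and is dominated by a multiple of the Euclidean distance, so the Funk-1-Lipschitz functions on `X`
form an equicontinuous family. Both `F` and `F ∘ I_h^+` are monotone, commute with constants and
preserve that family. For `θ < 1` the discounted map `u ↦ F (θ u)` is therefore a sup-norm
contraction with a Lipschitz fixed point `u_θ`; the pairs `(u_θ - u_θ(x₀), (1 - θ) u_θ(x₀))`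
range over a compact set (Arzelà–Ascoli), and a limit point as `θ → 1` is an additive eigenpair.
Restricting the eigenvector of `F I_h^+ R_h` to `X_h` gives one of `R_h F I_h^+`, and every
Lipschitz function is distance-like because the Funk hemi-metric is bounded on `X`.
-/

open Topology Pointwise

theorem iInf_iSup_le_iInf_iSup_add {ι κ : Type*} [Nonempty ι] [Nonempty κ] {f g : ι → κ → ℝ}
    {M N c : ℝ} (hf : ∀ i j, |f i j| ≤ M) (hg : ∀ i j, |g i j| ≤ N)
    (h : ∀ i j, f i j ≤ g i j + c) : ⨅ i, ⨆ j, f i j ≤ (⨅ i, ⨆ j, g i j) + c := by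
  have hfi : ∀ i, BddAbove (range (f i)) := fun i =>
    ⟨M, by rintro _ ⟨j, rfl⟩; exact (abs_le.1 (hf i j)).2⟩
  have hgi : ∀ i, BddAbove (range (g i)) := fun i =>
    ⟨N, by rintro _ ⟨j, rfl⟩; exact (abs_le.1 (hg i j)).2⟩
  have hbdd : BddBelow (range fun i => ⨆ j, f i j) := ⟨-M, by
    rintro _ ⟨i, rfl⟩
    exact (neg_le_of_abs_le (hf i (Classical.arbitrary κ))).trans (le_ciSup (hfi i) _)⟩
  rw [← sub_le_iff_le_add]
  exact le_ciInf fun i => sub_le_iff_le_add.2 <| (ciInf_le hbdd i).trans <|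
    ciSup_le fun j => (h i j).trans ((add_le_add_iff_right c).2 (le_ciSup (hgi i) j))

section AdditiveEigenvector

open BoundedContinuousFunction

variable {α : Type*} {d : α → α → ℝ} {Φ : (α → ℝ) → α → ℝ}

def IsLipOne (d : α → α → ℝ) (u : α → ℝ) : Prop := ∀ p q, u p - u q ≤ d p q

/-- The single inequality encodes that `Φ` is monotone and commutes with the addition of
constants (a *topical* map); it is only required on `d`-Lipschitz functions. -/
def IsTopical (d : α → α → ℝ) (Φ : (α → ℝ) → α → ℝ) : Prop :=
  ∀ u v c, IsLipOne d u → IsLipOne d v → (∀ p, u p ≤ v p + c) → ∀ p, Φ u p ≤ Φ v p + c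

theorem IsLipOne.add_const {u : α → ℝ} (hu : IsLipOne d u) (c : ℝ) :
    IsLipOne d (fun p => u p + c) := fun p q => by simpa using hu p q

theorem IsLipOne.smul (hd : ∀ p q, 0 ≤ d p q) {u : α → ℝ} (hu : IsLipOne d u) {θ : ℝ}
    (hθ₀ : 0 ≤ θ) (hθ₁ : θ ≤ 1) : IsLipOne d (θ • u) := fun p q => by
  simp only [Pi.smul_apply, smul_eq_mul, ← mul_sub]
  nlinarith [hu p q, hd p q]

theorem IsLipOne.lipschitzWith [PseudoMetricSpace α] {κ : ℝ}
    (hdκ : ∀ p q, d p q ≤ κ * dist p q) {u : α → ℝ} (hu : IsLipOne d u) :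
    LipschitzWith κ.toNNReal u :=
  LipschitzWith.of_dist_le' fun p q => by
    rw [Real.dist_eq, abs_sub_le_iff]
    exact ⟨(hu p q).trans (hdκ p q), (hu q p).trans ((hdκ q p).trans_eq (by rw [dist_comm]))⟩

theorem isClosed_setOf_isLipOne [TopologicalSpace α] :
    IsClosed {f : α →ᵇ ℝ | IsLipOne d f} := by
  simp only [IsLipOne, ofPred_forall]
  exact isClosed_iInter fun p => isClosed_iInter fun q => isClosed_le (by fun_prop) continuous_const

theorem IsTopical.abs_sub_le (hΦ : IsTopical d Φ) {u v : α → ℝ} (hu : IsLipOne d u)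
    (hv : IsLipOne d v) {η : ℝ} (h : ∀ p, |u p - v p| ≤ η) (p : α) : |Φ u p - Φ v p| ≤ η := by
  rw [abs_sub_le_iff]
  constructor
  · linarith [hΦ u v η hu hv (fun q => by linarith [(abs_sub_le_iff.1 (h q)).1]) p]
  · linarith [hΦ v u η hv hu (fun q => by linarith [(abs_sub_le_iff.1 (h q)).2]) p]

theorem IsTopical.map_add_const (hΦ : IsTopical d Φ) {u : α → ℝ} (hu : IsLipOne d u) (c : ℝ)
    (p : α) : Φ (fun q => u q + c) p = Φ u p + c := by
  have h₁ := hΦ _ u c (hu.add_const c) hu (fun _ => le_rfl) p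
  have h₂ := hΦ u _ (-c) hu (hu.add_const c) (fun _ => by linarith) p
  linarith

variable [PseudoMetricSpace α]

theorem IsTopical.eq_add_of_tendsto (hΦ : IsTopical d Φ) {θ β : ℕ → ℝ} {w : ℕ → α →ᵇ ℝ}
    {w' : α →ᵇ ℝ} {l : ℝ} (hw : ∀ k, IsLipOne d (θ k • ⇑(w k))) (hw' : IsLipOne d w')
    (heq : ∀ k p, Φ (θ k • ⇑(w k)) p = w k p + β k) (hθ : Tendsto θ atTop (𝓝 1))
    (hlim : Tendsto (fun k => (w k, β k)) atTop (𝓝 (w', l))) (p : α) :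
    Φ w' p = l + w' p := by
  have hsmul : Tendsto (fun k => θ k • w k) atTop (𝓝 w') := by
    simpa using hθ.smul (continuous_fst.tendsto _ |>.comp hlim)
  have h₁ : Tendsto (fun k => Φ (θ k • ⇑(w k)) p) atTop (𝓝 (Φ w' p)) := by
    refine tendsto_iff_dist_tendsto_zero.2 <|
      squeeze_zero (fun _ => dist_nonneg) (fun k => ?_) (tendsto_iff_dist_tendsto_zero.1 hsmul)
    rw [Real.dist_eq]
    refine hΦ.abs_sub_le (hw k) hw' (fun q => ?_) p
    rw [← Real.dist_eq]
    exact dist_coe_le_dist (f := θ k • w k) (g := w') q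
  have h₂ : Tendsto (fun k => Φ (θ k • ⇑(w k)) p) atTop (𝓝 (w' p + l)) := by
    simp only [heq]
    exact ((continuous_eval_const p).comp continuous_fst |>.tendsto _ |>.comp hlim).add
      (continuous_snd.tendsto _ |>.comp hlim)
  rw [add_comm]
  exact tendsto_nhds_unique h₁ h₂

variable [CompactSpace α] {κ : ℝ}

theorem exists_abs_le_of_isLipOne (hdκ : ∀ p q, d p q ≤ κ * dist p q) (x₀ : α) :
    ∃ R, ∀ u : α → ℝ, IsLipOne d u → u x₀ = 0 → ∀ p, |u p| ≤ R := by
  obtain ⟨D, hD⟩ := Metric.isBounded_iff.1 (isCompact_univ (X := α)).isBounded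
  refine ⟨κ.toNNReal * D, fun u hu hu₀ p => ?_⟩
  have h := (hu.lipschitzWith hdκ).dist_le_mul p x₀
  rw [hu₀, Real.dist_eq, sub_zero] at h
  exact h.trans (mul_le_mul_of_nonneg_left (hD trivial trivial) κ.toNNReal.2)

theorem isCompact_setOf_isLipOne_apply_eq_zero (hdκ : ∀ p q, d p q ≤ κ * dist p q) (x₀ : α) :
    IsCompact {w : α →ᵇ ℝ | IsLipOne d w ∧ w x₀ = 0} := by
  obtain ⟨R, hR⟩ := exists_abs_le_of_isLipOne hdκ x₀
  exact arzela_ascoli₂ (Icc (-R) R) isCompact_Icc _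
    (isClosed_setOf_isLipOne.inter (isClosed_eq (continuous_eval_const x₀) continuous_const))
    (fun w p hw => abs_le.1 (hR w hw.1 hw.2 p))
    (LipschitzWith.uniformEquicontinuous _ _ fun w => w.2.1.lipschitzWith hdκ).equicontinuous

theorem IsTopical.exists_isLipOne_smul_isFixedPt (hΦ : IsTopical d Φ) (hd : ∀ p q, 0 ≤ d p q)
    (hdκ : ∀ p q, d p q ≤ κ * dist p q) (hlip : ∀ u, IsLipOne d u → IsLipOne d (Φ u)) {θ : ℝ}
    (hθ₀ : 0 ≤ θ) (hθ₁ : θ < 1) : ∃ f : α →ᵇ ℝ, IsLipOne d f ∧ Φ (θ • ⇑f) = f := by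
  set L := {f : α →ᵇ ℝ | IsLipOne d f}
  have := isClosed_setOf_isLipOne (d := d) (α := α) |>.completeSpace_coe
  have : Nonempty L := ⟨⟨0, fun p q => by simpa using hd p q⟩⟩
  have hΦL : ∀ f : L, IsLipOne d (Φ (θ • ⇑(f : α →ᵇ ℝ))) :=
    fun f => hlip _ (f.2.smul hd hθ₀ hθ₁.le)
  let G : L → L := fun f => ⟨mkOfCompact ⟨_, ((hΦL f).lipschitzWith hdκ).continuous⟩, hΦL f⟩
  have hG : ContractingWith θ.toNNReal G := by
    refine ⟨by simpa using hθ₁, LipschitzWith.of_dist_le' fun f g => ?_⟩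
    rw [Subtype.dist_eq, dist_le (by positivity)]
    intro p
    rw [Real.dist_eq]
    refine hΦ.abs_sub_le (f.2.smul hd hθ₀ hθ₁.le) (g.2.smul hd hθ₀ hθ₁.le) (fun q => ?_) p
    rw [Pi.smul_apply, Pi.smul_apply, smul_eq_mul, smul_eq_mul, ← mul_sub, abs_mul,
      abs_of_nonneg hθ₀, Subtype.dist_eq, ← Real.dist_eq]
    exact mul_le_mul_of_nonneg_left (dist_coe_le_dist q) hθ₀
  exact ⟨_, (ContractingWith.fixedPoint G hG).2,
    congrArg (fun f : L => ⇑(f : α →ᵇ ℝ)) hG.fixedPoint_isFixedPt⟩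

/-- The discounted fixed point, normalised to vanish at `x₀`. -/
theorem IsTopical.exists_isLipOne_smul_eq_add (hΦ : IsTopical d Φ) (hd : ∀ p q, 0 ≤ d p q)
    (hdκ : ∀ p q, d p q ≤ κ * dist p q) (hlip : ∀ u, IsLipOne d u → IsLipOne d (Φ u)) {θ : ℝ}
    (hθ₀ : 0 ≤ θ) (hθ₁ : θ < 1) (x₀ : α) :
    ∃ w : α →ᵇ ℝ, IsLipOne d w ∧ w x₀ = 0 ∧ ∀ p, Φ (θ • ⇑w) p = w p + Φ (θ • ⇑w) x₀ := by
  obtain ⟨f, hf, hfix⟩ := hΦ.exists_isLipOne_smul_isFixedPt hd hdκ hlip hθ₀ hθ₁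
  have hshift : θ • ⇑(f - const α (f x₀)) = fun p => (θ • ⇑f) p + -(θ * f x₀) := by
    ext p
    simp only [Pi.smul_apply, coe_sub, Pi.sub_apply, const_apply, smul_eq_mul]
    ring
  have hΦf : ∀ p, Φ (θ • ⇑(f - const α (f x₀))) p = f p - θ * f x₀ := fun p => by
    rw [hshift, hΦ.map_add_const (hf.smul hd hθ₀ hθ₁.le), hfix, sub_eq_add_neg]
  refine ⟨f - const α (f x₀), fun p q => by simpa using hf p q, by simp, fun p => ?_⟩
  rw [hΦf p, hΦf x₀, coe_sub, Pi.sub_apply, const_apply]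
  ring

theorem IsTopical.exists_eigenvector [Nonempty α] (hΦ : IsTopical d Φ) (hd : ∀ p q, 0 ≤ d p q)
    (hdκ : ∀ p q, d p q ≤ κ * dist p q) (hlip : ∀ u, IsLipOne d u → IsLipOne d (Φ u)) :
    ∃ u : α → ℝ, ∃ l : ℝ, IsLipOne d u ∧ ∀ p, Φ u p = l + u p := by
  obtain ⟨x₀⟩ := ‹Nonempty α›
  obtain ⟨R, hR⟩ := exists_abs_le_of_isLipOne hdκ x₀
  set θ : ℕ → ℝ := fun k => k / (k + 1)
  have hθ : ∀ k, 0 ≤ θ k ∧ θ k < 1 := fun k =>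
    ⟨by positivity, (div_lt_one (by positivity)).2 (by linarith)⟩
  choose w hwLip hw₀ hwΦ using fun k =>
    hΦ.exists_isLipOne_smul_eq_add hd hdκ hlip (hθ k).1 (hθ k).2 x₀
  have hθw : ∀ k, IsLipOne d (θ k • ⇑(w k)) := fun k => (hwLip k).smul hd (hθ k).1 (hθ k).2.le
  -- `Φ (θ w) x₀` stays within `R` of `Φ 0 x₀`, since `|θ w| ≤ |w| ≤ R`.
  have hbound : ∀ k, (w k, Φ (θ k • ⇑(w k)) x₀) ∈ {w : α →ᵇ ℝ | IsLipOne d w ∧ w x₀ = 0} ×ˢ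
      Icc (-(|Φ 0 x₀| + R)) (|Φ 0 x₀| + R) := by
    refine fun k => ⟨⟨hwLip k, hw₀ k⟩, abs_le.1 ?_⟩
    have h0 : IsLipOne d 0 := fun p q => by simpa using hd p q
    have := hΦ.abs_sub_le (hθw k) h0 (η := R) (fun q => ?_) x₀
    · linarith [abs_sub_abs_le_abs_sub (Φ (θ k • ⇑(w k)) x₀) (Φ 0 x₀)]
    · rw [Pi.zero_apply, sub_zero, Pi.smul_apply, smul_eq_mul, abs_mul, abs_of_nonneg (hθ k).1]
      exact (mul_le_of_le_one_left (abs_nonneg _) (hθ k).2.le).trans (hR _ (hwLip k) (hw₀ k) q)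
  obtain ⟨⟨w', l⟩, ⟨hw', -⟩, φ, hφ, hlim⟩ :=
    ((isCompact_setOf_isLipOne_apply_eq_zero hdκ x₀).prod isCompact_Icc).tendsto_subseq hbound
  exact ⟨w', l, hw'.1, hΦ.eq_add_of_tendsto (fun k => hθw (φ k)) hw'.1 (fun k => hwΦ (φ k))
    ((tendsto_natCast_div_add_atTop (1 : ℝ)).comp hφ.tendsto_atTop) hlim⟩

end AdditiveEigenvector

theorem exists_additive_eigenvector_on {β : Type*} [PseudoMetricSpace β] {X : Set β}
    (hX : IsCompact X) (hXne : X.Nonempty) {d : β → β → ℝ} {κ : ℝ}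
    (hd : ∀ x ∈ X, ∀ y ∈ X, 0 ≤ d x y) (hdκ : ∀ x ∈ X, ∀ y ∈ X, d x y ≤ κ * dist x y)
    {Φ : (β → ℝ) → β → ℝ}
    (hmono : ∀ u v c, Bornology.IsBounded (u '' X) → Bornology.IsBounded (v '' X) →
      (∀ p ∈ X, u p ≤ v p + c) → ∀ x ∈ X, Φ u x ≤ Φ v x + c)
    (hlip : ∀ u, Bornology.IsBounded (u '' X) → (∀ p ∈ X, ∀ q ∈ X, u p - u q ≤ d p q) →
      ∀ x ∈ X, ∀ y ∈ X, Φ u x - Φ u y ≤ d x y) :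
    ∃ v : β → ℝ, ∃ l : ℝ, (∀ x ∈ X, ∀ y ∈ X, v x - v y ≤ d x y) ∧ ∀ x ∈ X, Φ v x = l + v x := by
  have : CompactSpace X := isCompact_iff_compactSpace.1 hX
  have : Nonempty X := hXne.to_subtype
  set ext : (X → ℝ) → β → ℝ := fun u => Function.extend Subtype.val u 0
  have hext : ∀ u x (hx : x ∈ X), ext u x = u ⟨x, hx⟩ := fun u x hx =>
    Subtype.val_injective.extend_apply u 0 ⟨x, hx⟩
  have hdκX : ∀ p q : X, d p q ≤ κ * dist p q := fun p q => hdκ p p.2 q q.2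
  have hbdd : ∀ u, IsLipOne (fun p q : X => d p q) u → Bornology.IsBounded (ext u '' X) :=
    fun u hu => (isCompact_range (hu.lipschitzWith hdκX).continuous).isBounded.subset <| by
      rintro _ ⟨x, hx, rfl⟩
      exact ⟨⟨x, hx⟩, (hext u x hx).symm⟩
  have hΦX : IsTopical (fun p q : X => d p q) (fun u p => Φ (ext u) p) :=
    fun u v c hu hv h p => hmono _ _ c (hbdd u hu) (hbdd v hv)
      (fun x hx => by rw [hext u x hx, hext v x hx]; exact h ⟨x, hx⟩) p p.2
  obtain ⟨u, l, hu, hΦu⟩ := hΦX.exists_eigenvector (fun p q => hd p p.2 q q.2) hdκX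
    fun u hu p q => hlip _ (hbdd u hu)
      (fun x hx y hy => by rw [hext u x hx, hext u y hy]; exact hu ⟨x, hx⟩ ⟨y, hy⟩) p p.2 q q.2
  refine ⟨ext u, l, fun x hx y hy => ?_, fun x hx => ?_⟩
  · rw [hext u x hx, hext u y hy]
    exact hu ⟨x, hx⟩ ⟨y, hy⟩
  · rw [hext u x hx]
    exact hΦu ⟨x, hx⟩

section Funk

variable {n : ℕ} {C : Set (Fin n → ℝ)} {estar x y z w : Fin n → ℝ}

def funkSet (C : Set (Fin n → ℝ)) (x y : Fin n → ℝ) : Set ℝ := {l | 0 < l ∧ l • y - x ∈ C}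

theorem funk_eq_log_sInf : funk C x y = Real.log (sInf (funkSet C x y)) := rfl

theorem smul_mem_iff_of_pos (hC : ∀ x ∈ C, ∀ r : ℝ, 0 ≤ r → r • x ∈ C) {s : ℝ} (hs : 0 < s) :
    s • x ∈ C ↔ x ∈ C :=
  ⟨fun h => by simpa [smul_smul, hs.ne'] using hC _ h s⁻¹ (inv_nonneg.2 hs.le),
    fun h => hC x h s hs.le⟩

theorem add_mem_of_convex (hC : ∀ x ∈ C, ∀ r : ℝ, 0 ≤ r → r • x ∈ C) (hconv : Convex ℝ C)
    (hx : x ∈ C) (hy : y ∈ C) : x + y ∈ C := by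
  have h := hconv hx hy (by norm_num : (0 : ℝ) ≤ 2⁻¹) (by norm_num : (0 : ℝ) ≤ 2⁻¹) (by norm_num)
  rwa [← smul_add, smul_mem_iff_of_pos hC (by norm_num)] at h

theorem exists_pos_sub_smul_mem_of_mem_interior (hz : z ∈ interior C) (v : Fin n → ℝ) :
    ∃ t : ℝ, 0 < t ∧ z - t • v ∈ C := by
  have h : Tendsto (fun t : ℝ => z - t • v) (𝓝[>] 0) (𝓝 z) := by
    simpa using (tendsto_const_nhds.sub (tendsto_id.smul_const v)).mono_left
      (nhdsWithin_le_nhds (a := (0 : ℝ)))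
  obtain ⟨t, ht, htpos⟩ := ((h.eventually (mem_interior_iff_mem_nhds.1 hz)).and
    self_mem_nhdsWithin).exists
  exact ⟨t, htpos, ht⟩

theorem dotProduct_pos_of_mem_interior (hestar : estar ∈ dualCone C) (hw : 0 < w ⬝ᵥ estar)
    (hz : z ∈ interior C) : 0 < z ⬝ᵥ estar := by
  obtain ⟨t, ht, hzt⟩ := exists_pos_sub_smul_mem_of_mem_interior hz w
  have := hestar _ hzt
  rw [sub_dotProduct, smul_dotProduct, smul_eq_mul] at this
  nlinarith

theorem funkSet_nonempty_of_mem_interior (hC : ∀ x ∈ C, ∀ r : ℝ, 0 ≤ r → r • x ∈ C)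
    (hw : w ∈ interior C) (z : Fin n → ℝ) : (funkSet C z w).Nonempty := by
  obtain ⟨t, ht, hwt⟩ := exists_pos_sub_smul_mem_of_mem_interior hw z
  refine ⟨t⁻¹, inv_pos.2 ht, ?_⟩
  rw [← smul_mem_iff_of_pos hC ht, smul_sub, smul_smul, mul_inv_cancel₀ ht.ne', one_smul]
  exact hwt

theorem one_add_dist_div_mem_funkSet (hC : ∀ x ∈ C, ∀ r : ℝ, 0 ≤ r → r • x ∈ C) {ε : ℝ}
    (hε : 0 < ε) (hball : Metric.closedBall y ε ⊆ C) (x : Fin n → ℝ) :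
    1 + dist x y / ε ∈ funkSet C x y := by
  refine ⟨by positivity, ?_⟩
  rcases eq_or_ne x y with rfl | hxy
  · simpa using hC x (hball (Metric.mem_closedBall_self hε.le)) 0 le_rfl
  -- `(1 + t) • y - x = t • (y + t⁻¹ • (y - x))`, and that point is at distance `ε` from `y`.
  set t := dist x y / ε
  have ht : 0 < t := div_pos (dist_pos.2 hxy) hε
  have hnorm : t⁻¹ * dist x y = ε := by
    simp only [t]
    field_simp [(dist_pos.2 hxy).ne']
  have hmem : y + t⁻¹ • (y - x) ∈ C := hball <| by
    rw [Metric.mem_closedBall, dist_eq_norm, add_sub_cancel_left, norm_smul, norm_inv,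
      Real.norm_of_nonneg ht.le, ← dist_eq_norm, dist_comm, hnorm]
  convert hC _ hmem t ht.le using 1
  rw [smul_add, smul_smul, mul_inv_cancel₀ ht.ne', one_smul]
  module

theorem div_le_of_mem_funkSet (hestar : estar ∈ dualCone C) (hw : 0 < w ⬝ᵥ estar) {l : ℝ}
    (hl : l ∈ funkSet C z w) : z ⬝ᵥ estar / w ⬝ᵥ estar ≤ l := by
  have h := hestar _ hl.2
  rw [sub_dotProduct, smul_dotProduct, smul_eq_mul, sub_nonneg] at h
  rwa [div_le_iff₀ hw]

theorem div_le_sInf_funkSet (hestar : estar ∈ dualCone C) (hw : 0 < w ⬝ᵥ estar)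
    (hne : (funkSet C z w).Nonempty) : z ⬝ᵥ estar / w ⬝ᵥ estar ≤ sInf (funkSet C z w) :=
  le_csInf hne fun _ => div_le_of_mem_funkSet hestar hw

theorem funkSet_smul_smul (hC : ∀ x ∈ C, ∀ r : ℝ, 0 ≤ r → r • x ∈ C) {s t : ℝ} (hs : 0 < s)
    (ht : 0 < t) : funkSet C (s • z) (t • w) = (s / t) • funkSet C z w := by
  ext m
  rw [mem_smul_set_iff_inv_smul_mem₀ (div_pos hs ht).ne', smul_eq_mul, inv_div]
  have hsm : m • t • w - s • z = s • ((t / s * m) • w - z) := by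
    rw [smul_sub, smul_smul, smul_smul]
    congr 2
    field_simp
  simp only [funkSet, mem_ofPred_eq, hsm, smul_mem_iff_of_pos hC hs]
  exact and_congr_left fun _ => (mul_pos_iff_of_pos_left (div_pos ht hs)).symm

theorem funk_smul_smul (hC : ∀ x ∈ C, ∀ r : ℝ, 0 ≤ r → r • x ∈ C) {s t : ℝ} (hs : 0 < s)
    (ht : 0 < t) (hpos : 0 < sInf (funkSet C z w)) :
    funk C (s • z) (t • w) = Real.log (s / t) + funk C z w := by
  rw [funk_eq_log_sInf, funkSet_smul_smul hC hs ht, Real.sInf_smul_of_nonneg (by positivity),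
    smul_eq_mul, Real.log_mul (by positivity) hpos.ne', funk_eq_log_sInf]

theorem log_add_funk_inv_smul (hC : ∀ x ∈ C, ∀ r : ℝ, 0 ≤ r → r • x ∈ C)
    (hestar : estar ∈ dualCone C) (hz : 0 < z ⬝ᵥ estar) (hw : w ∈ interior C) :
    Real.log (z ⬝ᵥ estar) + funk C ((z ⬝ᵥ estar)⁻¹ • z) ((w ⬝ᵥ estar)⁻¹ • w) =
      Real.log (w ⬝ᵥ estar) + funk C z w := by
  have hw' := dotProduct_pos_of_mem_interior hestar hz hw
  have hpos := (div_pos hz hw').trans_le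
    (div_le_sInf_funkSet hestar hw' (funkSet_nonempty_of_mem_interior hC hw z))
  rw [funk_smul_smul hC (inv_pos.2 hz) (inv_pos.2 hw') hpos, inv_div_inv,
    Real.log_div hw'.ne' hz.ne']
  ring

theorem funk_le_funk_add_funk (hC : ∀ x ∈ C, ∀ r : ℝ, 0 ≤ r → r • x ∈ C) (hconv : Convex ℝ C)
    (hxy : (funkSet C x y).Nonempty) (hyz : (funkSet C y z).Nonempty)
    (hxz : 0 < sInf (funkSet C x z)) : funk C x z ≤ funk C x y + funk C y z := by
  -- `(s * t) • z - x = s • (t • z - y) + (s • y - x)`, so `funkSet` is submultiplicative.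
  have hmul : ∀ s ∈ funkSet C x y, ∀ t ∈ funkSet C y z, sInf (funkSet C x z) ≤ s * t := by
    rintro s ⟨hs, hsC⟩ t ⟨ht, htC⟩
    refine csInf_le ⟨0, fun _ hl => hl.1.le⟩ ⟨mul_pos hs ht, ?_⟩
    convert add_mem_of_convex hC hconv (hC _ htC s hs.le) hsC using 1
    module
  have h₁ : ∀ s ∈ funkSet C x y, sInf (funkSet C x z) / s ≤ sInf (funkSet C y z) :=
    fun s hs => le_csInf hyz fun t ht => (div_le_iff₀' hs.1).2 (hmul s hs t ht)
  obtain ⟨s₀, hs₀⟩ := hxy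
  have hyz_pos : 0 < sInf (funkSet C y z) := (div_pos hxz hs₀.1).trans_le (h₁ s₀ hs₀)
  have h₂ : sInf (funkSet C x z) / sInf (funkSet C y z) ≤ sInf (funkSet C x y) :=
    le_csInf ⟨s₀, hs₀⟩ fun s hs => by
      rw [div_le_iff₀ hyz_pos]; exact (div_le_iff₀' hs.1).1 (h₁ s hs)
  have hxy_pos : 0 < sInf (funkSet C x y) := (div_pos hxz hyz_pos).trans_le h₂
  rw [funk_eq_log_sInf, funk_eq_log_sInf, funk_eq_log_sInf, ← Real.log_mul hxy_pos.ne' hyz_pos.ne']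
  exact Real.log_le_log hxz ((div_le_iff₀ hyz_pos).1 h₂)

theorem funk_le_dist_div (hC : ∀ x ∈ C, ∀ r : ℝ, 0 ≤ r → r • x ∈ C) {ε : ℝ} (hε : 0 < ε)
    (hball : Metric.closedBall y ε ⊆ C) (hpos : 0 < sInf (funkSet C x y)) :
    funk C x y ≤ dist x y / ε := by
  have h := csInf_le ⟨0, fun _ hl => hl.1.le⟩ (one_add_dist_div_mem_funkSet hC hε hball x)
  linarith [Real.log_le_sub_one_of_pos hpos, funk_eq_log_sInf (C := C) (x := x) (y := y)]

theorem exists_add_funk_le {X : Set (Fin n → ℝ)} {v : (Fin n → ℝ) → ℝ}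
    (hv : ∀ x ∈ X, ∀ y ∈ X, v x - v y ≤ funk C x y) {D : ℝ}
    (hD : ∀ x ∈ X, ∀ y ∈ X, 0 ≤ funk C x y ∧ funk C x y ≤ D) {x₀ : Fin n → ℝ} (hx₀ : x₀ ∈ X) :
    ∃ α : ℝ, ∀ x ∈ X, α + funk C x x₀ ≤ v x :=
  ⟨v x₀ - 2 * D, fun x hx => by linarith [hv x₀ hx₀ x hx, (hD x₀ hx₀ x hx).2, (hD x hx x₀ hx₀).2]⟩

end Funk

section CrossSection

variable {n : ℕ} {C K : Set (Fin n → ℝ)} {estar x y z : Fin n → ℝ}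

theorem exists_pos_mul_norm_le_dotProduct (hestar : estar ∈ interior (dualCone C)) :
    ∃ ρ : ℝ, 0 < ρ ∧ ∀ z ∈ C, ρ * ‖z‖ ≤ z ⬝ᵥ estar := by
  obtain ⟨r, hr, hball⟩ := Metric.mem_nhds_iff.1 (mem_interior_iff_mem_nhds.1 hestar)
  have hsingle : ∀ z ∈ C, ∀ i, ∀ c : ℝ, |c| < r → c * z i ≤ z ⬝ᵥ estar := fun z hz i c hc => by
    have h : estar - Pi.single i c ∈ dualCone C := hball <| by
      rwa [Metric.mem_ball, dist_eq_norm, sub_sub_cancel_left, norm_neg, Pi.norm_single]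
    have := h z hz
    rw [dotProduct_sub, dotProduct_single, sub_nonneg] at this
    linarith
  refine ⟨r / 2, half_pos hr, fun z hz => ?_⟩
  rw [← le_div_iff₀' (half_pos hr)]
  refine (pi_norm_le_iff_of_nonneg (div_nonneg (interior_subset hestar z hz) (half_pos hr).le)).2
    fun i => ?_
  rw [le_div_iff₀' (half_pos hr), Real.norm_eq_abs]
  have hr' : |r / 2| < r := by rw [abs_of_pos (half_pos hr)]; exact half_lt_self hr
  rcases le_total 0 (z i) with h | h
  · rw [abs_of_nonneg h]; exact hsingle z hz i _ hr'
  · rw [abs_of_nonpos h, mul_neg, ← neg_mul]; exact hsingle z hz i _ (by rwa [abs_neg])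

theorem isCompact_crossSec (hK : IsClosed K) (hKC : crossSec K estar ⊆ C)
    (hestar : estar ∈ interior (dualCone C)) : IsCompact (crossSec K estar) := by
  obtain ⟨ρ, hρ, hρle⟩ := exists_pos_mul_norm_le_dotProduct hestar
  refine (isCompact_closedBall 0 ρ⁻¹).of_isClosed_subset
    (hK.inter (isClosed_eq (by fun_prop) continuous_const)) fun x hx => ?_
  have h := hρle x (hKC hx)
  rw [hx.2] at h
  rw [mem_closedBall_zero_iff, ← one_div, le_div_iff₀' hρ]
  exact h

theorem inv_smul_mem_crossSec (hK : ∀ x ∈ K, ∀ r : ℝ, 0 ≤ r → r • x ∈ K) (hz : z ∈ K)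
    (hpos : 0 < z ⬝ᵥ estar) : (z ⬝ᵥ estar)⁻¹ • z ∈ crossSec K estar :=
  ⟨hK z hz _ (inv_nonneg.2 hpos.le), by rw [smul_dotProduct, smul_eq_mul, inv_mul_cancel₀ hpos.ne']⟩

theorem one_le_sInf_funkSet_of_mem_crossSec (hC : ∀ x ∈ C, ∀ r : ℝ, 0 ≤ r → r • x ∈ C)
    (hestar : estar ∈ dualCone C) (hXC : crossSec K estar ⊆ interior C)
    (hx : x ∈ crossSec K estar) (hy : y ∈ crossSec K estar) : 1 ≤ sInf (funkSet C x y) := by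
  have h := div_le_sInf_funkSet hestar (hy.2.symm ▸ one_pos)
    (funkSet_nonempty_of_mem_interior hC (hXC hy) x)
  rwa [hx.2, hy.2, div_one] at h

theorem exists_funk_le_mul_dist (hC : ∀ x ∈ C, ∀ r : ℝ, 0 ≤ r → r • x ∈ C)
    (hestar : estar ∈ dualCone C) (hX : IsCompact (crossSec K estar))
    (hXC : crossSec K estar ⊆ interior C) :
    ∃ κ : ℝ, 0 ≤ κ ∧ ∀ x ∈ crossSec K estar, ∀ y ∈ crossSec K estar, funk C x y ≤ κ * dist x y := by
  obtain ⟨ε, hε, hεC⟩ := hX.exists_cthickening_subset_open isOpen_interior hXC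
  refine ⟨ε⁻¹, inv_nonneg.2 hε.le, fun x hx y hy => ?_⟩
  rw [inv_mul_eq_div]
  exact funk_le_dist_div hC hε ((Metric.closedBall_subset_cthickening hy ε).trans
    (hεC.trans interior_subset)) (one_pos.trans_le
      (one_le_sInf_funkSet_of_mem_crossSec hC hestar hXC hx hy))

theorem funk_nonneg_of_mem_crossSec (hC : ∀ x ∈ C, ∀ r : ℝ, 0 ≤ r → r • x ∈ C)
    (hestar : estar ∈ dualCone C) (hXC : crossSec K estar ⊆ interior C)
    (hx : x ∈ crossSec K estar) (hy : y ∈ crossSec K estar) : 0 ≤ funk C x y :=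
  Real.log_nonneg (one_le_sInf_funkSet_of_mem_crossSec hC hestar hXC hx hy)

theorem funk_le_funk_add_funk_of_mem_crossSec (hC : ∀ x ∈ C, ∀ r : ℝ, 0 ≤ r → r • x ∈ C)
    (hconv : Convex ℝ C) (hestar : estar ∈ dualCone C) (hXC : crossSec K estar ⊆ interior C)
    (hx : x ∈ crossSec K estar) (hy : y ∈ crossSec K estar) (hz : z ∈ crossSec K estar) :
    funk C x z ≤ funk C x y + funk C y z :=
  funk_le_funk_add_funk hC hconv (funkSet_nonempty_of_mem_interior hC (hXC hy) x)
    (funkSet_nonempty_of_mem_interior hC (hXC hz) y)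
    (one_pos.trans_le (one_le_sInf_funkSet_of_mem_crossSec hC hestar hXC hx hz))

end CrossSection

section Interpolation

variable {n : ℕ} {C X : Set (Fin n → ℝ)} {Xh : Finset (Fin n → ℝ)} (hne : Xh.Nonempty)

theorem Ih_le_Ih_add {u v : (Fin n → ℝ) → ℝ} {c : ℝ} (h : ∀ p ∈ Xh, u p ≤ v p + c)
    (x : Fin n → ℝ) : Ih C Xh hne u x ≤ Ih C Xh hne v x + c := by
  obtain ⟨y, hy, hyv⟩ := Finset.exists_mem_eq_inf' hne (fun y => v y + funk C x y)
  rw [Ih, Ih, hyv]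
  exact (Finset.inf'_le _ hy).trans (by linarith [h y hy])

theorem Ih_sub_Ih_le_funk (hXh : ↑Xh ⊆ X)
    (htri : ∀ x ∈ X, ∀ y ∈ X, ∀ z ∈ X, funk C x z ≤ funk C x y + funk C y z)
    {u : (Fin n → ℝ) → ℝ} {x y : Fin n → ℝ} (hx : x ∈ X) (hy : y ∈ X) :
    Ih C Xh hne u x - Ih C Xh hne u y ≤ funk C x y := by
  obtain ⟨z, hz, hzu⟩ := Finset.exists_mem_eq_inf' hne (fun z => u z + funk C y z)
  rw [sub_le_iff_le_add', Ih, Ih, hzu]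
  exact (Finset.inf'_le _ hz).trans (by linarith [htri x hx y hy z (hXh hz)])

theorem isBounded_image_Ih (hXh : ↑Xh ⊆ X) {D : ℝ}
    (hD : ∀ x ∈ X, ∀ y ∈ X, 0 ≤ funk C x y ∧ funk C x y ≤ D) (u : (Fin n → ℝ) → ℝ) :
    Bornology.IsBounded (Ih C Xh hne u '' X) := by
  obtain ⟨y₀, hy₀⟩ := id hne
  refine (Metric.isBounded_Icc (Xh.inf' hne u) (u y₀ + D)).subset <| image_subset_iff.2
    fun x hx => ⟨Finset.le_inf' _ _ fun y hy => ?_, (Finset.inf'_le _ hy₀).trans ?_⟩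
  · linarith [Finset.inf'_le u hy, (hD x hx y (hXh hy)).1]
  · linarith [(hD x hx y₀ (hXh hy₀)).2]

end Interpolation

section ShapleyOperator

variable {n : ℕ} {E : Type*} {A B : Set E} {T : E → E → (Fin n → ℝ) → Fin n → ℝ}
  {C X : Set (Fin n → ℝ)} {estar : Fin n → ℝ}

noncomputable def payoff (T : E → E → (Fin n → ℝ) → Fin n → ℝ) (estar : Fin n → ℝ)
    (v : (Fin n → ℝ) → ℝ) (x : Fin n → ℝ) (a b : E) : ℝ :=
  Real.log (T a b x ⬝ᵥ estar) + v ((T a b x ⬝ᵥ estar)⁻¹ • T a b x)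

/-- The last field is the Funk-nonexpansiveness of `T a b`, read through the normalisation
`z ↦ z / ⟨z, e*⟩` onto the cross-section. -/
structure IsShapleyOn (C X : Set (Fin n → ℝ)) (A B : Set E)
    (T : E → E → (Fin n → ℝ) → Fin n → ℝ) (estar : Fin n → ℝ) : Prop where
  inv_smul_mem : ∀ x ∈ X, ∀ a ∈ A, ∀ b ∈ B, (T a b x ⬝ᵥ estar)⁻¹ • T a b x ∈ X
  exists_abs_log_le : ∃ L, ∀ x ∈ X, ∀ a ∈ A, ∀ b ∈ B, |Real.log (T a b x ⬝ᵥ estar)| ≤ L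
  log_add_funk_le : ∀ x ∈ X, ∀ y ∈ X, ∀ a ∈ A, ∀ b ∈ B,
    Real.log (T a b x ⬝ᵥ estar) +
        funk C ((T a b x ⬝ᵥ estar)⁻¹ • T a b x) ((T a b y ⬝ᵥ estar)⁻¹ • T a b y) ≤
      Real.log (T a b y ⬝ᵥ estar) + funk C x y

namespace IsShapleyOn

theorem exists_abs_payoff_le (hS : IsShapleyOn C X A B T estar) {v : (Fin n → ℝ) → ℝ}
    (hv : Bornology.IsBounded (v '' X)) :
    ∃ M, ∀ x ∈ X, ∀ a ∈ A, ∀ b ∈ B, |payoff T estar v x a b| ≤ M := by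
  obtain ⟨L, hL⟩ := hS.exists_abs_log_le
  obtain ⟨M, hM⟩ := hv.exists_norm_le
  exact ⟨L + M, fun x hx a ha b hb => (abs_add_le _ _).trans <| add_le_add (hL x hx a ha b hb)
    (hM _ (mem_image_of_mem v (hS.inv_smul_mem x hx a ha b hb)))⟩

theorem Fop_le_Fop_add [Nonempty A] [Nonempty B] (hS : IsShapleyOn C X A B T estar)
    {v w : (Fin n → ℝ) → ℝ} {x y : Fin n → ℝ} {c : ℝ} (hv : Bornology.IsBounded (v '' X))
    (hw : Bornology.IsBounded (w '' X)) (hx : x ∈ X) (hy : y ∈ X)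
    (h : ∀ a ∈ A, ∀ b ∈ B, payoff T estar v x a b ≤ payoff T estar w y a b + c) :
    Fop A B T estar v x ≤ Fop A B T estar w y + c := by
  obtain ⟨M, hM⟩ := hS.exists_abs_payoff_le hv
  obtain ⟨N, hN⟩ := hS.exists_abs_payoff_le hw
  exact iInf_iSup_le_iInf_iSup_add (fun a b => hM x hx a a.2 b b.2)
    (fun a b => hN y hy a a.2 b b.2) fun a b => h a a.2 b b.2

theorem Fop_le_Fop_add_of_le [Nonempty A] [Nonempty B] (hS : IsShapleyOn C X A B T estar)
    {v w : (Fin n → ℝ) → ℝ} {c : ℝ} (hv : Bornology.IsBounded (v '' X))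
    (hw : Bornology.IsBounded (w '' X)) (h : ∀ p ∈ X, v p ≤ w p + c) {x : Fin n → ℝ}
    (hx : x ∈ X) : Fop A B T estar v x ≤ Fop A B T estar w x + c :=
  hS.Fop_le_Fop_add hv hw hx hx fun a ha b hb => by
    unfold payoff
    linarith [h _ (hS.inv_smul_mem x hx a ha b hb)]

theorem Fop_sub_Fop_le_funk [Nonempty A] [Nonempty B] (hS : IsShapleyOn C X A B T estar)
    {v : (Fin n → ℝ) → ℝ} (hv : Bornology.IsBounded (v '' X))
    (hlip : ∀ p ∈ X, ∀ q ∈ X, v p - v q ≤ funk C p q) {x y : Fin n → ℝ} (hx : x ∈ X)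
    (hy : y ∈ X) : Fop A B T estar v x - Fop A B T estar v y ≤ funk C x y :=
  sub_le_iff_le_add'.2 <| hS.Fop_le_Fop_add hv hv hx hy fun a ha b hb => by
    unfold payoff
    linarith [hlip _ (hS.inv_smul_mem x hx a ha b hb) _ (hS.inv_smul_mem y hy a ha b hb),
      hS.log_add_funk_le x hx y hy a ha b hb]

theorem Fop_Ih_le_Fop_Ih_add [Nonempty A] [Nonempty B] (hS : IsShapleyOn C X A B T estar)
    {Xh : Finset (Fin n → ℝ)} (hne : Xh.Nonempty) (hXh : ↑Xh ⊆ X) {D : ℝ}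
    (hD : ∀ x ∈ X, ∀ y ∈ X, 0 ≤ funk C x y ∧ funk C x y ≤ D) {u v : (Fin n → ℝ) → ℝ} {c : ℝ}
    (h : ∀ p ∈ X, u p ≤ v p + c) {x : Fin n → ℝ} (hx : x ∈ X) :
    Fop A B T estar (Ih C Xh hne u) x ≤ Fop A B T estar (Ih C Xh hne v) x + c :=
  hS.Fop_le_Fop_add_of_le (isBounded_image_Ih hne hXh hD u) (isBounded_image_Ih hne hXh hD v)
    (fun p _ => Ih_le_Ih_add hne (fun q hq => h q (hXh hq)) p) hx

theorem Fop_Ih_sub_Fop_Ih_le_funk [Nonempty A] [Nonempty B]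
    (hS : IsShapleyOn C X A B T estar) {Xh : Finset (Fin n → ℝ)} (hne : Xh.Nonempty)
    (hXh : ↑Xh ⊆ X) {D : ℝ}
    (hD : ∀ x ∈ X, ∀ y ∈ X, 0 ≤ funk C x y ∧ funk C x y ≤ D)
    (htri : ∀ x ∈ X, ∀ y ∈ X, ∀ z ∈ X, funk C x z ≤ funk C x y + funk C y z)
    {u : (Fin n → ℝ) → ℝ} {x y : Fin n → ℝ} (hx : x ∈ X) (hy : y ∈ X) :
    Fop A B T estar (Ih C Xh hne u) x - Fop A B T estar (Ih C Xh hne u) y ≤ funk C x y :=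
  hS.Fop_sub_Fop_le_funk (isBounded_image_Ih hne hXh hD u)
    (fun _ hp _ hq => Ih_sub_Ih_le_funk hne hXh htri hp hq) hx hy

end IsShapleyOn

theorem isShapleyOn_crossSec {K : Set (Fin n → ℝ)}
    (hC : ∀ x ∈ C, ∀ r : ℝ, 0 ≤ r → r • x ∈ C) (hestar : estar ∈ dualCone C)
    (hK : ∀ x ∈ K, ∀ r : ℝ, 0 ≤ r → r • x ∈ K) {x₀ : Fin n → ℝ} (hx₀ : x₀ ∈ crossSec K estar)
    (hX : IsCompact (crossSec K estar)) (hXC : crossSec K estar ⊆ interior C)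
    (hTmaps : ∀ a ∈ A, ∀ b ∈ B, ∀ x ∈ interior C, T a b x ∈ interior C)
    (hTnexp : ∀ a ∈ A, ∀ b ∈ B, ∀ x ∈ interior C, ∀ y ∈ interior C,
      funk C (T a b x) (T a b y) ≤ funk C x y)
    (hcomp : ∀ Kc : Set (Fin n → ℝ), Kc ⊆ interior C → IsCompact Kc →
      IsCompact {z | ∃ a ∈ A, ∃ b ∈ B, ∃ x ∈ Kc, z = T a b x})
    (hTK : ∀ a ∈ A, ∀ b ∈ B, ∀ x ∈ K, T a b x ∈ K) :
    IsShapleyOn C (crossSec K estar) A B T estar := by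
  have hpos : ∀ x ∈ crossSec K estar, ∀ a ∈ A, ∀ b ∈ B, 0 < T a b x ⬝ᵥ estar :=
    fun x hx a ha b hb => dotProduct_pos_of_mem_interior hestar (hx₀.2.symm ▸ one_pos)
      (hTmaps a ha b hb x (hXC hx))
  refine ⟨fun x hx a ha b hb => inv_smul_mem_crossSec hK (hTK a ha b hb x hx.1)
    (hpos x hx a ha b hb), ?_, fun x hx y hy a ha b hb => ?_⟩
  · have hlog : ContinuousOn (fun z => Real.log (z ⬝ᵥ estar))
        {z | ∃ a ∈ A, ∃ b ∈ B, ∃ x ∈ crossSec K estar, z = T a b x} := by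
      refine ContinuousOn.log (by fun_prop) ?_
      rintro _ ⟨a, ha, b, hb, x, hx, rfl⟩
      exact (hpos x hx a ha b hb).ne'
    obtain ⟨L, hL⟩ := ((hcomp _ hXC hX).image_of_continuousOn hlog).isBounded.exists_norm_le
    exact ⟨L, fun x hx a ha b hb => hL _ ⟨_, ⟨a, ha, b, hb, x, hx, rfl⟩, rfl⟩⟩
  · rw [log_add_funk_inv_smul hC hestar (hpos x hx a ha b hb) (hTmaps a ha b hb y (hXC hy))]
    linarith [hTnexp a ha b hb x (hXC hx) y (hXC hy)]

end ShapleyOperator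

theorem stmt_14_general
    {n : ℕ} (C : Set (Fin n → ℝ))
    (hCconv : Convex ℝ C)
    (hCcone : ∀ x ∈ C, ∀ r : ℝ, 0 ≤ r → r • x ∈ C)
    (estar : Fin n → ℝ) (hestar : estar ∈ interior (dualCone C))
    {E : Type*}
    (A B : Set E) (hAne : A.Nonempty)
    (hBne : B.Nonempty)
    (T : E → E → (Fin n → ℝ) → (Fin n → ℝ))
    (hTmaps : ∀ a ∈ A, ∀ b ∈ B, ∀ x ∈ interior C, T a b x ∈ interior C)
    (hTnexp : ∀ a ∈ A, ∀ b ∈ B, ∀ x ∈ interior C, ∀ y ∈ interior C,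
      funk C (T a b x) (T a b y) ≤ funk C x y)
    (hcomp : ∀ Kc : Set (Fin n → ℝ), Kc ⊆ interior C → IsCompact Kc →
      IsCompact {z | ∃ a ∈ A, ∃ b ∈ B, ∃ x ∈ Kc, z = T a b x})
    (K : Set (Fin n → ℝ)) (hKclosed : IsClosed K)
    (hKcone : ∀ x ∈ K, ∀ r : ℝ, 0 ≤ r → r • x ∈ K)
    (hTK : ∀ a ∈ A, ∀ b ∈ B, ∀ x ∈ K, T a b x ∈ K)
    (hXsub : crossSec K estar ⊆ interior C)
    (Xh : Finset (Fin n → ℝ)) (hXhne : Xh.Nonempty)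
    (hXhsub : ↑Xh ⊆ crossSec K estar)
 :
    (∃ (v : (Fin n → ℝ) → ℝ) (l : ℝ),
      (∀ x ∈ crossSec K estar, ∀ y ∈ crossSec K estar, v x - v y ≤ funk C x y) ∧
      (∀ x ∈ crossSec K estar, Fop A B T estar v x = l + v x) ∧
      (∃ x₀ ∈ crossSec K estar, ∃ α : ℝ, ∀ x ∈ crossSec K estar,
        α + funk C x x₀ ≤ v x)) ∧
    (∃ (v : (Fin n → ℝ) → ℝ) (l : ℝ),
      (∀ x ∈ crossSec K estar, ∀ y ∈ crossSec K estar, v x - v y ≤ funk C x y) ∧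
      (∀ x ∈ crossSec K estar, Fop A B T estar (Ih C Xh hXhne v) x = l + v x) ∧
      (∃ x₀ ∈ crossSec K estar, ∃ α : ℝ, ∀ x ∈ crossSec K estar,
        α + funk C x x₀ ≤ v x)) ∧
    (∃ (v : (Fin n → ℝ) → ℝ) (l : ℝ),
      (∀ x ∈ Xh, ∀ y ∈ Xh, v x - v y ≤ funk C x y) ∧
      (∀ x ∈ Xh, Fop A B T estar (Ih C Xh hXhne v) x = l + v x) ∧
      (∃ x₀ ∈ Xh, ∃ α : ℝ, ∀ x ∈ Xh, α + funk C x x₀ ≤ v x)) := by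
  set X := crossSec K estar
  obtain ⟨y₀, hy₀⟩ := id hXhne
  have hx₀ : y₀ ∈ X := hXhsub hy₀
  have hdual : estar ∈ dualCone C := interior_subset hestar
  have hX : IsCompact X := isCompact_crossSec hKclosed (hXsub.trans interior_subset) hestar
  obtain ⟨κ, hκ, hdκ⟩ := exists_funk_le_mul_dist hCcone hdual hX hXsub
  obtain ⟨R, hR⟩ := Metric.isBounded_iff.1 hX.isBounded
  have hD : ∀ x ∈ X, ∀ y ∈ X, 0 ≤ funk C x y ∧ funk C x y ≤ κ * R := fun x hx y hy =>
    ⟨funk_nonneg_of_mem_crossSec hCcone hdual hXsub hx hy,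
      (hdκ x hx y hy).trans (mul_le_mul_of_nonneg_left (hR hx hy) hκ)⟩
  have htri : ∀ x ∈ X, ∀ y ∈ X, ∀ z ∈ X, funk C x z ≤ funk C x y + funk C y z :=
    fun x hx y hy z hz => funk_le_funk_add_funk_of_mem_crossSec hCcone hCconv hdual hXsub hx hy hz
  have hS := isShapleyOn_crossSec hCcone hdual hKcone hx₀ hX hXsub hTmaps hTnexp hcomp hTK
  have : Nonempty A := hAne.to_subtype
  have : Nonempty B := hBne.to_subtype
  obtain ⟨v, l, hv, hvF⟩ := exists_additive_eigenvector_on hX ⟨y₀, hx₀⟩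
    (fun x hx y hy => (hD x hx y hy).1) hdκ (Φ := Fop A B T estar)
    (fun _ _ _ hu hw h _ hx => hS.Fop_le_Fop_add_of_le hu hw h hx)
    (fun _ hu hlip _ hx _ hy => hS.Fop_sub_Fop_le_funk hu hlip hx hy)
  obtain ⟨w, m, hw, hwF⟩ := exists_additive_eigenvector_on hX ⟨y₀, hx₀⟩
    (fun x hx y hy => (hD x hx y hy).1) hdκ (Φ := fun u => Fop A B T estar (Ih C Xh hXhne u))
    (fun _ _ _ _ _ h _ hx => hS.Fop_Ih_le_Fop_Ih_add hXhne hXhsub hD h hx)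
    (fun _ _ _ _ hx _ hy => hS.Fop_Ih_sub_Fop_Ih_le_funk hXhne hXhsub hD htri hx hy)
  obtain ⟨α, hα⟩ := exists_add_funk_le hw hD hx₀
  exact ⟨⟨v, l, hv, hvF, y₀, hx₀, exists_add_funk_le hv hD hx₀⟩, ⟨w, m, hw, hwF, y₀, hx₀, α, hα⟩,
    ⟨w, m, fun x hx y hy => hw x (hXhsub hx) y (hXhsub hy), fun x hx => hwF x (hXhsub hx),
      y₀, hy₀, α, fun x hx => hα x (hXhsub hx)⟩⟩

/-- under Assumption 1 and the small cone assumption, each of `F`,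
`F_h^+ = F I_h^+ R_h` and `F̂_h^+ = R_h F I_h^+` admits a distance-like additive
eigenvector. -/
theorem stmt_14
    {n : ℕ} (C : Set (Fin n → ℝ))
    (hCclosed : IsClosed C) (hCconv : Convex ℝ C)
    (hCcone : ∀ x ∈ C, ∀ r : ℝ, 0 ≤ r → r • x ∈ C)
    (hCpointed : ∀ x ∈ C, -x ∈ C → x = 0)
    (estar : Fin n → ℝ) (hestar : estar ∈ interior (dualCone C))
    {E : Type*} [MetricSpace E]
    (A B : Set E) (hAc : IsCompact A) (hAne : A.Nonempty)
    (hBc : IsCompact B) (hBne : B.Nonempty)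
    (T : E → E → (Fin n → ℝ) → (Fin n → ℝ))
    (hTmaps : ∀ a ∈ A, ∀ b ∈ B, ∀ x ∈ interior C, T a b x ∈ interior C)
    (hTnexp : ∀ a ∈ A, ∀ b ∈ B, ∀ x ∈ interior C, ∀ y ∈ interior C,
      funk C (T a b x) (T a b y) ≤ funk C x y)
    (hconta : ∀ x ∈ interior C, ∀ b ∈ B, ContinuousOn (fun a => T a b x) A)
    (hcontb : ∀ x ∈ interior C, ∀ a ∈ A, ContinuousOn (fun b => T a b x) B)
    (hcomp : ∀ Kc : Set (Fin n → ℝ), Kc ⊆ interior C → IsCompact Kc →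
      IsCompact {z | ∃ a ∈ A, ∃ b ∈ B, ∃ x ∈ Kc, z = T a b x})
    (K : Set (Fin n → ℝ)) (hKclosed : IsClosed K)
    (hKcone : ∀ x ∈ K, ∀ r : ℝ, 0 ≤ r → r • x ∈ K) (hKC : K ⊆ C)
    (hTK : ∀ a ∈ A, ∀ b ∈ B, ∀ x ∈ K, T a b x ∈ K)
    (hXsub : crossSec K estar ⊆ interior C)
    (hXne : (crossSec K estar).Nonempty)
    (h : ℝ) (hh : 0 < h)
    (Xh : Finset (Fin n → ℝ)) (hXhne : Xh.Nonempty)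
    (hXhsub : ↑Xh ⊆ crossSec K estar)
    (hcover : ∀ x ∈ crossSec K estar, ∃ y ∈ Xh, funk C x y + funk C y x < h)
 :
    (∃ (v : (Fin n → ℝ) → ℝ) (l : ℝ),
      (∀ x ∈ crossSec K estar, ∀ y ∈ crossSec K estar, v x - v y ≤ funk C x y) ∧
      (∀ x ∈ crossSec K estar, Fop A B T estar v x = l + v x) ∧
      (∃ x₀ ∈ crossSec K estar, ∃ α : ℝ, ∀ x ∈ crossSec K estar,
        α + funk C x x₀ ≤ v x)) ∧
    (∃ (v : (Fin n → ℝ) → ℝ) (l : ℝ),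
      (∀ x ∈ crossSec K estar, ∀ y ∈ crossSec K estar, v x - v y ≤ funk C x y) ∧
      (∀ x ∈ crossSec K estar, Fop A B T estar (Ih C Xh hXhne v) x = l + v x) ∧
      (∃ x₀ ∈ crossSec K estar, ∃ α : ℝ, ∀ x ∈ crossSec K estar,
        α + funk C x x₀ ≤ v x)) ∧
    (∃ (v : (Fin n → ℝ) → ℝ) (l : ℝ),
      (∀ x ∈ Xh, ∀ y ∈ Xh, v x - v y ≤ funk C x y) ∧
      (∀ x ∈ Xh, Fop A B T estar (Ih C Xh hXhne v) x = l + v x) ∧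
      (∃ x₀ ∈ Xh, ∃ α : ℝ, ∀ x ∈ Xh, α + funk C x x₀ ≤ v x)) :=
  stmt_14_general C hCconv hCcone estar hestar A B hAne hBne T hTmaps hTnexp hcomp K hKclosed hKcone
    hTK hXsub Xh hXhne hXhsub
end
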